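/- arXiv:2104.12938 — 11 statements merged into one kernel-verified Lean document; each statement's English description precedes it below -/
import Mathlib

section
/- Let X = (X_j, X_{∼j}) be a random vector with values in ℝ × ℝ^{d−1}, let Z be a random vector in ℝ^{d−1} independent of X_j, and let r_j : ℝ × ℝ^{d−1} → ℝ^{d−1} be measurable with (X_j, r_j(X_j, Z)) identically distributed as (X_j, X_{∼j}). Let T_j : ℝ → ℝ be a measurable bijection with measurable inverse T_j^{−1}, and let T_{∼j} : ℝ^{d−1} → ℝ^N be measurable. If (Y_j, Y_{∼j}) is any random vector identically distributed as (T_j(X_j), T_{∼j}(X_{∼j})), then (Y_j, Y_{∼j}) is identically distributed as (T_j(X_j), T_{∼j}(r_j(T_j^{−1}(T_j(X_j)), Z))); that is, the map (y, z) ↦ T_{∼j}(r_j(T_j^{−1}(y), z)) is a dependency model of (Y_j, Y_{∼j}). -/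
open MeasureTheory ProbabilityTheory

theorem dependency_model_transform_general {Ω Ω' : Type*} [MeasurableSpace Ω] [MeasurableSpace Ω']
    (P : Measure Ω) (P' : Measure Ω')
    (m N : ℕ)
    (Xj : Ω → ℝ) (Xnj : Ω → (Fin m → ℝ)) (Z : Ω → (Fin m → ℝ))
    (rj : ℝ × (Fin m → ℝ) → (Fin m → ℝ))
    (hdm : IdentDistrib (fun ω => (Xj ω, rj (Xj ω, Z ω))) (fun ω => (Xj ω, Xnj ω)) P P)
    (Tj Tinv : ℝ → ℝ) (hTj : Measurable Tj)
    (hleft : Function.LeftInverse Tinv Tj)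
    (Tnj : (Fin m → ℝ) → (Fin N → ℝ)) (hTnj : Measurable Tnj)
    (Yj : Ω' → ℝ) (Ynj : Ω' → (Fin N → ℝ))
    (hY : IdentDistrib (fun ω' => (Yj ω', Ynj ω'))
      (fun ω => (Tj (Xj ω), Tnj (Xnj ω))) P' P) :
    IdentDistrib (fun ω' => (Yj ω', Ynj ω'))
      (fun ω => (Tj (Xj ω), Tnj (rj (Tinv (Tj (Xj ω)), Z ω)))) P' P := by
  have htransformed := hdm.comp (hTj.prodMap hTnj)
  simp only [hleft _]
  exact hY.trans htransformed.symm

/-- Proposition 2(i): transformation of dependency functions.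
If `r_j` is a dependency model of `(X_j, X_{∼j})` (with `Z` independent of `X_j`),
`T_j : ℝ → ℝ` is a measurable bijection with measurable inverse and `T_{∼j}` is measurable,
then any random vector `(Y_j, Y_{∼j})` identically distributed as `(T_j(X_j), T_{∼j}(X_{∼j}))`
is also identically distributed as `(T_j(X_j), T_{∼j}(r_j(T_j⁻¹(T_j(X_j)), Z)))`;
i.e. `(y, z) ↦ T_{∼j}(r_j(T_j⁻¹ y, z))` is a dependency model of `(Y_j, Y_{∼j})`.
Here `m = d - 1`. -/
theorem dependency_model_transform {Ω Ω' : Type*} [MeasurableSpace Ω] [MeasurableSpace Ω']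
    (P : Measure Ω) (P' : Measure Ω') [IsProbabilityMeasure P] [IsProbabilityMeasure P']
    (m N : ℕ)
    (Xj : Ω → ℝ) (Xnj : Ω → (Fin m → ℝ)) (Z : Ω → (Fin m → ℝ))
    (hXj : Measurable Xj) (hXnj : Measurable Xnj) (hZ : Measurable Z)
    (hindep : IndepFun Xj Z P)
    (rj : ℝ × (Fin m → ℝ) → (Fin m → ℝ)) (hrj : Measurable rj)
    (hdm : IdentDistrib (fun ω => (Xj ω, rj (Xj ω, Z ω))) (fun ω => (Xj ω, Xnj ω)) P P)
    (Tj Tinv : ℝ → ℝ) (hTj : Measurable Tj) (hTinv : Measurable Tinv)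
    (hleft : Function.LeftInverse Tinv Tj) (hright : Function.RightInverse Tinv Tj)
    (Tnj : (Fin m → ℝ) → (Fin N → ℝ)) (hTnj : Measurable Tnj)
    (Yj : Ω' → ℝ) (Ynj : Ω' → (Fin N → ℝ))
    (hY : IdentDistrib (fun ω' => (Yj ω', Ynj ω'))
      (fun ω => (Tj (Xj ω), Tnj (Xnj ω))) P' P) :
    IdentDistrib (fun ω' => (Yj ω', Ynj ω'))
      (fun ω => (Tj (Xj ω), Tnj (rj (Tinv (Tj (Xj ω)), Z ω)))) P' P :=
  dependency_model_transform_general P P' m N Xj Xnj Z rj hdm Tj Tinv hTj hleft Tnj hTnj Yj Ynj hY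
end

section
/- Let X = (X_j, X_{∼j}) be a random vector with values in ℝ × ℝ^{d−1}, let Z be a random vector in ℝ^{d−1} independent of X_j, and let r_j : ℝ × ℝ^{d−1} → ℝ^{d−1} be measurable with (X_j, r_j(X_j, Z)) identically distributed as (X_j, X_{∼j}). Let T_j : ℝ → ℝ be a measurable bijection with measurable inverse, T_{∼j} : ℝ^{d−1} → ℝ^{d−1} measurable, and let (Y_j, Y_{w_1}, …, Y_{w_{d−1}}) be a random vector such that (|Y_j|, |Y_{w_1}|, …, |Y_{w_{d−1}}|) is identically distributed as (T_j(X_j), T_{∼j}(X_{∼j})) (absolute values taken componentwise) and each Y_{w_i} has a distribution symmetric about 0. If R is a Rademacher random variable (P(R = 1) = P(R = −1) = 1/2) independent of (X_j, Z), then for every i ∈ {1,…,d−1} the real random variable R·[T_{∼j}(r_j(X_j, Z))]_i has the same distribution as Y_{w_i}. -/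
/-!
For a fair sign `ε` independent of a real variable `W` with law `ν`, the law of `ε W` is the
symmetrization `rademacher ∗ₘ ν = ½ ν + ½ ν(-·)`, and a symmetric law `μ` is the symmetrization
of its image under `|·|`, because `{|x|, -|x|} = {x, -x}`. The dependency model turns
`W = [T_{∼j}(r_j(X_j, Z))]_i` into a copy of `[T_{∼j}(X_{∼j})]_i`, which has the law of `|Y_{w_i}|`;
so `R W` and `Y_{w_i}` are both the symmetrization of that law.
-/

open MeasureTheory ProbabilityTheory
open scoped ENNReal

namespace MeasureTheory.Measure

noncomputable def rademacher : Measure ℝ :=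
  (1/2 : ℝ≥0∞) • dirac 1 + (1/2 : ℝ≥0∞) • dirac (-1)

lemma rademacher_mconv (ν : Measure ℝ) [SFinite ν] :
    rademacher ∗ₘ ν = (1/2 : ℝ≥0∞) • ν + (1/2 : ℝ≥0∞) • ν.map Neg.neg := by
  rw [rademacher, add_mconv, mconv_smul_left, mconv_smul_left, dirac_one_mconv, dirac_mconv]
  simp only [neg_one_mul]

lemma map_abs_add_map_neg_map_abs (μ : Measure ℝ) :
    μ.map (|·|) + (μ.map (|·|)).map Neg.neg = μ + μ.map Neg.neg := by
  refine ext_of_lintegral _ fun f hf => ?_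
  rw [lintegral_add_measure, lintegral_add_measure, lintegral_map hf measurable_neg,
    lintegral_map hf measurable_abs, lintegral_map (by fun_prop) measurable_abs,
    lintegral_map hf measurable_neg, ← lintegral_add_left (by fun_prop), ← lintegral_add_left hf]
  refine lintegral_congr fun x => ?_
  rcases abs_choice x with h | h <;> simp only [h, neg_neg, add_comm]

lemma rademacher_mconv_map_abs {μ : Measure ℝ} [SFinite μ] (hμ : μ.map Neg.neg = μ) :
    rademacher ∗ₘ μ.map (|·|) = μ := by
  rw [rademacher_mconv, ← smul_add, map_abs_add_map_neg_map_abs, hμ, ← two_smul ℝ≥0∞, smul_smul,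
    ENNReal.div_mul_cancel two_ne_zero ENNReal.ofNat_ne_top, one_smul]

end MeasureTheory.Measure

lemma ProbabilityTheory.IdentDistrib.rademacher_mconv_map_abs {Ω : Type*} [MeasurableSpace Ω]
    {μ : Measure Ω} [SFinite μ] {Y : Ω → ℝ} (hY : IdentDistrib Y (fun ω => -Y ω) μ μ) :
    Measure.rademacher ∗ₘ μ.map (fun ω => |Y ω|) = μ.map Y := by
  have hsymm : (μ.map Y).map Neg.neg = μ.map Y := by
    rw [AEMeasurable.map_map_of_aemeasurable (by fun_prop) hY.aemeasurable_fst]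
    exact hY.map_eq.symm
  have habs : μ.map (fun ω => |Y ω|) = (μ.map Y).map (|·|) :=
    (AEMeasurable.map_map_of_aemeasurable (g := (|·|)) (by fun_prop) hY.aemeasurable_fst).symm
  rw [habs, Measure.rademacher_mconv_map_abs hsymm]

theorem dependency_model_abs_transform_general {Ω Ω' : Type*} [MeasurableSpace Ω] [MeasurableSpace Ω']
    (P : Measure Ω) (P' : Measure Ω') [IsProbabilityMeasure P] [IsProbabilityMeasure P']
    (m : ℕ)
    (Xj : Ω → ℝ) (Xnj : Ω → (Fin m → ℝ)) (Z : Ω → (Fin m → ℝ))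
    (hXj : Measurable Xj) (hZ : Measurable Z)
    (rj : ℝ × (Fin m → ℝ) → (Fin m → ℝ)) (hrj : Measurable rj)
    (hdm : IdentDistrib (fun ω => (Xj ω, rj (Xj ω, Z ω))) (fun ω => (Xj ω, Xnj ω)) P P)
    (Tj : ℝ → ℝ)
    (Tnj : (Fin m → ℝ) → (Fin m → ℝ)) (hTnj : Measurable Tnj)
    (Yj : Ω' → ℝ) (Yw : Ω' → (Fin m → ℝ))
    (hYabs : IdentDistrib (fun ω' => (|Yj ω'|, fun i => |Yw ω' i|))
      (fun ω => (Tj (Xj ω), Tnj (Xnj ω))) P' P)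
    (hYsymm : ∀ i : Fin m, IdentDistrib (fun ω' => Yw ω' i) (fun ω' => -(Yw ω' i)) P' P')
    (R : Ω → ℝ) (hR : Measurable R)
    (hRlaw : P.map R
      = (1/2 : ENNReal) • Measure.dirac (1 : ℝ) + (1/2 : ENNReal) • Measure.dirac (-1 : ℝ))
    (hRindep : IndepFun R (fun ω => (Xj ω, Z ω)) P) :
    ∀ i : Fin m,
      IdentDistrib (fun ω => R ω * Tnj (rj (Xj ω, Z ω)) i) (fun ω' => Yw ω' i) P P' := by
  intro i
  set W : Ω → ℝ := fun ω => Tnj (rj (Xj ω, Z ω)) i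
  have hW : Measurable W := by fun_prop
  have hRW : IndepFun R W P :=
    hRindep.comp (φ := id) (ψ := fun p : ℝ × (Fin m → ℝ) => Tnj (rj p) i) measurable_id
      (by fun_prop)
  have hWY : IdentDistrib W (fun ω' => |Yw ω' i|) P P' :=
    (hdm.comp (u := fun p : ℝ × (Fin m → ℝ) => Tnj p.2 i) (by fun_prop)).trans
      (hYabs.comp (u := fun p : ℝ × (Fin m → ℝ) => p.2 i) (by fun_prop)).symm
  refine ⟨(hR.mul hW).aemeasurable, (hYsymm i).aemeasurable_fst, ?_⟩
  calc P.map (R * W) = P.map R ∗ₘ P.map W := hRW.map_mul_eq_map_mconv_map hR hW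
    _ = Measure.rademacher ∗ₘ P'.map (fun ω' => |Yw ω' i|) := by
      rw [hRlaw, hWY.map_eq, Measure.rademacher]
    _ = P'.map (fun ω' => Yw ω' i) := (hYsymm i).rademacher_mconv_map_abs

/-- Proposition 2(ii), componentwise: transformation of dependency
functions with absolute values. If `r_j` is a dependency model of `(X_j, X_{∼j})`,
`T_j` is a measurable bijection with measurable inverse, `T_{∼j}` is measurable,
`(|Y_j|, |Y_{w_1}|, …, |Y_{w_{d−1}}|)` is identically distributed as
`(T_j(X_j), T_{∼j}(X_{∼j}))` (componentwise absolute values), each `Y_{w_i}` is symmetric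
about `0`, and `R` is a Rademacher variable independent of `(X_j, Z)`, then for every `i`
the variable `R ⬝ [T_{∼j}(r_j(X_j, Z))]_i` has the same distribution as `Y_{w_i}`.
Here `m = d - 1`. -/
theorem dependency_model_abs_transform {Ω Ω' : Type*} [MeasurableSpace Ω] [MeasurableSpace Ω']
    (P : Measure Ω) (P' : Measure Ω') [IsProbabilityMeasure P] [IsProbabilityMeasure P']
    (m : ℕ)
    (Xj : Ω → ℝ) (Xnj : Ω → (Fin m → ℝ)) (Z : Ω → (Fin m → ℝ))
    (hXj : Measurable Xj) (hXnj : Measurable Xnj) (hZ : Measurable Z)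
    (hindep : IndepFun Xj Z P)
    (rj : ℝ × (Fin m → ℝ) → (Fin m → ℝ)) (hrj : Measurable rj)
    (hdm : IdentDistrib (fun ω => (Xj ω, rj (Xj ω, Z ω))) (fun ω => (Xj ω, Xnj ω)) P P)
    (Tj Tinv : ℝ → ℝ) (hTj : Measurable Tj) (hTinv : Measurable Tinv)
    (hleft : Function.LeftInverse Tinv Tj) (hright : Function.RightInverse Tinv Tj)
    (Tnj : (Fin m → ℝ) → (Fin m → ℝ)) (hTnj : Measurable Tnj)
    (Yj : Ω' → ℝ) (Yw : Ω' → (Fin m → ℝ))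
    (hYabs : IdentDistrib (fun ω' => (|Yj ω'|, fun i => |Yw ω' i|))
      (fun ω => (Tj (Xj ω), Tnj (Xnj ω))) P' P)
    (hYsymm : ∀ i : Fin m, IdentDistrib (fun ω' => Yw ω' i) (fun ω' => -(Yw ω' i)) P' P')
    (R : Ω → ℝ) (hR : Measurable R)
    (hRlaw : P.map R
      = (1/2 : ENNReal) • Measure.dirac (1 : ℝ) + (1/2 : ENNReal) • Measure.dirac (-1 : ℝ))
    (hRindep : IndepFun R (fun ω => (Xj ω, Z ω)) P) :
    ∀ i : Fin m,
      IdentDistrib (fun ω => R ω * Tnj (rj (Xj ω, Z ω)) i) (fun ω' => Yw ω' i) P P' :=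
  dependency_model_abs_transform_general P P' m Xj Xnj Z hXj hZ rj hrj hdm Tj Tnj hTnj Yj Yw hYabs
    hYsymm R hR hRlaw hRindep
end

section
/- Fix an integer d ≥ 1 and set j₀ = ⌈d/2⌉ (i.e. j₀ = d/2 if d is even and (d+1)/2 if d is odd). For a permutation w of {0, 1, …, d−1} and 1 ≤ k ≤ d, call the set {w(0), …, w(k−1)} a prefix set of w. Then the minimum cardinality of a family P of permutations of {0, …, d−1} such that every nonempty subset of {0, …, d−1} is a prefix set of some element of P is exactly the binomial coefficient C(d, j₀): there exists such a family of cardinality C(d, j₀), and every family with this covering property has at least C(d, j₀) elements. -/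
open Finset


lemma card_filter_lt (d k : ℕ) (hk : k ≤ d) :
    (Finset.univ.filter (fun i : Fin d => (i : ℕ) < k)).card = k := by
  classical
  have himg : (Finset.univ.filter (fun i : Fin d => (i : ℕ) < k)).image Fin.val
      = Finset.range k := by
    ext j
    simp only [Finset.mem_image, Finset.mem_filter, Finset.mem_univ, true_and, Finset.mem_range]
    constructor
    · rintro ⟨i, hi, rfl⟩; exact hi
    · intro hj; exact ⟨⟨j, lt_of_lt_of_le hj hk⟩, hj, rfl⟩
  have := Finset.card_image_of_injective
    (Finset.univ.filter (fun i : Fin d => (i : ℕ) < k)) Fin.val_injective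
  rw [himg, Finset.card_range] at this
  omega

noncomputable def permOfList {d : ℕ} (l : List (Fin d)) : Equiv.Perm (Fin d) :=
  if h : l.Nodup ∧ l.length = d then
    Equiv.ofBijective (fun i => l.get (Fin.cast h.2.symm i))
      ((Finite.injective_iff_bijective).mp (fun i j hij => by
        have := List.nodup_iff_injective_get.mp h.1 hij
        exact Fin.val_injective (by simpa using congrArg Fin.val this)))
  else 1

lemma permOfList_prefix {d : ℕ} {l : List (Fin d)} (h1 : l.Nodup) (h2 : l.length = d)
    (k : ℕ) (hk : k ≤ d) :
    Finset.image (fun i : Fin d => permOfList l i)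
      (Finset.univ.filter (fun i : Fin d => (i : ℕ) < k)) = (l.take k).toFinset := by
  classical
  ext x
  simp only [Finset.mem_image, Finset.mem_filter, Finset.mem_univ, true_and,
    List.mem_toFinset, permOfList, dif_pos (And.intro h1 h2), Equiv.ofBijective_apply]
  constructor
  · rintro ⟨i, hi, rfl⟩
    rw [List.mem_take_iff_getElem]
    exact ⟨(i : ℕ), by simp [h2]; omega, rfl⟩
  · intro hx
    rw [List.mem_take_iff_getElem] at hx
    obtain ⟨i, hm, hix⟩ := hx
    simp only [lt_inf_iff, h2] at hm
    exact ⟨⟨i, hm.2⟩, hm.1, hix⟩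


lemma toFinset_map' {α β : Type*} [DecidableEq α] [DecidableEq β] (f : α → β) (l : List α) :
    (l.map f).toFinset = l.toFinset.image f := by
  induction l with
  | nil => simp
  | cons a l ih => simp [ih]

section helpers
variable {d : ℕ} (l : List (Fin d))

lemma take_small (hlen : l.length = d) {m k : ℕ} (hm : m ≤ d) (hk : k ≤ m) :
    (((l.map Fin.castSucc).take m ++ Fin.last d :: (l.map Fin.castSucc).drop m).take k).toFinset
      = (l.take k).toFinset.image Fin.castSucc := by
  rw [List.take_append_of_le_length (by simp [hlen]; omega), List.take_take,
    min_eq_left hk, ← List.map_take, toFinset_map']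

lemma take_mid (hlen : l.length = d) {m : ℕ} (hm : m ≤ d) :
    (((l.map Fin.castSucc).take m ++ Fin.last d :: (l.map Fin.castSucc).drop m).take (m+1)).toFinset
      = insert (Fin.last d) ((l.take m).toFinset.image Fin.castSucc) := by
  have hlt : ((l.map Fin.castSucc).take m).length = m := by simp [hlen]; omega
  rw [List.take_append, hlt, List.take_take,
    min_eq_right (by omega : m ≤ m + 1), Nat.add_sub_cancel_left]
  simp [List.toFinset_append, ← List.map_take, toFinset_map',
    List.take_succ_cons]

lemma take_cons_last (k : ℕ) (hk : 1 ≤ k) :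
    ((Fin.last d :: l.map Fin.castSucc).take k).toFinset
      = insert (Fin.last d) ((l.take (k-1)).toFinset.image Fin.castSucc) := by
  obtain ⟨k, rfl⟩ := Nat.exists_eq_add_of_le hk
  rw [List.take_cons (by omega)]
  simp [← List.map_take, toFinset_map']

lemma last_not_mem_image (X : Finset (Fin d)) : Fin.last d ∉ X.image Fin.castSucc := by
  simp only [Finset.mem_image, not_exists, not_and]
  intro x _
  exact (Fin.castSucc_lt_last x).ne

end helpers

lemma insert_last_inj {d : ℕ} {X Y : Finset (Fin d)}
    (h : insert (Fin.last d) (X.image Fin.castSucc) = insert (Fin.last d) (Y.image Fin.castSucc)) :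
    X = Y := by
  have h2 : X.image Fin.castSucc = Y.image Fin.castSucc := by
    have := congrArg (fun s => Finset.erase s (Fin.last d)) h
    simpa [Finset.erase_insert (last_not_mem_image X),
      Finset.erase_insert (last_not_mem_image Y)] using this
  exact Finset.image_injective (Fin.castSucc_injective d) h2

lemma key (d : ℕ) : ∃ F : Finset (List (Fin d) × ℕ),
    (∀ p ∈ F, p.1.Nodup ∧ p.1.length = d ∧ 2 * p.2 ≤ d) ∧
    (∀ s : Finset (Fin d), ∃ p ∈ F, p.2 ≤ s.card ∧ s.card + p.2 ≤ d ∧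
      s = (p.1.take s.card).toFinset) ∧
    (∀ p ∈ F, ∀ q ∈ F, ∀ k : ℕ, p.2 ≤ k → k + p.2 ≤ d → q.2 ≤ k → k + q.2 ≤ d →
      (p.1.take k).toFinset = (q.1.take k).toFinset → p = q) := by
  classical
  induction d with
  | zero =>
    refine ⟨{([], 0)}, ?_, ?_, ?_⟩
    · intro p hp; simp at hp; subst hp; simp
    · intro s
      have : s = ∅ := Finset.eq_empty_of_isEmpty s
      subst this
      exact ⟨([], 0), by simp⟩
    · intro p hp q hq _ _ _ _ _ _
      simp at hp hq; rw [hp, hq]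
  | succ d ih =>
    obtain ⟨F, hnl, hcov, hdisj⟩ := ih
    set e1 : (List (Fin d) × ℕ) → (List (Fin (d+1)) × ℕ) := fun p =>
      ((p.1.map Fin.castSucc).take (d - p.2) ++
        Fin.last d :: (p.1.map Fin.castSucc).drop (d - p.2), p.2) with he1
    set e2 : (List (Fin d) × ℕ) → (List (Fin (d+1)) × ℕ) := fun p =>
      (Fin.last d :: p.1.map Fin.castSucc, p.2 + 1) with he2
    refine ⟨F.image e1 ∪ (F.filter (fun p => 2 * p.2 < d)).image e2, ?_, ?_, ?_⟩
    · -- nodup / length / window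
      intro p' hp'
      simp only [Finset.mem_union, Finset.mem_image, Finset.mem_filter] at hp'
      have hnodup : ∀ p ∈ F, (Fin.last d :: p.1.map Fin.castSucc).Nodup := by
        intro p hp
        obtain ⟨hn, hl, ha⟩ := hnl p hp
        refine List.nodup_cons.mpr ⟨?_, hn.map (Fin.castSucc_injective d)⟩
        simp only [List.mem_map, not_exists, not_and]
        intro x _
        exact (Fin.castSucc_lt_last x).ne
      rcases hp' with ⟨p, hp, rfl⟩ | ⟨p, ⟨hp, hlt⟩, rfl⟩
      · obtain ⟨hn, hl, ha⟩ := hnl p hp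
        have hperm : (e1 p).1.Perm (Fin.last d :: p.1.map Fin.castSucc) := by
          simpa [he1] using
            (List.perm_middle (a := Fin.last d) (l₁ := (p.1.map Fin.castSucc).take (d - p.2))
              (l₂ := (p.1.map Fin.castSucc).drop (d - p.2)))
        refine ⟨hperm.nodup_iff.mpr (hnodup p hp), ?_, ?_⟩
        · simp [he1, List.length_take, List.length_drop, hl]; omega
        · simp [he1]; omega
      · obtain ⟨hn, hl, ha⟩ := hnl p hp
        exact ⟨hnodup p hp, by simp [he2, hl], by simp [he2]; omega⟩
    · -- coverage
      intro s
      set t : Finset (Fin d) := Finset.univ.filter (fun i => Fin.castSucc i ∈ s) with ht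
      have himg : t.image Fin.castSucc = s.erase (Fin.last d) := by
        ext x
        refine Fin.lastCases ?_ ?_ x
        · exact iff_of_false (last_not_mem_image t)
            (fun h => (Finset.mem_erase.mp h).1 rfl)
        · intro i
          simp [ht, Finset.mem_erase, (Fin.castSucc_lt_last i).ne,
            (Fin.castSucc_injective d).eq_iff]
      obtain ⟨p, hp, h1, h2, h3⟩ := hcov t
      obtain ⟨hn, hl, ha⟩ := hnl p hp
      by_cases hlast : Fin.last d ∈ s
      · have hs : s = insert (Fin.last d) (t.image Fin.castSucc) := by
          rw [himg, Finset.insert_erase hlast]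
        have hcards : s.card = t.card + 1 := by
          rw [hs, Finset.card_insert_of_notMem (last_not_mem_image t),
            Finset.card_image_of_injective _ (Fin.castSucc_injective d)]
        by_cases htop : t.card + p.2 = d
        · refine ⟨e1 p, Finset.mem_union_left _ (Finset.mem_image_of_mem e1 hp),
            by simp [he1]; omega, by simp [he1]; omega, ?_⟩
          have hsc : s.card = (d - p.2) + 1 := by omega
          have hm : t.card = d - p.2 := by omega
          show s = (((p.1.map Fin.castSucc).take (d - p.2) ++
            Fin.last d :: (p.1.map Fin.castSucc).drop (d - p.2)).take s.card).toFinset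
          rw [hsc, take_mid p.1 hl (by omega), ← hm, ← h3, ← hs]
        · have h2a : 2 * p.2 < d := by omega
          refine ⟨e2 p, Finset.mem_union_right _
            (Finset.mem_image_of_mem e2 (Finset.mem_filter.mpr ⟨hp, h2a⟩)),
            by simp [he2]; omega, by simp [he2]; omega, ?_⟩
          show s = ((Fin.last d :: p.1.map Fin.castSucc).take s.card).toFinset
          rw [hcards, take_cons_last p.1 (t.card + 1) (by omega), Nat.add_sub_cancel,
            ← h3, ← hs]
      · have hs : s = t.image Fin.castSucc := by
          rw [himg, Finset.erase_eq_of_notMem hlast]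
        have hcards : s.card = t.card := by
          rw [hs, Finset.card_image_of_injective _ (Fin.castSucc_injective d)]
        refine ⟨e1 p, Finset.mem_union_left _ (Finset.mem_image_of_mem e1 hp),
          by simp [he1]; omega, by simp [he1]; omega, ?_⟩
        show s = (((p.1.map Fin.castSucc).take (d - p.2) ++
          Fin.last d :: (p.1.map Fin.castSucc).drop (d - p.2)).take s.card).toFinset
        rw [hcards, take_small p.1 hl (by omega : d - p.2 ≤ d) (by omega : t.card ≤ d - p.2),
          ← h3, ← hs]
    · -- disjointness
      intro p' hp' q' hq' k hk1 hk2 hk3 hk4 heq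
      simp only [Finset.mem_union, Finset.mem_image, Finset.mem_filter] at hp' hq'
      rcases hp' with ⟨p, hp, rfl⟩ | ⟨p, ⟨hp, hltp⟩, rfl⟩ <;>
        rcases hq' with ⟨q, hq, rfl⟩ | ⟨q, ⟨hq, hltq⟩, rfl⟩
      all_goals simp only [he1, he2] at hk1 hk2 hk3 hk4
      · -- e1 / e1
        obtain ⟨hnp, hlp, hap⟩ := hnl p hp
        obtain ⟨hnq, hlq, haq⟩ := hnl q hq
        by_cases hkp : k ≤ d - p.2 <;> by_cases hkq : k ≤ d - q.2
        · rw [show (e1 p).1 = _ from rfl, show (e1 q).1 = _ from rfl,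
            take_small p.1 hlp (by omega) hkp, take_small q.1 hlq (by omega) hkq] at heq
          have := hdisj p hp q hq k hk1 (by omega) hk3 (by omega)
            (Finset.image_injective (Fin.castSucc_injective d) heq)
          rw [this]
        · have hkq' : k = (d - q.2) + 1 := by omega
          rw [show (e1 p).1 = _ from rfl, show (e1 q).1 = _ from rfl,
            take_small p.1 hlp (by omega) hkp, hkq', take_mid q.1 hlq (by omega)] at heq
          have : Fin.last d ∈ (p.1.take ((d - q.2) + 1)).toFinset.image Fin.castSucc := by
            rw [heq]; exact Finset.mem_insert_self _ _
          exact absurd this (last_not_mem_image _)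
        · have hkp' : k = (d - p.2) + 1 := by omega
          rw [show (e1 p).1 = _ from rfl, show (e1 q).1 = _ from rfl, hkp',
            take_mid p.1 hlp (by omega), take_small q.1 hlq (by omega) (by omega)] at heq
          have : Fin.last d ∈ (q.1.take ((d - p.2) + 1)).toFinset.image Fin.castSucc := by
            rw [← heq]; exact Finset.mem_insert_self _ _
          exact absurd this (last_not_mem_image _)
        · have hkp' : k = (d - p.2) + 1 := by omega
          have hdq : d - p.2 = d - q.2 := by omega
          rw [show (e1 p).1 = _ from rfl, show (e1 q).1 = _ from rfl, hkp',
            take_mid p.1 hlp (by omega), hdq, take_mid q.1 hlq (by omega)] at heq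
          have := hdisj p hp q hq (d - q.2) (by omega) (by omega) (by omega) (by omega)
            (insert_last_inj heq)
          rw [this]
      · -- e1 / e2
        obtain ⟨hnp, hlp, hap⟩ := hnl p hp
        obtain ⟨hnq, hlq, haq⟩ := hnl q hq
        rw [show (e2 q).1 = _ from rfl, take_cons_last q.1 k (by omega)] at heq
        by_cases hkp : k ≤ d - p.2
        · rw [show (e1 p).1 = _ from rfl, take_small p.1 hlp (by omega) hkp] at heq
          have : Fin.last d ∈ (p.1.take k).toFinset.image Fin.castSucc := by
            rw [heq]; exact Finset.mem_insert_self _ _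
          exact absurd this (last_not_mem_image _)
        · have hkp' : k = (d - p.2) + 1 := by omega
          rw [show (e1 p).1 = _ from rfl, hkp', take_mid p.1 hlp (by omega)] at heq
          simp only [Nat.add_sub_cancel] at heq
          have hpq := hdisj p hp q hq (d - p.2) (by omega) (by omega) (by omega) (by omega)
            (insert_last_inj heq)
          have : p.2 = q.2 := by rw [hpq]
          omega
      · -- e2 / e1
        obtain ⟨hnp, hlp, hap⟩ := hnl p hp
        obtain ⟨hnq, hlq, haq⟩ := hnl q hq
        rw [show (e2 p).1 = _ from rfl, take_cons_last p.1 k (by omega)] at heq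
        by_cases hkq : k ≤ d - q.2
        · rw [show (e1 q).1 = _ from rfl, take_small q.1 hlq (by omega) hkq] at heq
          have : Fin.last d ∈ (q.1.take k).toFinset.image Fin.castSucc := by
            rw [← heq]; exact Finset.mem_insert_self _ _
          exact absurd this (last_not_mem_image _)
        · have hkq' : k = (d - q.2) + 1 := by omega
          rw [show (e1 q).1 = _ from rfl, hkq', take_mid q.1 hlq (by omega)] at heq
          simp only [Nat.add_sub_cancel] at heq
          have hpq := hdisj p hp q hq (d - q.2) (by omega) (by omega) (by omega) (by omega)
            (insert_last_inj heq)
          have : p.2 = q.2 := by rw [hpq]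
          omega
      · -- e2 / e2
        obtain ⟨hnp, hlp, hap⟩ := hnl p hp
        obtain ⟨hnq, hlq, haq⟩ := hnl q hq
        rw [show (e2 p).1 = _ from rfl, show (e2 q).1 = _ from rfl,
          take_cons_last p.1 k (by omega), take_cons_last q.1 k (by omega)] at heq
        have := hdisj p hp q hq (k-1) (by omega) (by omega) (by omega) (by omega)
          (insert_last_inj heq)
        rw [this]


/-- combinatorial core of Lemma 4 and Theorem 1(i): for `d ≥ 1` and
`j₀ = ⌈d/2⌉`, the minimum cardinality of a family `P` of permutations of `{0, …, d−1}`
such that every nonempty subset of `{0, …, d−1}` is a prefix set of some member of `P`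
is exactly `C(d, j₀)`. A prefix set of a permutation `w` is `{w(0), …, w(k−1)}` for some
`1 ≤ k ≤ d`. -/
theorem min_permutation_family_all_subsets (d : ℕ) (hd : 1 ≤ d) :
    IsLeast
      {n : ℕ | ∃ P : Finset (Equiv.Perm (Fin d)), P.card = n ∧
        ∀ s : Finset (Fin d), s.Nonempty →
          ∃ w ∈ P, ∃ k : ℕ, 1 ≤ k ∧ k ≤ d ∧
            s = Finset.image (fun i : Fin d => w i)
              (Finset.univ.filter (fun i : Fin d => (i : ℕ) < k))}
      (Nat.choose d ((d + 1) / 2)) := by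
  classical
  constructor
  · -- membership: construction
    obtain ⟨F, hnl, hcov, hdisj⟩ := key d
    have hj : (d + 1) / 2 ≤ d := by omega
    have hFcard : F.card ≤ Nat.choose d ((d + 1) / 2) := by
      have hmem : ∀ p ∈ F, (p.1.take ((d + 1) / 2)).toFinset ∈
          Finset.powersetCard ((d + 1) / 2) (Finset.univ : Finset (Fin d)) := by
        intro p hp
        obtain ⟨hn, hl, ha⟩ := hnl p hp
        rw [Finset.mem_powersetCard_univ,
          List.toFinset_card_of_nodup ((List.take_sublist _ _).nodup hn),
          List.length_take, hl]
        omega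
      have hinj : Set.InjOn (fun p : List (Fin d) × ℕ => (p.1.take ((d + 1) / 2)).toFinset) ↑F := by
        intro p hp q hq hfeq
        obtain ⟨_, _, hap⟩ := hnl p hp
        obtain ⟨_, _, haq⟩ := hnl q hq
        exact hdisj p hp q hq ((d + 1) / 2) (by omega) (by omega) (by omega) (by omega) hfeq
      have := Finset.card_le_card_of_injOn _ hmem hinj
      rwa [Finset.card_powersetCard, Finset.card_univ, Fintype.card_fin] at this
    have hP0card : (F.image (fun p => permOfList p.1)).card ≤ Nat.choose d ((d + 1) / 2) :=
      le_trans (Finset.card_image_le) hFcard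
    have hchoose_le : Nat.choose d ((d + 1) / 2) ≤
        (Finset.univ : Finset (Equiv.Perm (Fin d))).card := by
      rw [Finset.card_univ, Fintype.card_perm, Fintype.card_fin]
      have h1 := Nat.choose_mul_factorial_mul_factorial hj
      have h2 := Nat.factorial_pos ((d + 1) / 2)
      have h3 := Nat.factorial_pos (d - (d + 1) / 2)
      calc Nat.choose d ((d + 1) / 2)
          ≤ Nat.choose d ((d + 1) / 2) * ((d + 1) / 2).factorial * (d - (d + 1) / 2).factorial := by
            calc Nat.choose d ((d + 1) / 2)
                ≤ Nat.choose d ((d + 1) / 2) * ((d + 1) / 2).factorial :=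
                  Nat.le_mul_of_pos_right _ h2
              _ ≤ _ := Nat.le_mul_of_pos_right _ h3
        _ = d.factorial := h1
    obtain ⟨P, hsub, _, hPcard⟩ := Finset.exists_subsuperset_card_eq
      (Finset.subset_univ (F.image (fun p => permOfList p.1))) hP0card hchoose_le
    refine ⟨P, hPcard, ?_⟩
    intro s hs
    obtain ⟨p, hp, h1, h2, h3⟩ := hcov s
    obtain ⟨hn, hl, ha⟩ := hnl p hp
    have hsd : s.card ≤ d := by simpa using Finset.card_le_univ s
    refine ⟨permOfList p.1, hsub (Finset.mem_image_of_mem _ hp), s.card,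
      Finset.card_pos.mpr hs, hsd, ?_⟩
    rw [permOfList_prefix hn hl s.card hsd]
    exact h3
  · -- lower bound
    rintro n ⟨P, rfl, hcovP⟩
    have hj1 : 1 ≤ (d + 1) / 2 := by omega
    have hj : (d + 1) / 2 ≤ d := by omega
    have h : ∀ s ∈ Finset.powersetCard ((d + 1) / 2) (Finset.univ : Finset (Fin d)),
        ∃ w ∈ P, ∃ k : ℕ, 1 ≤ k ∧ k ≤ d ∧
          s = Finset.image (fun i : Fin d => w i)
            (Finset.univ.filter (fun i : Fin d => (i : ℕ) < k)) := by
      intro s hs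
      apply hcovP
      rw [Finset.mem_powersetCard_univ] at hs
      exact Finset.card_pos.mp (by omega)
    choose! f hfP g hg1 hg2 hgs using h
    have hkey : ∀ s ∈ Finset.powersetCard ((d + 1) / 2) (Finset.univ : Finset (Fin d)),
        s = Finset.image (fun i : Fin d => f s i)
          (Finset.univ.filter (fun i : Fin d => (i : ℕ) < (d + 1) / 2)) := by
      intro s hs
      have hcs : s.card = (d + 1) / 2 := Finset.mem_powersetCard_univ.mp hs
      have hgeq : g s = (d + 1) / 2 := by
        have := hgs s hs
        have hc2 : s.card = g s := by
          conv_lhs => rw [this]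
          rw [Finset.card_image_of_injective _ (f s).injective,
            card_filter_lt d (g s) (hg2 s hs)]
        omega
      rw [← hgeq]
      exact hgs s hs
    have hle := Finset.card_le_card_of_injOn f (fun s hs => hfP s hs) ?_
    · rwa [Finset.card_powersetCard, Finset.card_univ, Fintype.card_fin] at hle
    · intro s hs s' hs' hff
      rw [hkey s hs, hkey s' hs', hff]
end

section
/- Fix integers d ≥ 1 and 1 ≤ p ≤ ⌈d/2⌉. For a permutation w of {0, 1, …, d−1} and 1 ≤ k ≤ d, call the set {w(0), …, w(k−1)} a prefix set of w. Then the minimum cardinality of a family P of permutations of {0, …, d−1} such that every nonempty subset of {0, …, d−1} of cardinality at most p is a prefix set of some element of P is exactly the binomial coefficient C(d, p). -/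
open Finset FinsetFamily

/-!
A covering family must contain, for every `p`-set `t`, a permutation whose length-`p` prefix set
is `t`, so it has at least `C(d, p)` members.

Conversely, below the middle level (`2r + 1 ≤ d`) the local LYM inequality is Hall's condition
for matching the `r`-sets injectively into `(r+1)`-supersets. Induct on `p`, attaching to each
`p`-set `t` a permutation with prefix set `t` such that every set of size at most `p` is a prefix
set of one of them: a `(p+1)`-set takes the permutation of its matched `p`-subset, with its one new
element swapped into position `p`. This leaves all shorter prefix sets unchanged, and every
`p`-set is matched, so the old coverage survives.
-/

namespace Finset

variable {α : Type*} [Fintype α] [DecidableEq α]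

theorem card_mul_le_card_upShadow_mul {𝒜 : Finset (Finset α)} {r : ℕ}
    (h𝒜 : (𝒜 : Set (Finset α)).Sized r) (hr : r ≤ Fintype.card α) :
    #𝒜 * (Fintype.card α - r) ≤ #(∂⁺ 𝒜) * (r + 1) := by
  have := card_mul_le_card_shadow_mul h𝒜.compls
  rwa [shadow_compls, card_compls, card_compls, Nat.sub_sub_self hr] at this

theorem card_le_card_upShadow {𝒜 : Finset (Finset α)} {r : ℕ}
    (h𝒜 : (𝒜 : Set (Finset α)).Sized r) (hr : 2 * r + 1 ≤ Fintype.card α) :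
    #𝒜 ≤ #(∂⁺ 𝒜) :=
  Nat.le_of_mul_le_mul_right
    ((Nat.mul_le_mul_left _ (by omega)).trans (card_mul_le_card_upShadow_mul h𝒜 (by omega)))
    r.succ_pos

theorem exists_injective_card_succ_superset {r : ℕ} (hr : 2 * r + 1 ≤ Fintype.card α) :
    ∃ f : {s : Finset α // #s = r} → Finset α,
      Function.Injective f ∧ ∀ s, s.1 ⊆ f s ∧ #(f s) = r + 1 := by
  have hall : ∀ S : Finset {s : Finset α // #s = r},
      #S ≤ #(S.biUnion fun s => ∂⁺ {s.1}) := by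
    intro S
    have hS : S.biUnion (fun s => ∂⁺ {s.1}) =
        ∂⁺ (S.map (Function.Embedding.subtype _)) := by
      ext t
      simp [mem_upShadow_iff]
    rw [hS, ← card_map (Function.Embedding.subtype _)]
    refine card_le_card_upShadow (fun s hs => ?_) hr
    obtain ⟨s, -, rfl⟩ := mem_map.1 hs
    exact s.2
  obtain ⟨f, hf, hfmem⟩ := (all_card_le_biUnion_card_iff_exists_injective _).1 hall
  refine ⟨f, hf, fun s => ?_⟩
  obtain ⟨_, hs, hsub, hcard⟩ := mem_upShadow_iff_exists_mem_card_add_one.1 (hfmem s)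
  rw [mem_singleton.1 hs] at hsub hcard
  exact ⟨hsub, hcard.trans (by rw [s.2])⟩

theorem exists_subset_card_pred_surjective {r : ℕ} (hr : 2 * r + 1 ≤ Fintype.card α) :
    ∃ g : Finset α → Finset α, (∀ t, #t = r + 1 → g t ⊆ t ∧ #(g t) = r) ∧
      ∀ s, #s = r → ∃ t, #t = r + 1 ∧ g t = s := by
  obtain ⟨f, hf, hfsub⟩ := exists_injective_card_succ_superset hr
  have hpick : ∀ t : Finset α, #t = r + 1 →
      ∃ s ⊆ t, #s = r ∧ ∀ s', f s' = t → s = s'.1 := by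
    intro t ht
    by_cases h : ∃ s', f s' = t
    · obtain ⟨s', rfl⟩ := h
      exact ⟨s'.1, (hfsub s').1, s'.2, fun s'' hs'' => congrArg Subtype.val (hf hs'').symm⟩
    · obtain ⟨s, hst, hs⟩ := exists_subset_card_eq (show r ≤ #t by omega)
      exact ⟨s, hst, hs, fun s' hs' => absurd ⟨s', hs'⟩ h⟩
  choose! g hgsub hgcard hgf using hpick
  exact ⟨g, fun t ht => ⟨hgsub t ht, hgcard t ht⟩,
    fun s hs => ⟨f ⟨s, hs⟩, (hfsub _).2, hgf _ (hfsub _).2 ⟨s, hs⟩ rfl⟩⟩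

end Finset

namespace Equiv.Perm

variable {d : ℕ}

def prefixSet (w : Equiv.Perm (Fin d)) (k : ℕ) : Finset (Fin d) :=
  Finset.image (fun i : Fin d => w i) (Finset.univ.filter (fun i : Fin d => (i : ℕ) < k))

variable (w : Equiv.Perm (Fin d))

theorem card_prefixSet {k : ℕ} (hk : k ≤ d) : #(w.prefixSet k) = k := by
  rw [prefixSet, card_image_of_injective _ w.injective, Fin.card_filter_val_lt, min_eq_right hk]

@[simp]
theorem prefixSet_zero : w.prefixSet 0 = ∅ := by
  simp [prefixSet]

theorem prefixSet_succ (i : Fin d) : w.prefixSet (i + 1) = insert (w i) (w.prefixSet i) := by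
  rw [prefixSet, prefixSet, ← image_insert]
  congr 1
  ext j
  simp [le_iff_eq_or_lt, Fin.val_inj]

theorem prefixSet_congr {w' : Equiv.Perm (Fin d)} {k : ℕ}
    (h : ∀ i : Fin d, (i : ℕ) < k → w i = w' i) : w.prefixSet k = w'.prefixSet k :=
  image_congr fun i hi => h i (mem_filter.1 hi).2

theorem exists_prefixSet_extend {k : ℕ} {t : Finset (Fin d)} (hwt : w.prefixSet k ⊆ t)
    (ht : #t = k + 1) :
    ∃ w' : Equiv.Perm (Fin d), (∀ j ≤ k, w'.prefixSet j = w.prefixSet j) ∧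
      w'.prefixSet (k + 1) = t := by
  have hkd : k < d := by simpa [ht] using card_le_univ t
  have hcard : #(w.prefixSet k) = k := w.card_prefixSet hkd.le
  obtain ⟨x, hxt, hxw⟩ : ∃ x ∈ t, x ∉ w.prefixSet k := exists_of_ssubset
    (ssubset_of_subset_of_ne hwt (by rintro rfl; omega))
  let i : Fin d := ⟨k, hkd⟩
  have hfix : ∀ i' : Fin d, (i' : ℕ) < k → (swap (w i) x * w) i' = w i' := fun i' hi' =>
    swap_apply_of_ne_of_ne (w.injective.ne (Fin.ne_of_lt hi'))
      (ne_of_mem_of_not_mem (mem_image_of_mem _ (by simpa using hi')) hxw)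
  refine ⟨swap (w i) x * w, fun j hj => prefixSet_congr _ fun i' hi' => hfix i' (by omega), ?_⟩
  have hstep : (swap (w i) x * w).prefixSet (i + 1) = insert x (w.prefixSet k) := by
    rw [prefixSet_succ, prefixSet_congr _ hfix]
    simp
  rw [show k + 1 = (i : ℕ) + 1 from rfl, hstep]
  exact eq_of_subset_of_card_le (insert_subset hxt hwt) (by rw [card_insert_of_notMem hxw]; omega)

theorem exists_prefixSet_cover {p : ℕ} (hp : 2 * p ≤ d + 1) :
    ∃ W : Finset (Fin d) → Equiv.Perm (Fin d), (∀ t, #t = p → (W t).prefixSet p = t) ∧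
      ∀ s, #s ≤ p → ∃ t, #t = p ∧ (W t).prefixSet #s = s := by
  induction p with
  | zero =>
    refine ⟨fun _ => 1, fun t ht => by simp [card_eq_zero.1 ht], fun s hs => ⟨∅, rfl, ?_⟩⟩
    simp [card_eq_zero.1 (Nat.le_zero.1 hs)]
  | succ p ih =>
    obtain ⟨W, hWtop, hWcover⟩ := ih (by omega)
    obtain ⟨g, hgsub, hgsurj⟩ := exists_subset_card_pred_surjective (α := Fin d) (r := p)
      (by simp; omega)
    have hextend : ∀ t : Finset (Fin d), #t = p + 1 → ∃ w : Equiv.Perm (Fin d),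
        (∀ j ≤ p, w.prefixSet j = (W (g t)).prefixSet j) ∧ w.prefixSet (p + 1) = t := by
      intro t ht
      refine (W (g t)).exists_prefixSet_extend ?_ ht
      rw [hWtop _ (hgsub t ht).2]
      exact (hgsub t ht).1
    choose! W' hW'low hW'top using hextend
    refine ⟨W', hW'top, fun s hs => ?_⟩
    rcases hs.lt_or_eq with hs | hs
    · obtain ⟨t, ht, hts⟩ := hWcover s (by omega)
      obtain ⟨t', ht', rfl⟩ := hgsurj t ht
      exact ⟨t', ht', (hW'low t' ht' _ (by omega)).trans hts⟩
    · exact ⟨s, hs, by rw [hs, hW'top s hs]⟩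

end Equiv.Perm

theorem min_permutation_family_small_subsets_general (d p : ℕ)
    (hp1 : 1 ≤ p) (hp2 : p ≤ (d + 1) / 2) :
    IsLeast
      {n : ℕ | ∃ P : Finset (Equiv.Perm (Fin d)), P.card = n ∧
        ∀ s : Finset (Fin d), s.Nonempty → s.card ≤ p →
          ∃ w ∈ P, ∃ k : ℕ, 1 ≤ k ∧ k ≤ d ∧
            s = Finset.image (fun i : Fin d => w i)
              (Finset.univ.filter (fun i : Fin d => (i : ℕ) < k))}
      (Nat.choose d p) := by
  have hpd : p ≤ d := by omega
  constructor
  · obtain ⟨W, hWtop, hWcover⟩ :=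
      Equiv.Perm.exists_prefixSet_cover (d := d) (p := p) (by omega)
    refine ⟨(powersetCard p univ).image W, ?_, fun s hs hsp => ?_⟩
    · rw [card_image_of_injOn, card_powersetCard, card_univ, Fintype.card_fin]
      intro t ht t' ht' h
      rw [mem_coe, mem_powersetCard_univ] at ht ht'
      rw [← hWtop t ht, ← hWtop t' ht', h]
    · obtain ⟨t, ht, hts⟩ := hWcover s hsp
      exact ⟨W t, mem_image_of_mem _ (mem_powersetCard_univ.2 ht), #s, hs.card_pos,
        card_le_univ s |>.trans_eq (Fintype.card_fin d), hts.symm⟩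
  · rintro n ⟨P, rfl, hcover⟩
    have hsub : powersetCard p univ ⊆ P.image fun w => w.prefixSet p := by
      intro u hu
      rw [mem_powersetCard_univ] at hu
      obtain ⟨w, hw, k, -, hk, rfl⟩ := hcover u (card_pos.1 (by omega)) hu.le
      change #(w.prefixSet k) = p at hu
      rw [w.card_prefixSet hk] at hu
      exact mem_image.2 ⟨w, hw, by rw [hu]; rfl⟩
    simpa using (card_le_card hsub).trans card_image_le

/-- combinatorial core of Theorem 1(ii): for `d ≥ 1` and
`1 ≤ p ≤ ⌈d/2⌉`, the minimum cardinality of a family `P` of permutations of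
`{0, …, d−1}` such that every nonempty subset of `{0, …, d−1}` of cardinality at most `p`
is a prefix set of some member of `P` is exactly `C(d, p)`. A prefix set of a permutation
`w` is `{w(0), …, w(k−1)}` for some `1 ≤ k ≤ d`. -/
theorem min_permutation_family_small_subsets (d p : ℕ) (hd : 1 ≤ d)
    (hp1 : 1 ≤ p) (hp2 : p ≤ (d + 1) / 2) :
    IsLeast
      {n : ℕ | ∃ P : Finset (Equiv.Perm (Fin d)), P.card = n ∧
        ∀ s : Finset (Fin d), s.Nonempty → s.card ≤ p →
          ∃ w ∈ P, ∃ k : ℕ, 1 ≤ k ∧ k ≤ d ∧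
            s = Finset.image (fun i : Fin d => w i)
              (Finset.univ.filter (fun i : Fin d => (i : ℕ) < k))}
      (Nat.choose d p) :=
  min_permutation_family_small_subsets_general d p hp1 hp2
end

section
/- Let A and B be independent random elements (with values in ℝ^p and ℝ^q respectively) on a probability space and let g : ℝ^p × ℝ^q → ℝ^n be measurable with E[‖g(A,B)‖²] < ∞. Let D := Cov(E[g(A,B) | σ(A)]) be the covariance matrix of the componentwise conditional expectation of g(A,B) given σ(A), D^tot := Cov(g(A,B) − E[g(A,B) | σ(B)]), and Σ := Cov(g(A,B)). Then 0 ≤ trace(D) ≤ trace(D^tot) ≤ trace(Σ); in particular, if trace(Σ) > 0, the first-type indices satisfy 0 ≤ trace(D)/trace(Σ) ≤ trace(D^tot)/trace(Σ) ≤ 1. -/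
open MeasureTheory ProbabilityTheory

/-!
Componentwise, the diagonal entries of `D`, `Dtot` and `Σ` are `Var E[f | A]`, `Var (f - E[f | B])`
and `Var f`. The law of total variance gives `Var (f - E[f | m]) = Var f - Var E[f | m]`, which
yields the last inequality and `Var E[h | m] ≤ Var h`. Independence of `σ(A)` and `σ(B)` makes
`E[E[f | B] | A]` the constant `E f`, so `E[f - E[f | B] | A] = E[f | A] - E f`, and applying
`Var E[h | A] ≤ Var h` to `h = f - E[f | B]` gives the middle one.
-/

/-- The covariance matrix of an `ℝ^n`-valued random vector `h`:
`(Cov h)_{i j} = E[(h_i − E h_i)(h_j − E h_j)]`. -/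
noncomputable def covMatrix {Ω : Type*} [MeasurableSpace Ω] (P : Measure Ω) {n : ℕ}
    (h : Ω → Fin n → ℝ) : Matrix (Fin n) (Fin n) ℝ :=
  fun i j => ∫ ω, (h ω i - ∫ ω', h ω' i ∂P) * (h ω j - ∫ ω', h ω' j ∂P) ∂P

section

variable {Ω : Type*} {m m₁ m₂ m₀ : MeasurableSpace Ω} {P : Measure Ω}

lemma trace_covMatrix_nonneg {n : ℕ} (h : Ω → Fin n → ℝ) : 0 ≤ (covMatrix P h).trace :=
  Finset.sum_nonneg fun _ _ => integral_nonneg fun _ => mul_self_nonneg _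

lemma trace_covMatrix {n : ℕ} {h : Ω → Fin n → ℝ} (hh : ∀ i, AEMeasurable (fun ω => h ω i) P) :
    (covMatrix P h).trace = ∑ i, Var[fun ω => h ω i; P] :=
  Finset.sum_congr rfl fun i _ => covariance_self (hh i)

variable [IsProbabilityMeasure P] {f : Ω → ℝ}

lemma variance_sub_condExp (hm : m ≤ m₀) (hf : MemLp f 2 P) :
    Var[f - P[f|m]; P] = Var[f; P] - Var[P[f|m]; P] := by
  have hres : MemLp (f - P[f|m]) 2 P := hf.sub (hf.condExp one_le_two)
  have hmean : P[f - P[f|m]] = 0 := by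
    rw [integral_sub' (hf.integrable one_le_two) integrable_condExp, integral_condExp hm, sub_self]
  have hres_var : Var[f - P[f|m]; P] = P[Var[f; P | m]] := by
    rw [variance_of_integral_eq_zero hres.aemeasurable hmean, condVar, integral_condExp hm]
    rfl
  linarith [integral_condVar_add_variance_condExp hm hf]

lemma variance_condExp_le (hm : m ≤ m₀) (hf : MemLp f 2 P) :
    Var[P[f|m]; P] ≤ Var[f; P] := by
  linarith [variance_sub_condExp hm hf, variance_nonneg (f - P[f|m]) P]

lemma condExp_sub_condExp_ae_eq_of_indep (h₁ : m₁ ≤ m₀) (h₂ : m₂ ≤ m₀) (hindep : Indep m₂ m₁ P)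
    (hf : Integrable f P) :
    P[f - P[f|m₂] | m₁] =ᵐ[P] P[f|m₁] - fun _ => P[f] := by
  have hconst : P[P[f|m₂] | m₁] =ᵐ[P] fun _ => P[f] := by
    rw [← integral_condExp h₂]
    exact condExp_indep_eq h₂ h₁ stronglyMeasurable_condExp hindep
  exact (condExp_sub hf integrable_condExp m₁).trans (Filter.EventuallyEq.rfl.sub hconst)

lemma variance_condExp_le_variance_sub_condExp_of_indep (h₁ : m₁ ≤ m₀) (h₂ : m₂ ≤ m₀)
    (hindep : Indep m₁ m₂ P) (hf : MemLp f 2 P) :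
    Var[P[f|m₁]; P] ≤ Var[f - P[f|m₂]; P] :=
  calc Var[P[f|m₁]; P] = Var[fun ω => P[f|m₁] ω - P[f]; P] :=
        (variance_sub_const integrable_condExp.aestronglyMeasurable _).symm
    _ = Var[P[f - P[f|m₂] | m₁]; P] :=
        variance_congr (condExp_sub_condExp_ae_eq_of_indep h₁ h₂ hindep.symm
          (hf.integrable one_le_two)).symm
    _ ≤ Var[f - P[f|m₂]; P] := variance_condExp_le h₁ (hf.sub (hf.condExp one_le_two))

variable {n : ℕ} {F : Ω → Fin n → ℝ}

lemma trace_covMatrix_sub_condExp_le (hm : m ≤ m₀) (hF : MemLp F 2 P) :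
    (covMatrix P fun ω i => F ω i - P[fun ω' => F ω' i | m] ω).trace ≤ (covMatrix P F).trace := by
  have hFi := hF.eval
  rw [trace_covMatrix, trace_covMatrix]
  · exact Finset.sum_le_sum fun i _ =>
      (variance_sub_condExp hm (hFi i)).trans_le (sub_le_self _ (variance_nonneg _ _))
  · exact fun i => (hFi i).aemeasurable
  · exact fun i => ((hFi i).sub ((hFi i).condExp one_le_two)).aemeasurable

lemma trace_covMatrix_condExp_le_of_indep (h₁ : m₁ ≤ m₀) (h₂ : m₂ ≤ m₀) (hindep : Indep m₁ m₂ P)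
    (hF : MemLp F 2 P) :
    (covMatrix P fun ω i => P[fun ω' => F ω' i | m₁] ω).trace ≤
      (covMatrix P fun ω i => F ω i - P[fun ω' => F ω' i | m₂] ω).trace := by
  have hFi := hF.eval
  rw [trace_covMatrix, trace_covMatrix]
  · exact Finset.sum_le_sum fun i _ =>
      variance_condExp_le_variance_sub_condExp_of_indep h₁ h₂ hindep (hFi i)
  · exact fun i => ((hFi i).sub ((hFi i).condExp one_le_two)).aemeasurable
  · exact fun i => ((hFi i).condExp one_le_two).aemeasurable

end

theorem dGSI_first_type_inequalities_general
    {Ω : Type*} [MeasurableSpace Ω] (P : Measure Ω) [IsProbabilityMeasure P]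
    (p q n : ℕ)
    (A : Ω → Fin p → ℝ) (B : Ω → Fin q → ℝ)
    (hA : Measurable A) (hB : Measurable B) (hAB : IndepFun A B P)
    (g : (Fin p → ℝ) × (Fin q → ℝ) → Fin n → ℝ)
    (hint : MemLp (fun ω => g (A ω, B ω)) 2 P)
    (D Dtot Sig : Matrix (Fin n) (Fin n) ℝ)
    (hD : D = covMatrix P (fun ω i =>
      (P[fun ω' => g (A ω', B ω') i | MeasurableSpace.comap A inferInstance]) ω))
    (hDtot : Dtot = covMatrix P (fun ω i =>
      g (A ω, B ω) i -
        (P[fun ω' => g (A ω', B ω') i | MeasurableSpace.comap B inferInstance]) ω))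
    (hSig : Sig = covMatrix P (fun ω => g (A ω, B ω))) :
    0 ≤ D.trace ∧ D.trace ≤ Dtot.trace ∧ Dtot.trace ≤ Sig.trace ∧
      (0 < Sig.trace →
        0 ≤ D.trace / Sig.trace ∧ D.trace / Sig.trace ≤ Dtot.trace / Sig.trace ∧
          Dtot.trace / Sig.trace ≤ 1) := by
  have h₀ : 0 ≤ D.trace := hD ▸ trace_covMatrix_nonneg _
  have h₁ : D.trace ≤ Dtot.trace := hD ▸ hDtot ▸ trace_covMatrix_condExp_le_of_indep
    hA.comap_le hB.comap_le ((IndepFun_iff_Indep A B P).1 hAB) hint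
  have h₂ : Dtot.trace ≤ Sig.trace := hDtot ▸ hSig ▸ trace_covMatrix_sub_condExp_le hB.comap_le hint
  exact ⟨h₀, h₁, h₂, fun hpos => ⟨by positivity, by gcongr, (div_le_one hpos).2 h₂⟩⟩

/-- first-type inequality chain of Proposition 3: for independent inputs
`A`, `B` and a square-integrable output `g(A,B)`, with `D` the covariance matrix of the
componentwise conditional expectation of `g(A,B)` given `σ(A)`,
`Dtot = Cov(g(A,B) − E[g(A,B) | σ(B)])`, and `Σ' = Cov(g(A,B))`, one has
`0 ≤ trace D ≤ trace Dtot ≤ trace Σ'`; in particular, if `trace Σ' > 0`, the first-type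
dependent generalized sensitivity indices satisfy
`0 ≤ trace D / trace Σ' ≤ trace Dtot / trace Σ' ≤ 1`. -/
theorem dGSI_first_type_inequalities
    {Ω : Type*} [MeasurableSpace Ω] (P : Measure Ω) [IsProbabilityMeasure P]
    (p q n : ℕ)
    (A : Ω → Fin p → ℝ) (B : Ω → Fin q → ℝ)
    (hA : Measurable A) (hB : Measurable B) (hAB : IndepFun A B P)
    (g : (Fin p → ℝ) × (Fin q → ℝ) → Fin n → ℝ) (hg : Measurable g)
    (hint : MemLp (fun ω => g (A ω, B ω)) 2 P)
    (D Dtot Sig : Matrix (Fin n) (Fin n) ℝ)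
    (hD : D = covMatrix P (fun ω i =>
      (P[fun ω' => g (A ω', B ω') i | MeasurableSpace.comap A inferInstance]) ω))
    (hDtot : Dtot = covMatrix P (fun ω i =>
      g (A ω, B ω) i -
        (P[fun ω' => g (A ω', B ω') i | MeasurableSpace.comap B inferInstance]) ω))
    (hSig : Sig = covMatrix P (fun ω => g (A ω, B ω))) :
    0 ≤ D.trace ∧ D.trace ≤ Dtot.trace ∧ Dtot.trace ≤ Sig.trace ∧
      (0 < Sig.trace →
        0 ≤ D.trace / Sig.trace ∧ D.trace / Sig.trace ≤ Dtot.trace / Sig.trace ∧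
          Dtot.trace / Sig.trace ≤ 1) :=
  dGSI_first_type_inequalities_general P p q n A B hA hB hAB g hint D Dtot Sig hD hDtot hSig
end

section
/- Let A and B be independent random elements (with values in ℝ^p and ℝ^q respectively) on a probability space and let g : ℝ^p × ℝ^q → ℝ^n be measurable with E[‖g(A,B)‖²] < ∞. Let D := Cov(E[g(A,B) | σ(A)]), D^tot := Cov(g(A,B) − E[g(A,B) | σ(B)]), and Σ := Cov(g(A,B)). Then ‖D‖_F ≤ ‖D^tot‖_F ≤ ‖Σ‖_F, where ‖·‖_F is the Frobenius norm; in particular, if ‖Σ‖_F > 0, the second-type indices satisfy 0 ≤ ‖D‖_F/‖Σ‖_F ≤ ‖D^tot‖_F/‖Σ‖_F ≤ 1. -/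
open MeasureTheory ProbabilityTheory Matrix

/-- The Frobenius norm `‖S‖_F = √(trace (S Sᵀ))` of a square real matrix. -/
noncomputable def frobNorm {n : ℕ} (S : Matrix (Fin n) (Fin n) ℝ) : ℝ :=
  Real.sqrt (Matrix.trace (S * S.transpose))

section Aux1

lemma trace_nonneg_of_posSemidef {n : ℕ} {M : Matrix (Fin n) (Fin n) ℝ}
    (hM : M.PosSemidef) : 0 ≤ M.trace := by
  rw [Matrix.trace]
  refine Finset.sum_nonneg fun i _ => ?_
  have := hM.dotProduct_mulVec_nonneg (Pi.single i 1)
  simpa [Matrix.mulVec, dotProduct, Pi.single_apply, Finset.sum_ite_eq] using this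

lemma trace_mul_nonneg_of_posSemidef {n : ℕ} {S T : Matrix (Fin n) (Fin n) ℝ}
    (hS : S.PosSemidef) (hT : T.PosSemidef) : 0 ≤ (S * T).trace := by
  classical
  open scoped MatrixOrder in
  obtain ⟨C, hC, -, rfl⟩ := CFC.exists_sqrt_of_isSelfAdjoint_of_quasispectrumRestricts
    hS.isHermitian (QuasispectrumRestricts.nnreal_of_nonneg hS.nonneg)
  rw [Matrix.mul_assoc, Matrix.trace_mul_comm]
  have hCt : Cᴴ = C := hC.star_eq
  have h := hT.mul_mul_conjTranspose_same C
  rw [hCt] at h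
  exact trace_nonneg_of_posSemidef h

lemma frobNorm_le_frobNorm {n : ℕ} {S T : Matrix (Fin n) (Fin n) ℝ}
    (hS : S.PosSemidef) (hT : T.PosSemidef) (hd : (T - S).PosSemidef) :
    frobNorm S ≤ frobNorm T := by
  have hSt : S.transpose = S := by
    have := hS.1; rwa [Matrix.IsHermitian, Matrix.conjTranspose_eq_transpose_of_trivial] at this
  have hTt : T.transpose = T := by
    have := hT.1; rwa [Matrix.IsHermitian, Matrix.conjTranspose_eq_transpose_of_trivial] at this
  rw [frobNorm, frobNorm, hSt, hTt]
  apply Real.sqrt_le_sqrt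
  have h1 : 0 ≤ (S * (T - S)).trace := trace_mul_nonneg_of_posSemidef hS hd
  have h2 : 0 ≤ ((T - S) * T).trace := trace_mul_nonneg_of_posSemidef hd hT
  have e1 : (S * (T - S)).trace = (S * T).trace - (S * S).trace := by
    rw [Matrix.mul_sub, Matrix.trace_sub]
  have e2 : ((T - S) * T).trace = (T * T).trace - (S * T).trace := by
    rw [Matrix.sub_mul, Matrix.trace_sub]
  linarith

end Aux1

section Aux2
namespace DGSIAux
variable {Ω : Type*} {m m0 : MeasurableSpace Ω} {P : Measure Ω}

variable {Ω : Type*} {m m0 : MeasurableSpace Ω} {P : Measure Ω}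

lemma L2.integrable_mul' {f g : Ω → ℝ} (hf : MemLp f 2 P) (hg : MemLp g 2 P) :
    Integrable (fun ω => f ω * g ω) P := by
  have h : MemLp (f • g) 1 P := hg.smul hf
  rw [memLp_one_iff_integrable] at h
  exact h

lemma memL2_condexp' (hm : m ≤ m0) [IsFiniteMeasure P] {f : Ω → ℝ} (hf : MemLp f 2 P) :
    MemLp (P[f|m]) 2 P := by
  haveI : SigmaFinite (P.trim hm) := inferInstance
  set F : Lp ℝ 2 P := hf.toLp f with hF
  have hcoe : (F : Ω → ℝ) =ᵐ[P] f := hf.coeFn_toLp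
  have hae : (condExpL2 ℝ ℝ hm F : Ω → ℝ) =ᵐ[P] P[f|m] := by
    refine ae_eq_condExp_of_forall_setIntegral_eq hm (hf.integrable one_le_two)
      (fun s _ hμs => (integrable_condExpL2_of_isFiniteMeasure hm).integrableOn)
      (fun s hs hμs => ?_) (aestronglyMeasurable_condExpL2 hm F)
    rw [integral_condExpL2_eq hm F hs hμs.ne]
    exact setIntegral_congr_ae (hm s hs) (hcoe.mono fun x hx _ => hx)
  exact (Lp.memLp (condExpL2 ℝ ℝ hm F : Lp ℝ 2 P)).ae_eq hae

lemma integral_condexp_mul_self (hm : m ≤ m0) [IsProbabilityMeasure P]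
    {f : Ω → ℝ} (hf : MemLp f 2 P) :
    ∫ ω, (P[f|m]) ω * f ω ∂P = ∫ ω, ((P[f|m]) ω) ^ 2 ∂P := by
  haveI : SigmaFinite (P.trim hm) := inferInstance
  have he2 : MemLp (P[f|m]) 2 P := memL2_condexp' hm hf
  have hint : Integrable (fun ω => (P[f|m]) ω * f ω) P := L2.integrable_mul' he2 hf
  have hint' : Integrable ((P[f|m]) * f) P := hint
  have hmul : P[(P[f|m]) * f|m] =ᵐ[P] P[f|m] * P[f|m] :=
    condExp_mul_of_stronglyMeasurable_left stronglyMeasurable_condExp hint' (hf.integrable one_le_two)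
  calc ∫ ω, (P[f|m]) ω * f ω ∂P
      = ∫ ω, ((P[f|m]) * f) ω ∂P := rfl
    _ = ∫ ω, (P[(P[f|m]) * f|m]) ω ∂P := (integral_condExp hm).symm
    _ = ∫ ω, ((P[f|m]) ω) ^ 2 ∂P :=
        integral_congr_ae (hmul.mono fun ω hω => by simpa [sq] using hω)

lemma integral_sq_sub_condexp (hm : m ≤ m0) [IsProbabilityMeasure P]
    {f : Ω → ℝ} (hf : MemLp f 2 P) :
    ∫ ω, (f ω - (P[f|m]) ω) ^ 2 ∂P = ∫ ω, f ω ^ 2 ∂P - ∫ ω, ((P[f|m]) ω) ^ 2 ∂P := by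
  haveI : SigmaFinite (P.trim hm) := inferInstance
  have he2 : MemLp (P[f|m]) 2 P := memL2_condexp' hm hf
  have hff : Integrable (fun ω => f ω * f ω) P := L2.integrable_mul' hf hf
  have hef : Integrable (fun ω => (P[f|m]) ω * f ω) P := L2.integrable_mul' he2 hf
  have hee : Integrable (fun ω => (P[f|m]) ω * (P[f|m]) ω) P := L2.integrable_mul' he2 he2
  have h1 : Integrable (fun ω => f ω * f ω - 2 * ((P[f|m]) ω * f ω)) P :=
    hff.sub (hef.const_mul 2)
  have e1 : ∫ ω, (f ω - (P[f|m]) ω) ^ 2 ∂P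
      = ∫ ω, (f ω * f ω - 2 * ((P[f|m]) ω * f ω)) + (P[f|m]) ω * (P[f|m]) ω ∂P := by
    congr 1; funext ω; ring
  have e2 : ∫ ω, (f ω * f ω - 2 * ((P[f|m]) ω * f ω)) + (P[f|m]) ω * (P[f|m]) ω ∂P
      = (∫ ω, f ω * f ω - 2 * ((P[f|m]) ω * f ω) ∂P) + ∫ ω, (P[f|m]) ω * (P[f|m]) ω ∂P :=
    integral_add h1 hee
  have e3 : ∫ ω, f ω * f ω - 2 * ((P[f|m]) ω * f ω) ∂P
      = (∫ ω, f ω * f ω ∂P) - ∫ ω, 2 * ((P[f|m]) ω * f ω) ∂P :=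
    integral_sub hff (hef.const_mul 2)
  have hkey := integral_condexp_mul_self hm hf
  rw [e1, e2, e3, integral_const_mul 2 _]
  simp only [sq] at hkey ⊢
  rw [hkey]; ring

lemma integral_sq_condexp_le (hm : m ≤ m0) [IsProbabilityMeasure P]
    {f : Ω → ℝ} (hf : MemLp f 2 P) :
    ∫ ω, ((P[f|m]) ω) ^ 2 ∂P ≤ ∫ ω, f ω ^ 2 ∂P := by
  have h := integral_sq_sub_condexp hm hf
  have h0 : 0 ≤ ∫ ω, (f ω - (P[f|m]) ω) ^ 2 ∂P := integral_nonneg fun ω => sq_nonneg _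
  linarith

lemma integral_sq_sub_condexp_le (hm : m ≤ m0) [IsProbabilityMeasure P]
    {f : Ω → ℝ} (hf : MemLp f 2 P) :
    ∫ ω, (f ω - (P[f|m]) ω) ^ 2 ∂P ≤ ∫ ω, f ω ^ 2 ∂P := by
  have h := integral_sq_sub_condexp hm hf
  have h0 : 0 ≤ ∫ ω, ((P[f|m]) ω) ^ 2 ∂P := integral_nonneg fun ω => sq_nonneg _
  linarith

lemma gram_quad {n : ℕ} (s : Fin n → Ω → ℝ) (hs : ∀ i, MemLp (s i) 2 P) (x : Fin n → ℝ) :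
    x ⬝ᵥ ((Matrix.of fun i j => ∫ ω, s i ω * s j ω ∂P) *ᵥ x)
      = ∫ ω, (∑ i, x i * s i ω) ^ 2 ∂P := by
  have hint : ∀ i j : Fin n, Integrable (fun ω => (x i * s i ω) * (x j * s j ω)) P :=
    fun i j => L2.integrable_mul' ((hs i).const_mul (x i)) ((hs j).const_mul (x j))
  have hrhs : ∫ ω, (∑ i, x i * s i ω) ^ 2 ∂P
      = ∑ i, ∑ j, ∫ ω, (x i * s i ω) * (x j * s j ω) ∂P := by
    rw [show (fun ω => (∑ i, x i * s i ω) ^ 2)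
        = fun ω => ∑ i, ∑ j, (x i * s i ω) * (x j * s j ω) from funext fun ω => by
      rw [sq, Finset.sum_mul_sum]]
    rw [integral_finset_sum _ fun i _ => integrable_finset_sum _ fun j _ => hint i j]
    exact Finset.sum_congr rfl fun i _ => integral_finset_sum _ fun j _ => hint i j
  rw [hrhs]
  simp only [dotProduct, Matrix.mulVec, Matrix.of_apply, Finset.mul_sum]
  refine Finset.sum_congr rfl fun i _ => Finset.sum_congr rfl fun j _ => ?_
  have : ∫ ω, (x i * s i ω) * (x j * s j ω) ∂P
      = x i * (x j * ∫ ω, s i ω * s j ω ∂P) := by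
    rw [show (fun ω => (x i * s i ω) * (x j * s j ω))
        = fun ω => (x i * x j) * (s i ω * s j ω) from funext fun ω => by ring,
      integral_const_mul]
    ring
  rw [this]; ring

lemma gram_isHermitian {n : ℕ} (s : Fin n → Ω → ℝ) :
    (Matrix.of fun i j => ∫ ω, s i ω * s j ω ∂P).IsHermitian := by
  refine Matrix.IsHermitian.ext fun i j => ?_
  simp only [Matrix.of_apply, RCLike.star_def, starRingEnd_apply, star_trivial]
  congr 1; funext ω; ring

lemma gram_posSemidef {n : ℕ} (s : Fin n → Ω → ℝ) (hs : ∀ i, MemLp (s i) 2 P) :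
    (Matrix.of fun i j => ∫ ω, s i ω * s j ω ∂P).PosSemidef := by
  refine Matrix.PosSemidef.of_dotProduct_mulVec_nonneg (gram_isHermitian s) fun x => ?_
  rw [star_trivial, gram_quad s hs x]
  exact integral_nonneg fun ω => sq_nonneg _

lemma gram_sub_posSemidef {n : ℕ} (s t : Fin n → Ω → ℝ)
    (hs : ∀ i, MemLp (s i) 2 P) (ht : ∀ i, MemLp (t i) 2 P)
    (hle : ∀ x : Fin n → ℝ, ∫ ω, (∑ i, x i * t i ω) ^ 2 ∂P ≤ ∫ ω, (∑ i, x i * s i ω) ^ 2 ∂P) :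
    ((Matrix.of fun i j => ∫ ω, s i ω * s j ω ∂P)
      - Matrix.of fun i j => ∫ ω, t i ω * t j ω ∂P).PosSemidef := by
  refine Matrix.PosSemidef.of_dotProduct_mulVec_nonneg
    ((gram_isHermitian s).sub (gram_isHermitian t)) fun x => ?_
  rw [star_trivial, Matrix.sub_mulVec, dotProduct_sub, gram_quad s hs x, gram_quad t ht x]
  exact sub_nonneg.mpr (hle x)

lemma condexp_sum_centered (hm : m ≤ m0) [IsProbabilityMeasure P] {n : ℕ}
    (h : Fin n → Ω → ℝ) (hh : ∀ i, Integrable (h i) P) (x : Fin n → ℝ) (c : Fin n → ℝ) :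
    P[fun ω => ∑ i, x i * (h i ω - c i)|m]
      =ᵐ[P] fun ω => ∑ i, x i * ((P[h i|m]) ω - c i) := by
  haveI : SigmaFinite (P.trim hm) := inferInstance
  set F : Fin n → Ω → ℝ := fun i ω => x i * (h i ω - c i) with hF
  have hFint : ∀ i : Fin n, Integrable (F i) P :=
    fun i => (((hh i).sub (integrable_const (c i))).const_mul (x i))
  have h0 : (fun ω => ∑ i, x i * (h i ω - c i)) = ∑ i, F i := by
    funext ω; simp [hF, Finset.sum_apply]
  have h1 : P[∑ i, F i|m] =ᵐ[P] ∑ i, (fun i' => P[F i'|m]) i :=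
    condExp_finsetSum (fun i _ => hFint i) m
  have h2 : ∀ i : Fin n, P[F i|m] =ᵐ[P] fun ω => x i * ((P[h i|m]) ω - c i) := by
    intro i
    have e1 : F i = x i • (h i - fun _ => c i) := by funext ω; simp [hF, smul_eq_mul]
    have e2 : P[F i|m] =ᵐ[P] x i • P[h i - (fun _ => c i)|m] := by
      rw [e1]; exact condExp_smul (x i) _ m
    have e3 : P[h i - (fun _ => c i)|m]
        =ᵐ[P] P[h i|m] - P[(fun _ => c i)|m] :=
      condExp_sub (hh i) (integrable_const _) m
    have e4 : P[(fun _ : Ω => c i)|m] = fun _ => c i := condExp_const hm _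
    filter_upwards [e2, e3] with ω hω2 hω3
    simp only [hω2, Pi.smul_apply, smul_eq_mul]
    rw [hω3, e4]
    simp
  rw [h0]
  refine h1.trans ?_
  have : ∀ᵐ ω ∂P, ∀ i : Fin n, (P[F i|m]) ω = x i * ((P[h i|m]) ω - c i) :=
    (ae_all_iff).2 fun i => h2 i
  filter_upwards [this] with ω hω
  simp only [Finset.sum_apply]
  exact Finset.sum_congr rfl fun i _ => hω i


end DGSIAux
end Aux2


section Core
namespace DGSIAux
variable {Ω : Type*} {m0 : MeasurableSpace Ω} {P : Measure Ω}

theorem core {n : ℕ} [IsProbabilityMeasure P] {mA mB : MeasurableSpace Ω}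
    (hleA : mA ≤ m0) (hleB : mB ≤ m0) (hBA : ProbabilityTheory.Indep mB mA P)
    (h : Fin n → Ω → ℝ) (hh : ∀ i, MemLp (h i) 2 P) :
    frobNorm (@covMatrix Ω m0 P n fun ω i => (P[h i|mA]) ω) ≤
      frobNorm (@covMatrix Ω m0 P n fun ω i => h i ω - (P[h i|mB]) ω) ∧
    frobNorm (@covMatrix Ω m0 P n fun ω i => h i ω - (P[h i|mB]) ω) ≤
      frobNorm (@covMatrix Ω m0 P n fun ω i => h i ω) := by
  haveI : SigmaFinite (P.trim hleA) := inferInstance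
  haveI : SigmaFinite (P.trim hleB) := inferInstance
  have hhint : ∀ i, Integrable (h i) P := fun i => (hh i).integrable one_le_two
  set M : Fin n → ℝ := fun i => ∫ ω, h i ω ∂P with hM
  set s1 : Fin n → Ω → ℝ := fun i ω => (P[h i|mA]) ω - M i with hs1def
  set s2 : Fin n → Ω → ℝ := fun i ω => h i ω - (P[h i|mB]) ω with hs2def
  set s3 : Fin n → Ω → ℝ := fun i ω => h i ω - M i with hs3def
  have hs1 : ∀ i, MemLp (s1 i) 2 P := fun i => (memL2_condexp' hleA (hh i)).sub (memLp_const _)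
  have hs2 : ∀ i, MemLp (s2 i) 2 P := fun i => (hh i).sub (memL2_condexp' hleB (hh i))
  have hs3 : ∀ i, MemLp (s3 i) 2 P := fun i => (hh i).sub (memLp_const _)
  have hmean3 : ∀ i, ∫ ω, s3 i ω ∂P = 0 := by
    intro i
    simp only [hs3def]
    rw [integral_sub (hhint i) (integrable_const _), integral_const]
    simp [hM]
  have hmean1 : ∀ i, ∫ ω, (P[h i|mA]) ω ∂P = M i := fun i => integral_condExp hleA
  have hmean2 : ∀ i, ∫ ω, (h i ω - (P[h i|mB]) ω) ∂P = 0 := by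
    intro i
    rw [integral_sub (hhint i) integrable_condExp, integral_condExp hleB, sub_self]
  have eD : (@covMatrix Ω m0 P n fun ω i => (P[h i|mA]) ω)
      = Matrix.of fun i j => ∫ ω, s1 i ω * s1 j ω ∂P := by
    ext i j
    simp only [covMatrix, Matrix.of_apply, hs1def]
    rw [hmean1 i, hmean1 j]
  have eDtot : (@covMatrix Ω m0 P n fun ω i => h i ω - (P[h i|mB]) ω)
      = Matrix.of fun i j => ∫ ω, s2 i ω * s2 j ω ∂P := by
    ext i j
    simp only [covMatrix, Matrix.of_apply, hs2def]
    rw [hmean2 i, hmean2 j]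
    simp
  have eSig : (@covMatrix Ω m0 P n fun ω i => h i ω)
      = Matrix.of fun i j => ∫ ω, s3 i ω * s3 j ω ∂P := by
    ext i j
    simp only [covMatrix, Matrix.of_apply, hs3def, hM]
  -- quadratic form inequalities
  have hQ1 : ∀ x : Fin n → ℝ,
      ∫ ω, (∑ i, x i * s2 i ω) ^ 2 ∂P ≤ ∫ ω, (∑ i, x i * s3 i ω) ^ 2 ∂P := by
    intro x
    set f : Ω → ℝ := fun ω => ∑ i, x i * s3 i ω with hfdef
    have hf : MemLp f 2 P := memLp_finset_sum _ fun i _ => (hs3 i).const_mul (x i)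
    have ecB : P[f|mB] =ᵐ[P] fun ω => ∑ i, x i * ((P[h i|mB]) ω - M i) :=
      condexp_sum_centered hleB h hhint x M
    have hape : (fun ω => ∑ i, x i * s2 i ω) =ᵐ[P] fun ω => f ω - (P[f|mB]) ω := by
      filter_upwards [ecB] with ω hω
      rw [hω, hfdef]
      rw [← Finset.sum_sub_distrib]
      refine Finset.sum_congr rfl fun i _ => ?_
      simp only [hs2def, hs3def]
      ring
    calc ∫ ω, (∑ i, x i * s2 i ω) ^ 2 ∂P
        = ∫ ω, (f ω - (P[f|mB]) ω) ^ 2 ∂P :=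
          integral_congr_ae (hape.mono fun ω hω => by dsimp only at hω ⊢; rw [hω])
      _ ≤ ∫ ω, f ω ^ 2 ∂P := integral_sq_sub_condexp_le hleB hf
  have hQ2 : ∀ x : Fin n → ℝ,
      ∫ ω, (∑ i, x i * s1 i ω) ^ 2 ∂P ≤ ∫ ω, (∑ i, x i * s2 i ω) ^ 2 ∂P := by
    intro x
    set f : Ω → ℝ := fun ω => ∑ i, x i * s3 i ω with hfdef
    have hf : MemLp f 2 P := memLp_finset_sum _ fun i _ => (hs3 i).const_mul (x i)
    set w : Ω → ℝ := fun ω => ∑ i, x i * s2 i ω with hwdef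
    have hw : MemLp w 2 P := memLp_finset_sum _ fun i _ => (hs2 i).const_mul (x i)
    have ecA : P[f|mA] =ᵐ[P] fun ω => ∑ i, x i * ((P[h i|mA]) ω - M i) :=
      condexp_sum_centered hleA h hhint x M
    have ecB : P[f|mB] =ᵐ[P] fun ω => ∑ i, x i * ((P[h i|mB]) ω - M i) :=
      condexp_sum_centered hleB h hhint x M
    have hape : w =ᵐ[P] fun ω => f ω - (P[f|mB]) ω := by
      filter_upwards [ecB] with ω hω
      rw [hω, hwdef, hfdef]
      rw [← Finset.sum_sub_distrib]
      refine Finset.sum_congr rfl fun i _ => ?_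
      simp only [hs2def, hs3def]
      ring
    have hintf : ∫ ω, f ω ∂P = 0 := by
      rw [hfdef, integral_finset_sum _ fun i _ => ((hs3 i).integrable one_le_two).const_mul (x i)]
      refine Finset.sum_eq_zero fun i _ => ?_
      rw [integral_const_mul, hmean3 i, mul_zero]
    have hcondB_int : ∫ ω, (P[f|mB]) ω ∂P = 0 := by
      rw [integral_condExp hleB, hintf]
    have hindep_eq : P[P[f|mB]|mA] =ᵐ[P] fun _ => ∫ ω, (P[f|mB]) ω ∂P :=
      condExp_indep_eq hleB hleA stronglyMeasurable_condExp hBA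
    have hsub : P[fun ω => f ω - (P[f|mB]) ω|mA] =ᵐ[P] P[f|mA] - P[P[f|mB]|mA] :=
      condExp_sub (hf.integrable one_le_two) integrable_condExp mA
    have hcondw : P[w|mA] =ᵐ[P] P[f|mA] := by
      have h1 : P[w|mA] =ᵐ[P] P[fun ω => f ω - (P[f|mB]) ω|mA] := condExp_congr_ae hape
      filter_upwards [h1, hsub, hindep_eq] with ω h1ω h2ω h3ω
      rw [h1ω, h2ω, Pi.sub_apply, h3ω, hcondB_int, sub_zero]
    have hs1sum : (fun ω => ∑ i, x i * s1 i ω) =ᵐ[P] P[w|mA] := by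
      filter_upwards [ecA, hcondw] with ω h1ω h2ω
      rw [h2ω, h1ω]
    calc ∫ ω, (∑ i, x i * s1 i ω) ^ 2 ∂P
        = ∫ ω, ((P[w|mA]) ω) ^ 2 ∂P :=
          integral_congr_ae (hs1sum.mono fun ω hω => by dsimp only at hω ⊢; rw [hω])
      _ ≤ ∫ ω, w ω ^ 2 ∂P := integral_sq_condexp_le hleA hw
  have P1 := gram_posSemidef s1 hs1
  have P2 := gram_posSemidef s2 hs2
  have P3 := gram_posSemidef s3 hs3
  have d21 := gram_sub_posSemidef s2 s1 hs2 hs1 hQ2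
  have d32 := gram_sub_posSemidef s3 s2 hs3 hs2 hQ1
  rw [eD, eDtot, eSig]
  exact ⟨frobNorm_le_frobNorm P1 P2 d21, frobNorm_le_frobNorm P2 P3 d32⟩

end DGSIAux
end Core

/-- second-type inequality chain of Proposition 3: for independent inputs
`A`, `B` and a square-integrable output `g(A,B)`, with `D` the covariance matrix of the
componentwise conditional expectation of `g(A,B)` given `σ(A)`,
`Dtot = Cov(g(A,B) − E[g(A,B) | σ(B)])`, and `Σ' = Cov(g(A,B))`, one has
`‖D‖_F ≤ ‖Dtot‖_F ≤ ‖Σ'‖_F`; in particular, if `‖Σ'‖_F > 0`, the second-type dependent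
generalized sensitivity indices satisfy `0 ≤ ‖D‖_F/‖Σ'‖_F ≤ ‖Dtot‖_F/‖Σ'‖_F ≤ 1`. -/

theorem dGSI_second_type_inequalities
    {Ω : Type*} [MeasurableSpace Ω] (P : Measure Ω) [IsProbabilityMeasure P]
    (p q n : ℕ)
    (A : Ω → Fin p → ℝ) (B : Ω → Fin q → ℝ)
    (hA : Measurable A) (hB : Measurable B) (hAB : IndepFun A B P)
    (g : (Fin p → ℝ) × (Fin q → ℝ) → Fin n → ℝ) (hg : Measurable g)
    (hint : MemLp (fun ω => g (A ω, B ω)) 2 P)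
    (D Dtot Sig : Matrix (Fin n) (Fin n) ℝ)
    (hD : D = covMatrix P (fun ω i =>
      (P[fun ω' => g (A ω', B ω') i | MeasurableSpace.comap A inferInstance]) ω))
    (hDtot : Dtot = covMatrix P (fun ω i =>
      g (A ω, B ω) i -
        (P[fun ω' => g (A ω', B ω') i | MeasurableSpace.comap B inferInstance]) ω))
    (hSig : Sig = covMatrix P (fun ω => g (A ω, B ω))) :
    frobNorm D ≤ frobNorm Dtot ∧ frobNorm Dtot ≤ frobNorm Sig ∧
      (0 < frobNorm Sig →
        0 ≤ frobNorm D / frobNorm Sig ∧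
          frobNorm D / frobNorm Sig ≤ frobNorm Dtot / frobNorm Sig ∧
            frobNorm Dtot / frobNorm Sig ≤ 1) := by
  have hBA : ProbabilityTheory.Indep (MeasurableSpace.comap B inferInstance)
      (MeasurableSpace.comap A inferInstance) P :=
    ((ProbabilityTheory.IndepFun_iff_Indep A B P).mp hAB).symm
  have hh : ∀ i, MemLp (fun ω => g (A ω, B ω) i) 2 P := by
    intro i
    refine hint.of_le
      (((measurable_pi_apply i).comp (hg.comp (hA.prodMk hB))).aestronglyMeasurable) ?_
    filter_upwards with ω
    exact norm_le_pi_norm (g (A ω, B ω)) i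
  have hcore := DGSIAux.core (P := P) hA.comap_le hB.comap_le hBA
    (fun i ω => g (A ω, B ω) i) hh
  rw [hD, hDtot, hSig]
  obtain ⟨h12, h23⟩ := hcore
  refine ⟨h12, h23, fun hpos => ?_⟩
  refine ⟨div_nonneg (Real.sqrt_nonneg _) hpos.le, ?_, ?_⟩
  · exact div_le_div_of_nonneg_right h12 hpos.le
  · exact (div_le_one hpos).mpr h23
end

section
/- Let A and B be independent random elements on a probability space, g : ℝ^p × ℝ^q → ℝ^n measurable with E[‖g(A,B)‖²] < ∞, and let Q be an n×n real orthogonal matrix (QQᵀ = QᵀQ = I). Write D(h) := Cov(E[h | σ(A)]), D^tot(h) := Cov(h − E[h | σ(B)]) and Σ(h) := Cov(h) for a square-integrable ℝ^n-valued random vector h. Then for h = g(A,B): D(Qh) = Q D(h) Qᵀ, D^tot(Qh) = Q D^tot(h) Qᵀ, Σ(Qh) = Q Σ(h) Qᵀ, and consequently trace(D(Qh))/trace(Σ(Qh)) = trace(D(h))/trace(Σ(h)), trace(D^tot(Qh))/trace(Σ(Qh)) = trace(D^tot(h))/trace(Σ(h)), ‖D(Qh)‖_F/‖Σ(Qh)‖_F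 = ‖D(h)‖_F/‖Σ(h)‖_F and ‖D^tot(Qh)‖_F/‖Σ(Qh)‖_F = ‖D^tot(h)‖_F/‖Σ(h)‖_F (whenever the denominators are nonzero). -/
open MeasureTheory ProbabilityTheory

/-- First-order covariance matrix `D(h) = Cov(E[h | m])` (componentwise conditional
expectation with respect to the sub-σ-algebra `m`). -/
noncomputable def condCovMatrix {Ω : Type*} [mΩ : MeasurableSpace Ω] (P : Measure Ω)
    (m : MeasurableSpace Ω) {n : ℕ} (h : Ω → Fin n → ℝ) : Matrix (Fin n) (Fin n) ℝ :=
  @covMatrix Ω mΩ P n (fun ω i => (P[fun ω' => h ω' i | m]) ω)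

/-- Total-effect covariance matrix `Dᵗᵒᵗ(h) = Cov(h − E[h | m])`. -/
noncomputable def totCovMatrix {Ω : Type*} [mΩ : MeasurableSpace Ω] (P : Measure Ω)
    (m : MeasurableSpace Ω) {n : ℕ} (h : Ω → Fin n → ℝ) : Matrix (Fin n) (Fin n) ℝ :=
  @covMatrix Ω mΩ P n (fun ω i => h ω i - (P[fun ω' => h ω' i | m]) ω)

/-! Covariance is bilinear, so `Cov(Qh) = Q Cov(h) Qᵀ` for every matrix `Q`, and conditional
expectation is linear, so `E[Qh | m] = Q E[h | m]` almost everywhere and the same identity holds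
for `D` and `Dᵗᵒᵗ`. When `Qᵀ Q = 1`, conjugation by `Q` preserves the trace by cyclicity, hence
also the Frobenius norm, because `(Q S Qᵀ)(Q S Qᵀ)ᵀ = Q (S Sᵀ) Qᵀ`. -/

open Matrix

section Covariance

variable {Ω : Type*} [MeasurableSpace Ω] {P : Measure Ω} {k n : ℕ}

lemma covMatrix_apply (f : Ω → Fin n → ℝ) (i j : Fin n) :
    covMatrix P f i j = cov[fun ω => f ω i, fun ω => f ω j; P] := rfl

lemma covMatrix_congr_ae {f g : Ω → Fin n → ℝ} (hfg : f =ᵐ[P] g) :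
    covMatrix P f = covMatrix P g := by
  have hcomp : ∀ i, (fun ω => f ω i) =ᵐ[P] fun ω => g ω i := fun i => by
    filter_upwards [hfg] with ω hω
    rw [hω]
  ext i j
  simp only [covMatrix_apply, covariance]
  rw [integral_congr_ae (hcomp i), integral_congr_ae (hcomp j)]
  refine integral_congr_ae ?_
  filter_upwards [hcomp i, hcomp j] with ω hi hj
  rw [hi, hj]

lemma covMatrix_mulVec [IsFiniteMeasure P] (Q : Matrix (Fin k) (Fin n) ℝ) {f : Ω → Fin n → ℝ}
    (hf : ∀ k, MemLp (fun ω => f ω k) 2 P) :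
    covMatrix P (fun ω => Q *ᵥ f ω) = Q * covMatrix P f * Qᵀ := by
  ext i j
  simp only [covMatrix_apply, mulVec, dotProduct]
  rw [covariance_fun_sum_fun_sum (fun k => (hf k).const_mul _) (fun l => (hf l).const_mul _)]
  simp only [covariance_const_mul_left, covariance_const_mul_right, mul_apply, transpose_apply,
    Finset.sum_mul, ← covMatrix_apply]
  rw [Finset.sum_comm]
  exact Finset.sum_congr rfl fun k _ => Finset.sum_congr rfl fun l _ => by ring

end Covariance

section ConditionalExpectation

variable {Ω : Type*} {m mΩ : MeasurableSpace Ω} {P : Measure[mΩ] Ω}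

lemma condExp_fun_sum_const_mul {ι : Type*} [Fintype ι] (c : ι → ℝ) {f : ι → Ω → ℝ}
    (hf : ∀ k, Integrable (f k) P) :
    P[fun ω => ∑ k, c k * f k ω | m] =ᵐ[P] fun ω => ∑ k, c k * P[f k | m] ω := by
  have hsum : (fun ω => ∑ k, c k * f k ω) = ∑ k, c k • f k := by
    ext ω
    simp [Finset.sum_apply]
  have hsmul : ∀ᵐ ω ∂P, ∀ k, P[c k • f k | m] ω = c k * P[f k | m] ω :=
    ae_all_iff.2 fun k => condExp_smul (c k) (f k) m
  filter_upwards [hsum ▸ condExp_finsetSum (fun k _ => (hf k).smul (c k)) m, hsmul] with ω hω hk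
  simp only [hω, Finset.sum_apply, hk]

lemma condExp_mulVec_ae {k n : ℕ} (Q : Matrix (Fin k) (Fin n) ℝ) {h : Ω → Fin n → ℝ}
    (hh : ∀ l, Integrable (fun ω => h ω l) P) :
    (fun ω i => P[fun ω' => (Q *ᵥ h ω') i | m] ω)
      =ᵐ[P] fun ω => Q *ᵥ fun l => P[fun ω' => h ω' l | m] ω := by
  have hrow : ∀ i, P[fun ω' => (Q *ᵥ h ω') i | m]
      =ᵐ[P] fun ω => ∑ l, Q i l * P[fun ω' => h ω' l | m] ω :=
    fun i => condExp_fun_sum_const_mul (Q i) hh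
  filter_upwards [ae_all_iff.2 hrow] with ω hω
  ext i
  exact hω i

end ConditionalExpectation

section ConditionalCovariance

variable {Ω : Type*} {m mΩ : MeasurableSpace Ω} {P : Measure[mΩ] Ω} [IsFiniteMeasure P]
  {k n : ℕ} (Q : Matrix (Fin k) (Fin n) ℝ) {h : Ω → Fin n → ℝ}

lemma condCovMatrix_mulVec (hh : ∀ l, MemLp (fun ω => h ω l) 2 P) :
    condCovMatrix P m (fun ω => Q *ᵥ h ω) = Q * condCovMatrix P m h * Qᵀ := by
  rw [condCovMatrix,
    covMatrix_congr_ae (condExp_mulVec_ae Q fun l => (hh l).integrable one_le_two)]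
  exact covMatrix_mulVec Q fun l => (hh l).condExp one_le_two

lemma totCovMatrix_mulVec (hh : ∀ l, MemLp (fun ω => h ω l) 2 P) :
    totCovMatrix P m (fun ω => Q *ᵥ h ω) = Q * totCovMatrix P m h * Qᵀ := by
  have hcentred : (fun ω i => (Q *ᵥ h ω) i - P[fun ω' => (Q *ᵥ h ω') i | m] ω)
      =ᵐ[P] fun ω => Q *ᵥ fun l => h ω l - P[fun ω' => h ω' l | m] ω := by
    filter_upwards [condExp_mulVec_ae (m := m) Q fun l => (hh l).integrable one_le_two]
      with ω hω
    rw [← Pi.sub_def, hω, ← mulVec_sub]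
    rfl
  rw [totCovMatrix, covMatrix_congr_ae hcentred]
  exact covMatrix_mulVec Q fun l => (hh l).sub ((hh l).condExp one_le_two)

end ConditionalCovariance

lemma Matrix.trace_mul_mul_transpose_of_transpose_mul_self {R k n : Type*} [CommSemiring R]
    [Fintype k] [Fintype n] [DecidableEq n] {Q : Matrix k n R} (hQ : Qᵀ * Q = 1)
    (S : Matrix n n R) : (Q * S * Qᵀ).trace = S.trace := by
  rw [trace_mul_cycle, hQ, Matrix.one_mul]

lemma frobNorm_mul_mul_transpose_of_transpose_mul_self {k n : ℕ} {Q : Matrix (Fin k) (Fin n) ℝ}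
    (hQ : Qᵀ * Q = 1) (S : Matrix (Fin n) (Fin n) ℝ) : frobNorm (Q * S * Qᵀ) = frobNorm S := by
  have hgram : Q * S * Qᵀ * (Q * S * Qᵀ)ᵀ = Q * (S * Sᵀ) * Qᵀ := by
    simp only [transpose_mul, transpose_transpose, Matrix.mul_assoc]
    rw [← Matrix.mul_assoc Qᵀ, hQ, Matrix.one_mul]
  rw [frobNorm, frobNorm, hgram, trace_mul_mul_transpose_of_transpose_mul_self hQ]

theorem dGSI_orthogonal_invariance_general
    {Ω : Type*} [MeasurableSpace Ω] (P : Measure Ω) [IsProbabilityMeasure P]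
    (p q n : ℕ)
    (A : Ω → Fin p → ℝ) (B : Ω → Fin q → ℝ)
    (g : (Fin p → ℝ) × (Fin q → ℝ) → Fin n → ℝ)
    (hint : MemLp (fun ω => g (A ω, B ω)) 2 P)
    (Q : Matrix (Fin n) (Fin n) ℝ) (hQ2 : Q.transpose * Q = 1)
    (h Qh : Ω → Fin n → ℝ)
    (hh : h = fun ω => g (A ω, B ω)) (hQh : Qh = fun ω => Q.mulVec (h ω)) :
    condCovMatrix P (MeasurableSpace.comap A inferInstance) Qh
        = Q * condCovMatrix P (MeasurableSpace.comap A inferInstance) h * Q.transpose ∧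
    totCovMatrix P (MeasurableSpace.comap B inferInstance) Qh
        = Q * totCovMatrix P (MeasurableSpace.comap B inferInstance) h * Q.transpose ∧
    covMatrix P Qh = Q * covMatrix P h * Q.transpose ∧
    ((covMatrix P Qh).trace ≠ 0 → (covMatrix P h).trace ≠ 0 →
      (condCovMatrix P (MeasurableSpace.comap A inferInstance) Qh).trace
          / (covMatrix P Qh).trace
        = (condCovMatrix P (MeasurableSpace.comap A inferInstance) h).trace
          / (covMatrix P h).trace) ∧
    ((covMatrix P Qh).trace ≠ 0 → (covMatrix P h).trace ≠ 0 →
      (totCovMatrix P (MeasurableSpace.comap B inferInstance) Qh).trace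
          / (covMatrix P Qh).trace
        = (totCovMatrix P (MeasurableSpace.comap B inferInstance) h).trace
          / (covMatrix P h).trace) ∧
    (frobNorm (covMatrix P Qh) ≠ 0 → frobNorm (covMatrix P h) ≠ 0 →
      frobNorm (condCovMatrix P (MeasurableSpace.comap A inferInstance) Qh)
          / frobNorm (covMatrix P Qh)
        = frobNorm (condCovMatrix P (MeasurableSpace.comap A inferInstance) h)
          / frobNorm (covMatrix P h)) ∧
    (frobNorm (covMatrix P Qh) ≠ 0 → frobNorm (covMatrix P h) ≠ 0 →
      frobNorm (totCovMatrix P (MeasurableSpace.comap B inferInstance) Qh)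
          / frobNorm (covMatrix P Qh)
        = frobNorm (totCovMatrix P (MeasurableSpace.comap B inferInstance) h)
          / frobNorm (covMatrix P h)) := by
  have hcomp : ∀ i, MemLp (fun ω => h ω i) 2 P := hh ▸ hint.eval
  have hcond := condCovMatrix_mulVec (m := MeasurableSpace.comap A inferInstance) Q hcomp
  have htot := totCovMatrix_mulVec (m := MeasurableSpace.comap B inferInstance) Q hcomp
  have hcov := covMatrix_mulVec Q hcomp
  subst hQh
  simp only [hcond, htot, hcov, trace_mul_mul_transpose_of_transpose_mul_self hQ2,
    frobNorm_mul_mul_transpose_of_transpose_mul_self hQ2, implies_true, and_self]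

/-- orthogonal invariance of Proposition 3: under an orthogonal
transformation `Q` of the outputs, `D(Qh) = Q D(h) Qᵀ`, `Dᵗᵒᵗ(Qh) = Q Dᵗᵒᵗ(h) Qᵀ`,
`Σ(Qh) = Q Σ(h) Qᵀ`, and consequently both types of dependent generalized sensitivity
indices (trace ratios and Frobenius-norm ratios) are unchanged whenever the denominators
are nonzero. -/
theorem dGSI_orthogonal_invariance
    {Ω : Type*} [MeasurableSpace Ω] (P : Measure Ω) [IsProbabilityMeasure P]
    (p q n : ℕ)
    (A : Ω → Fin p → ℝ) (B : Ω → Fin q → ℝ)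
    (hA : Measurable A) (hB : Measurable B) (hAB : IndepFun A B P)
    (g : (Fin p → ℝ) × (Fin q → ℝ) → Fin n → ℝ) (hg : Measurable g)
    (hint : MemLp (fun ω => g (A ω, B ω)) 2 P)
    (Q : Matrix (Fin n) (Fin n) ℝ) (hQ1 : Q * Q.transpose = 1) (hQ2 : Q.transpose * Q = 1)
    (h Qh : Ω → Fin n → ℝ)
    (hh : h = fun ω => g (A ω, B ω)) (hQh : Qh = fun ω => Q.mulVec (h ω)) :
    condCovMatrix P (MeasurableSpace.comap A inferInstance) Qh
        = Q * condCovMatrix P (MeasurableSpace.comap A inferInstance) h * Q.transpose ∧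
    totCovMatrix P (MeasurableSpace.comap B inferInstance) Qh
        = Q * totCovMatrix P (MeasurableSpace.comap B inferInstance) h * Q.transpose ∧
    covMatrix P Qh = Q * covMatrix P h * Q.transpose ∧
    ((covMatrix P Qh).trace ≠ 0 → (covMatrix P h).trace ≠ 0 →
      (condCovMatrix P (MeasurableSpace.comap A inferInstance) Qh).trace
          / (covMatrix P Qh).trace
        = (condCovMatrix P (MeasurableSpace.comap A inferInstance) h).trace
          / (covMatrix P h).trace) ∧
    ((covMatrix P Qh).trace ≠ 0 → (covMatrix P h).trace ≠ 0 →
      (totCovMatrix P (MeasurableSpace.comap B inferInstance) Qh).trace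
          / (covMatrix P Qh).trace
        = (totCovMatrix P (MeasurableSpace.comap B inferInstance) h).trace
          / (covMatrix P h).trace) ∧
    (frobNorm (covMatrix P Qh) ≠ 0 → frobNorm (covMatrix P h) ≠ 0 →
      frobNorm (condCovMatrix P (MeasurableSpace.comap A inferInstance) Qh)
          / frobNorm (covMatrix P Qh)
        = frobNorm (condCovMatrix P (MeasurableSpace.comap A inferInstance) h)
          / frobNorm (covMatrix P h)) ∧
    (frobNorm (covMatrix P Qh) ≠ 0 → frobNorm (covMatrix P h) ≠ 0 →
      frobNorm (totCovMatrix P (MeasurableSpace.comap B inferInstance) Qh)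
          / frobNorm (covMatrix P Qh)
        = frobNorm (totCovMatrix P (MeasurableSpace.comap B inferInstance) h)
          / frobNorm (covMatrix P h)) :=
  dGSI_orthogonal_invariance_general P p q n A B g hint Q hQ2 h Qh hh hQh
end

section
/- Let A, B, B′ be mutually independent random elements on a probability space with B′ identically distributed as B (values in ℝ^p and ℝ^q respectively), and let g : ℝ^p × ℝ^q → ℝ^n be measurable with E[‖g(A,B)‖²] < ∞. Then E[g(A,B) g(A,B′)ᵀ] − E[g(A,B)] E[g(A,B)]ᵀ = Cov(E[g(A,B) | σ(A)]), i.e. the pick-freeze cross-moment matrix with the A-block frozen equals the first-order covariance matrix of the block A. -/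
open MeasureTheory ProbabilityTheory

/-- Proposition 5(i): for mutually independent `A`, `B`, `B'` with `B'`
distributed as `B` and a square-integrable output `g(A,B)`, the pick-freeze cross-moment
matrix with the `A`-block frozen equals the first-order covariance matrix of the block `A`:
`E[g(A,B) g(A,B')ᵀ] − E[g(A,B)] E[g(A,B)]ᵀ = Cov(E[g(A,B) | σ(A)])`. -/
theorem pick_freeze_first_order_covariance
    {Ω : Type*} [MeasurableSpace Ω] (P : Measure Ω) [IsProbabilityMeasure P]
    (p q n : ℕ)
    (A : Ω → Fin p → ℝ) (B B' : Ω → Fin q → ℝ)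
    (hA : Measurable A) (hB : Measurable B) (hB' : Measurable B')
    -- mutual independence of A, B, B':
    (hindep1 : IndepFun A (fun ω => (B ω, B' ω)) P)
    (hindep2 : IndepFun B B' P)
    (hBB' : IdentDistrib B' B P P)
    (g : (Fin p → ℝ) × (Fin q → ℝ) → Fin n → ℝ) (hg : Measurable g)
    (hint : MemLp (fun ω => g (A ω, B ω)) 2 P) :
    ∀ i j : Fin n,
      (∫ ω, g (A ω, B ω) i * g (A ω, B' ω) j ∂P)
          - (∫ ω, g (A ω, B ω) i ∂P) * (∫ ω, g (A ω, B ω) j ∂P)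
        = covMatrix P (fun ω k =>
            (P[fun ω' => g (A ω', B ω') k | MeasurableSpace.comap A inferInstance]) ω)
            i j := by
  classical
  intro i j
  set μ := P.map A with hμdef
  set ν := P.map B with hνdef
  have hBBmeas : Measurable fun ω => (B ω, B' ω) := hB.prodMk hB'
  have hABmeas : Measurable fun ω => (A ω, B ω) := hA.prodMk hB
  have hTmeas : Measurable fun ω => (A ω, (B ω, B' ω)) := hA.prodMk hBBmeas
  haveI : IsProbabilityMeasure μ := Measure.isProbabilityMeasure_map hA.aemeasurable
  haveI : IsProbabilityMeasure ν := Measure.isProbabilityMeasure_map hB.aemeasurable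
  -- laws
  have hlawBB' : P.map (fun ω => (B ω, B' ω)) = ν.prod ν := by
    rw [(indepFun_iff_map_prod_eq_prod_map_map hB.aemeasurable hB'.aemeasurable).mp hindep2,
      hBB'.map_eq]
  have hlawT : P.map (fun ω => (A ω, (B ω, B' ω))) = μ.prod (ν.prod ν) := by
    rw [(indepFun_iff_map_prod_eq_prod_map_map hA.aemeasurable hBBmeas.aemeasurable).mp hindep1,
      hlawBB']
  have hAB : IndepFun A B P := hindep1.comp measurable_id measurable_fst
  have hlawAB : P.map (fun ω => (A ω, B ω)) = μ.prod ν :=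
    (indepFun_iff_map_prod_eq_prod_map_map hA.aemeasurable hB.aemeasurable).mp hAB
  -- components of g
  have hgk : ∀ k, Measurable fun x : (Fin p → ℝ) × (Fin q → ℝ) => g x k :=
    fun k => (measurable_pi_apply k).comp hg
  have hF2 : MemLp g 2 (μ.prod ν) := by
    rw [← hlawAB]
    exact (memLp_map_measure_iff hg.aestronglyMeasurable hABmeas.aemeasurable).mpr hint
  have hFk2 : ∀ k, MemLp (fun x => g x k) 2 (μ.prod ν) := fun k =>
    MemLp.of_le hF2 (hgk k).aestronglyMeasurable
      (Filter.Eventually.of_forall fun x => norm_le_pi_norm (g x) k)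
  have hFkInt : ∀ k, Integrable (fun x => g x k) (μ.prod ν) :=
    fun k => (hFk2 k).integrable one_le_two
  have hFkSq : ∀ k, Integrable (fun x => g x k ^ 2) (μ.prod ν) :=
    fun k => (hFk2 k).integrable_sq
  -- the conditional mean function φ
  set φ : Fin n → (Fin p → ℝ) → ℝ := fun k a => ∫ b, g (a, b) k ∂ν with hφdef
  have hφmeas : ∀ k, StronglyMeasurable (φ k) :=
    fun k => (hgk k).stronglyMeasurable.integral_prod_right'
  have hφint : ∀ k, Integrable (φ k) μ := fun k => (hFkInt k).integral_prod_left
  -- components over P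
  have hGk2 : ∀ k, MemLp (fun ω => g (A ω, B ω) k) 2 P := fun k =>
    MemLp.of_le hint ((hgk k).comp hABmeas).aestronglyMeasurable
      (Filter.Eventually.of_forall fun ω => norm_le_pi_norm (g (A ω, B ω)) k)
  have hGint : ∀ k, Integrable (fun ω => g (A ω, B ω) k) P :=
    fun k => (hGk2 k).integrable one_le_two
  -- means
  have hmean : ∀ k, ∫ ω, g (A ω, B ω) k ∂P = ∫ a, φ k a ∂μ := by
    intro k
    have h1 : ∫ x, g x k ∂(μ.prod ν) = ∫ ω, g (A ω, B ω) k ∂P := by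
      rw [← hlawAB, integral_map hABmeas.aemeasurable]
      exact (hgk k).aestronglyMeasurable
    rw [← h1, integral_prod _ (hFkInt k)]
  -- conditional expectation identification
  have hm : MeasurableSpace.comap A inferInstance ≤ _ := hA.comap_le
  haveI : SigmaFinite (P.trim hm) := by infer_instance
  have hφAmeas : ∀ k, Measurable fun ω => φ k (A ω) :=
    fun k => (hφmeas k).measurable.comp hA
  have hφAint : ∀ k, Integrable (fun ω => φ k (A ω)) P := by
    intro k
    have := (integrable_map_measure (hφmeas k).aestronglyMeasurable hA.aemeasurable).mp
      (hμdef ▸ hφint k)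
    exact this
  have hcond : ∀ k, (fun ω => φ k (A ω))
      =ᵐ[P] P[fun ω' => g (A ω', B ω') k | MeasurableSpace.comap A inferInstance] := by
    intro k
    refine ae_eq_condExp_of_forall_setIntegral_eq hm (hGint k)
      (fun s _ _ => (hφAint k).integrableOn) (fun s hs _ => ?_) ?_
    · obtain ⟨t, ht, rfl⟩ := hs
      have hpre : A ⁻¹' t = (fun ω => (A ω, B ω)) ⁻¹' (t ×ˢ Set.univ) := by
        ext ω; simp
      have h1 : ∫ ω in A ⁻¹' t, φ k (A ω) ∂P = ∫ a in t, φ k a ∂μ := by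
        rw [hμdef, setIntegral_map ht (hφmeas k).aestronglyMeasurable hA.aemeasurable]
      have h2 : ∫ ω in A ⁻¹' t, g (A ω, B ω) k ∂P
          = ∫ x in t ×ˢ Set.univ, g x k ∂(μ.prod ν) := by
        rw [← hlawAB, setIntegral_map (ht.prod MeasurableSet.univ)
          (hgk k).aestronglyMeasurable hABmeas.aemeasurable, ← hpre]
      have h3 : ∫ x in t ×ˢ Set.univ, g x k ∂(μ.prod ν) = ∫ a in t, φ k a ∂μ := by
        rw [setIntegral_prod _ ((hFkInt k).integrableOn)]
        simp only [Measure.restrict_univ]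
        rfl
      rw [h1, h2, h3]
    · exact StronglyMeasurable.aestronglyMeasurable
        (((hφmeas k).comp_measurable (Measurable.of_comap_le le_rfl)))
  -- pick-freeze cross moment
  have habs : ∀ a b : ℝ, ‖a * b‖ ≤ (a ^ 2 + b ^ 2) / 2 := by
    intro a b
    rw [Real.norm_eq_abs, abs_mul]
    nlinarith [sq_nonneg (|a| - |b|), sq_abs a, sq_abs b, abs_nonneg a, abs_nonneg b]
  have hproj1 : MeasurePreserving
      (fun x : (Fin p → ℝ) × ((Fin q → ℝ) × (Fin q → ℝ)) => (x.1, x.2.1))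
      (μ.prod (ν.prod ν)) (μ.prod ν) := by
    have hfst : MeasurePreserving (Prod.fst : (Fin q → ℝ) × (Fin q → ℝ) → _)
        (ν.prod ν) ν := ⟨measurable_fst, by simp⟩
    exact (MeasurePreserving.id μ).prod hfst
  have hproj2 : MeasurePreserving
      (fun x : (Fin p → ℝ) × ((Fin q → ℝ) × (Fin q → ℝ)) => (x.1, x.2.2))
      (μ.prod (ν.prod ν)) (μ.prod ν) := by
    have hsnd : MeasurePreserving (Prod.snd : (Fin q → ℝ) × (Fin q → ℝ) → _)
        (ν.prod ν) ν := ⟨measurable_snd, by simp⟩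
    exact (MeasurePreserving.id μ).prod hsnd
  have hH : Integrable
      (fun x : (Fin p → ℝ) × ((Fin q → ℝ) × (Fin q → ℝ)) =>
        g (x.1, x.2.1) i * g (x.1, x.2.2) j) (μ.prod (ν.prod ν)) := by
    have h1 : Integrable (fun x : (Fin p → ℝ) × ((Fin q → ℝ) × (Fin q → ℝ)) =>
        g (x.1, x.2.1) i ^ 2) (μ.prod (ν.prod ν)) :=
      (hproj1.integrable_comp ((hgk i).pow_const 2).aestronglyMeasurable).mpr (hFkSq i)
    have h2 : Integrable (fun x : (Fin p → ℝ) × ((Fin q → ℝ) × (Fin q → ℝ)) =>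
        g (x.1, x.2.2) j ^ 2) (μ.prod (ν.prod ν)) :=
      (hproj2.integrable_comp ((hgk j).pow_const 2).aestronglyMeasurable).mpr (hFkSq j)
    refine Integrable.mono' ((h1.add h2).div_const 2) ?_
      (Filter.Eventually.of_forall fun x => habs _ _)
    exact (((hgk i).comp (measurable_fst.prodMk (measurable_fst.comp measurable_snd))).mul
      ((hgk j).comp (measurable_fst.prodMk (measurable_snd.comp measurable_snd)))).aestronglyMeasurable
  have hPF : ∫ ω, g (A ω, B ω) i * g (A ω, B' ω) j ∂P = ∫ a, φ i a * φ j a ∂μ := by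
    have h0 : ∫ ω, g (A ω, B ω) i * g (A ω, B' ω) j ∂P
        = ∫ x, g (x.1, x.2.1) i * g (x.1, x.2.2) j ∂(μ.prod (ν.prod ν)) := by
      rw [← hlawT, integral_map hTmeas.aemeasurable]
      exact (((hgk i).comp (measurable_fst.prodMk (measurable_fst.comp measurable_snd))).mul
        ((hgk j).comp (measurable_fst.prodMk (measurable_snd.comp measurable_snd)))).aestronglyMeasurable
    rw [h0, integral_prod _ hH]
    refine integral_congr_ae (Filter.Eventually.of_forall fun a => ?_)
    exact integral_prod_mul (fun b => g (a, b) i) (fun b' => g (a, b') j)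
  have hφij : Integrable (fun a => φ i a * φ j a) μ := by
    refine hH.integral_prod_left.congr (Filter.Eventually.of_forall fun a => ?_)
    exact integral_prod_mul (fun b => g (a, b) i) (fun b' => g (a, b') j)
  -- conclusion
  set ci := ∫ a, φ i a ∂μ with hci
  set cj := ∫ a, φ j a ∂μ with hcj
  have hcondint : ∀ k, ∫ ω,
      (P[fun ω' => g (A ω', B ω') k | MeasurableSpace.comap A inferInstance]) ω ∂P
      = ∫ a, φ k a ∂μ := by
    intro k
    rw [integral_condExp hm]
    exact hmean k
  have hRHS : covMatrix P (fun ω k =>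
      (P[fun ω' => g (A ω', B ω') k | MeasurableSpace.comap A inferInstance]) ω) i j
      = ∫ a, (φ i a - ci) * (φ j a - cj) ∂μ := by
    unfold covMatrix
    rw [hcondint i, hcondint j]
    have h1 : ∫ ω, ((P[fun ω' => g (A ω', B ω') i |
          MeasurableSpace.comap A inferInstance]) ω - ci)
        * ((P[fun ω' => g (A ω', B ω') j | MeasurableSpace.comap A inferInstance]) ω - cj) ∂P
        = ∫ ω, (φ i (A ω) - ci) * (φ j (A ω) - cj) ∂P := by
      refine integral_congr_ae ?_
      filter_upwards [hcond i, hcond j] with ω h1 h2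
      rw [← h1, ← h2]
    have h2 : ∫ a, (φ i a - ci) * (φ j a - cj) ∂μ
        = ∫ ω, (φ i (A ω) - ci) * (φ j (A ω) - cj) ∂P := by
      rw [hμdef, integral_map hA.aemeasurable]
      exact ((((hφmeas i).sub stronglyMeasurable_const).mul
        ((hφmeas j).sub stronglyMeasurable_const))).aestronglyMeasurable
    rw [h1, h2]
  have hexp : ∫ a, (φ i a - ci) * (φ j a - cj) ∂μ
      = ∫ a, φ i a * φ j a ∂μ - ci * cj := by
    have heq : (fun a => (φ i a - ci) * (φ j a - cj))
        = fun a => (φ i a * φ j a - (ci * φ j a + cj * φ i a)) + ci * cj := by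
      funext a; ring
    have hint3 : Integrable (fun a => ci * φ j a) μ := (hφint j).const_mul ci
    have hint4 : Integrable (fun a => cj * φ i a) μ := (hφint i).const_mul cj
    have hint2 : Integrable (fun a => ci * φ j a + cj * φ i a) μ := hint3.add hint4
    have hint1 : Integrable (fun a => φ i a * φ j a - (ci * φ j a + cj * φ i a)) μ :=
      hφij.sub hint2
    rw [heq, integral_add hint1 (integrable_const _),
      integral_sub hφij hint2, integral_add hint3 hint4,
      integral_const_mul, integral_const_mul, integral_const, ← hci, ← hcj]
    simp [measure_univ]
    ring
  rw [hRHS, hexp, hPF, hmean i, hmean j]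
end

section
/- Let A, A′, B be mutually independent random elements on a probability space with A′ identically distributed as A (values in ℝ^p and ℝ^q respectively), and let g : ℝ^p × ℝ^q → ℝ^n be measurable with E[‖g(A,B)‖²] < ∞. Then Cov(g(A,B) − E[g(A,B) | σ(B)]) = E[g(A,B) g(A,B)ᵀ] − E[g(A,B) g(A′,B)ᵀ], i.e. the total-effect covariance matrix of the block A equals the second-moment matrix of the outputs minus the pick-freeze cross-moment matrix in which the A-block is replaced by an independent copy. -/
open MeasureTheory ProbabilityTheory

section CondExp

variable {Ω : Type*} {m mΩ : MeasurableSpace Ω} {μ : Measure Ω}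

theorem integral_mul_condExp_of_aestronglyMeasurable (hm : m ≤ mΩ) [SigmaFinite (μ.trim hm)]
    {f g : Ω → ℝ} (hg : AEStronglyMeasurable[m] g μ) (hgf : Integrable (g * f) μ)
    (hf : Integrable f μ) :
    ∫ ω, g ω * μ[f | m] ω ∂μ = ∫ ω, g ω * f ω ∂μ :=
  calc ∫ ω, g ω * μ[f | m] ω ∂μ = ∫ ω, μ[g * f | m] ω ∂μ :=
        integral_congr_ae (condExp_mul_of_aestronglyMeasurable_left hg hgf hf).symm
    _ = ∫ ω, g ω * f ω ∂μ := integral_condExp hm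

theorem integral_condExp_mul_condExp (hm : m ≤ mΩ) [IsFiniteMeasure μ] {f g : Ω → ℝ}
    (hf : MemLp f 2 μ) (hg : MemLp g 2 μ) :
    ∫ ω, μ[f | m] ω * μ[g | m] ω ∂μ = ∫ ω, μ[f | m] ω * g ω ∂μ :=
  integral_mul_condExp_of_aestronglyMeasurable hm stronglyMeasurable_condExp.aestronglyMeasurable
    ((hf.condExp one_le_two).integrable_mul hg) (hg.integrable one_le_two)

theorem integral_sub_condExp (hm : m ≤ mΩ) [SigmaFinite (μ.trim hm)] {f : Ω → ℝ}
    (hf : Integrable f μ) : ∫ ω, (f ω - μ[f | m] ω) ∂μ = 0 := by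
  rw [integral_sub hf integrable_condExp, integral_condExp hm, sub_self]

theorem integral_sub_condExp_mul_sub_condExp (hm : m ≤ mΩ) [IsFiniteMeasure μ]
    {f g : Ω → ℝ} (hf : MemLp f 2 μ) (hg : MemLp g 2 μ) :
    ∫ ω, (f ω - μ[f | m] ω) * (g ω - μ[g | m] ω) ∂μ
      = ∫ ω, f ω * g ω ∂μ - ∫ ω, μ[f | m] ω * μ[g | m] ω ∂μ := by
  have hf' : MemLp (μ[f | m]) 2 μ := hf.condExp one_le_two
  have hg' : MemLp (μ[g | m]) 2 μ := hg.condExp one_le_two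
  have hcross : ∫ ω, μ[f | m] ω * g ω ∂μ = ∫ ω, μ[f | m] ω * μ[g | m] ω ∂μ :=
    (integral_condExp_mul_condExp hm hf hg).symm
  have hcross' : ∫ ω, f ω * μ[g | m] ω ∂μ = ∫ ω, μ[f | m] ω * μ[g | m] ω ∂μ := by
    simp_rw [mul_comm (f _), mul_comm (μ[f | m] _)]
    exact (integral_condExp_mul_condExp hm hg hf).symm
  have hint {u v : Ω → ℝ} (hu : MemLp u 2 μ) (hv : MemLp v 2 μ) :
      Integrable (fun ω => u ω * v ω) μ := hu.integrable_mul hv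
  simp_rw [sub_mul, mul_sub]
  rw [integral_sub ((hint hf hg).sub' (hint hf hg')) ((hint hf' hg).sub' (hint hf' hg')),
    integral_sub (hint hf hg) (hint hf hg'), integral_sub (hint hf' hg) (hint hf' hg'),
    hcross, hcross']
  ring

theorem covMatrix_sub_condExp (hm : m ≤ mΩ) [IsFiniteMeasure μ] {n : ℕ}
    {X : Ω → Fin n → ℝ} (hX : ∀ k, MemLp (fun ω => X ω k) 2 μ) (i j : Fin n) :
    covMatrix μ (fun ω k => X ω k - μ[fun ω' => X ω' k | m] ω) i j
      = ∫ ω, X ω i * X ω j ∂μ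
        - ∫ ω, μ[fun ω' => X ω' i | m] ω * μ[fun ω' => X ω' j | m] ω ∂μ := by
  simp only [covMatrix]
  rw [integral_sub_condExp hm ((hX i).integrable one_le_two),
    integral_sub_condExp hm ((hX j).integrable one_le_two)]
  simp only [sub_zero]
  exact integral_sub_condExp_mul_sub_condExp hm (hX i) (hX j)

end CondExp

theorem ProbabilityTheory.IdentDistrib.prodMk_of_indepFun {Ω α β : Type*}
    [MeasurableSpace Ω] [MeasurableSpace α] [MeasurableSpace β] {P : Measure Ω}
    [IsFiniteMeasure P] {X X' : Ω → α} {Y : Ω → β}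
    (hXX' : IdentDistrib X' X P P) (hY : AEMeasurable Y P) (hX'Y : IndepFun X' Y P)
    (hXY : IndepFun X Y P) :
    IdentDistrib (fun ω => (X' ω, Y ω)) (fun ω => (X ω, Y ω)) P P :=
  ⟨hXX'.aemeasurable_fst.prodMk hY, hXX'.aemeasurable_snd.prodMk hY, by
    rw [(indepFun_iff_map_prod_eq_prod_map_map hXX'.aemeasurable_fst hY).mp hX'Y,
      (indepFun_iff_map_prod_eq_prod_map_map hXX'.aemeasurable_snd hY).mp hXY, hXX'.map_eq]⟩

section Independence

variable {Ω α β : Type*} [MeasurableSpace Ω] [MeasurableSpace α] [StandardBorelSpace α]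
  [Nonempty α] [MeasurableSpace β] {P : Measure Ω} [IsFiniteMeasure P]

theorem condExp_comp_ae_eq_integral_of_indepFun {X : Ω → α} {Y : Ω → β}
    (hX : AEMeasurable X P) (hY : Measurable Y) (hXY : IndepFun X Y P) {f : α × β → ℝ}
    (hf : Measurable f) (hfXY : Integrable (fun ω => f (X ω, Y ω)) P) :
    P[fun ω => f (X ω, Y ω) | MeasurableSpace.comap Y inferInstance]
      =ᵐ[P] fun ω => ∫ x, f (x, Y ω) ∂(P.map X) := by
  have hdistrib : condDistrib X Y P =ᵐ[P.map Y] Kernel.const β (P.map X) := by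
    refine condDistrib_ae_eq_of_measure_eq_compProd Y hX ?_
    rw [Measure.compProd_const,
      (indepFun_iff_map_prod_eq_prod_map_map hY.aemeasurable hX).mp hXY.symm]
  filter_upwards [condExp_prod_ae_eq_integral_condDistrib (f := fun z => f z.swap) hY
    hX (hf.comp measurable_swap).stronglyMeasurable hfXY,
    ae_of_ae_map hY.aemeasurable hdistrib] with ω hcond hconst
  simpa only [Prod.swap_prod_mk, hconst, Kernel.const_apply] using hcond

theorem condExp_comp_ae_eq_of_identDistrib {X X' : Ω → α} {Y : Ω → β}
    (hY : Measurable Y) (hXY : IndepFun X Y P) (hX'Y : IndepFun X' Y P)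
    (hXX' : IdentDistrib X' X P P) {f : α × β → ℝ}
    (hf : Measurable f) (hfXY : Integrable (fun ω => f (X ω, Y ω)) P) :
    P[fun ω => f (X' ω, Y ω) | MeasurableSpace.comap Y inferInstance]
      =ᵐ[P] P[fun ω => f (X ω, Y ω) | MeasurableSpace.comap Y inferInstance] := by
  have hfX'Y : Integrable (fun ω => f (X' ω, Y ω)) P :=
    ((hXX'.prodMk_of_indepFun hY.aemeasurable hX'Y hXY).comp hf).symm.integrable_snd hfXY
  refine (condExp_comp_ae_eq_integral_of_indepFun hXX'.aemeasurable_fst hY hX'Y hf hfX'Y).trans ?_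
  rw [hXX'.map_eq]
  exact (condExp_comp_ae_eq_integral_of_indepFun hXX'.aemeasurable_snd hY hXY hf hfXY).symm

theorem integral_comp_mul_comp_eq_integral_condExp_mul_comp {γ : Type*} [MeasurableSpace γ]
    {X : Ω → α} {W : Ω → γ} {Y : Ω → β} (hX : AEMeasurable X P) (hW : Measurable W)
    (hY : Measurable Y) (hindep : IndepFun X (fun ω => (W ω, Y ω)) P) {f : α × β → ℝ}
    {u : γ × β → ℝ} (hf : Measurable f) (hu : Measurable u)
    (hf2 : MemLp (fun ω => f (X ω, Y ω)) 2 P) (hu2 : MemLp (fun ω => u (W ω, Y ω)) 2 P) :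
    ∫ ω, f (X ω, Y ω) * u (W ω, Y ω) ∂P
      = ∫ ω, P[fun ω => f (X ω, Y ω) | MeasurableSpace.comap Y inferInstance] ω
          * u (W ω, Y ω) ∂P := by
  have hcondY := condExp_comp_ae_eq_integral_of_indepFun hX hY
    (hindep.comp measurable_id measurable_snd) hf (hf2.integrable one_le_two)
  have hcondWY := condExp_comp_ae_eq_integral_of_indepFun (f := fun z => f (z.1, z.2.2)) hX
    (hW.prodMk hY) hindep (hf.comp (measurable_fst.prodMk (measurable_snd.comp measurable_snd)))
    (hf2.integrable one_le_two)
  calc ∫ ω, f (X ω, Y ω) * u (W ω, Y ω) ∂P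
      = ∫ ω, u (W ω, Y ω) * f (X ω, Y ω) ∂P := by simp_rw [mul_comm]
    _ = ∫ ω, u (W ω, Y ω) * P[fun ω => f (X ω, Y ω) |
          MeasurableSpace.comap (fun ω => (W ω, Y ω)) inferInstance] ω ∂P :=
        (integral_mul_condExp_of_aestronglyMeasurable (hW.prodMk hY).comap_le
          (hu.comp (comap_measurable _)).aestronglyMeasurable
          (hu2.integrable_mul hf2) (hf2.integrable one_le_two)).symm
    _ = ∫ ω, P[fun ω => f (X ω, Y ω) | MeasurableSpace.comap Y inferInstance] ω
          * u (W ω, Y ω) ∂P := by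
        refine integral_congr_ae ?_
        filter_upwards [hcondY, hcondWY] with ω hω hω'
        rw [hω, hω', mul_comm]

theorem integral_comp_mul_comp_eq_integral_condExp_mul_condExp {X X' : Ω → α} {Y : Ω → β}
    (hX' : Measurable X') (hY : Measurable Y)
    (hindep1 : IndepFun X (fun ω => (X' ω, Y ω)) P) (hindep2 : IndepFun X' Y P)
    (hXX' : IdentDistrib X' X P P) {f h : α × β → ℝ} (hf : Measurable f) (hh : Measurable h)
    (hf2 : MemLp (fun ω => f (X ω, Y ω)) 2 P) (hh2 : MemLp (fun ω => h (X ω, Y ω)) 2 P) :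
    ∫ ω, f (X ω, Y ω) * h (X' ω, Y ω) ∂P
      = ∫ ω, P[fun ω => f (X ω, Y ω) | MeasurableSpace.comap Y inferInstance] ω
          * P[fun ω => h (X ω, Y ω) | MeasurableSpace.comap Y inferInstance] ω ∂P := by
  have hXY : IndepFun X Y P := hindep1.comp measurable_id measurable_snd
  have hh2' : MemLp (fun ω => h (X' ω, Y ω)) 2 P :=
    ((hXX'.prodMk_of_indepFun hY.aemeasurable hindep2 hXY).comp hh).symm.memLp_snd hh2
  calc ∫ ω, f (X ω, Y ω) * h (X' ω, Y ω) ∂P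
      = ∫ ω, P[fun ω => f (X ω, Y ω) | MeasurableSpace.comap Y inferInstance] ω
          * h (X' ω, Y ω) ∂P :=
        integral_comp_mul_comp_eq_integral_condExp_mul_comp hXX'.aemeasurable_snd hX' hY
          hindep1 hf hh hf2 hh2'
    _ = ∫ ω, P[fun ω => f (X ω, Y ω) | MeasurableSpace.comap Y inferInstance] ω
          * P[fun ω => h (X' ω, Y ω) | MeasurableSpace.comap Y inferInstance] ω ∂P :=
        (integral_mul_condExp_of_aestronglyMeasurable hY.comap_le
          stronglyMeasurable_condExp.aestronglyMeasurable
          ((hf2.condExp one_le_two).integrable_mul hh2') (hh2'.integrable one_le_two)).symm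
    _ = ∫ ω, P[fun ω => f (X ω, Y ω) | MeasurableSpace.comap Y inferInstance] ω
          * P[fun ω => h (X ω, Y ω) | MeasurableSpace.comap Y inferInstance] ω ∂P :=
        integral_congr_ae <| Filter.EventuallyEq.rfl.mul <|
          condExp_comp_ae_eq_of_identDistrib hY hXY hindep2 hXX' hh (hh2.integrable one_le_two)

end Independence

theorem pick_freeze_total_effect_covariance_general
    {Ω : Type*} [MeasurableSpace Ω] (P : Measure Ω) [IsProbabilityMeasure P]
    (p q n : ℕ)
    (A A' : Ω → Fin p → ℝ) (B : Ω → Fin q → ℝ)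
    (hA' : Measurable A') (hB : Measurable B)
    -- mutual independence of A, A', B:
    (hindep1 : IndepFun A (fun ω => (A' ω, B ω)) P)
    (hindep2 : IndepFun A' B P)
    (hAA' : IdentDistrib A' A P P)
    (g : (Fin p → ℝ) × (Fin q → ℝ) → Fin n → ℝ) (hg : Measurable g)
    (hint : MemLp (fun ω => g (A ω, B ω)) 2 P) :
    ∀ i j : Fin n,
      covMatrix P (fun ω k =>
          g (A ω, B ω) k -
            (P[fun ω' => g (A ω', B ω') k | MeasurableSpace.comap B inferInstance]) ω)
          i j
        = (∫ ω, g (A ω, B ω) i * g (A ω, B ω) j ∂P)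
            - (∫ ω, g (A ω, B ω) i * g (A' ω, B ω) j ∂P) := by
  intro i j
  rw [covMatrix_sub_condExp (X := fun ω => g (A ω, B ω)) hB.comap_le hint.eval,
    integral_comp_mul_comp_eq_integral_condExp_mul_condExp hA' hB hindep1 hindep2 hAA'
      hg.eval hg.eval (hint.eval i) (hint.eval j)]

/-- Proposition 5(ii): for mutually independent `A`, `A'`, `B` with `A'`
distributed as `A` and a square-integrable output `g(A,B)`, the total-effect covariance
matrix of the block `A` equals the second-moment matrix of the outputs minus the
pick-freeze cross-moment matrix in which the `A`-block is replaced by an independent copy: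
`Cov(g(A,B) − E[g(A,B) | σ(B)]) = E[g(A,B) g(A,B)ᵀ] − E[g(A,B) g(A',B)ᵀ]`. -/
theorem pick_freeze_total_effect_covariance
    {Ω : Type*} [MeasurableSpace Ω] (P : Measure Ω) [IsProbabilityMeasure P]
    (p q n : ℕ)
    (A A' : Ω → Fin p → ℝ) (B : Ω → Fin q → ℝ)
    (hA : Measurable A) (hA' : Measurable A') (hB : Measurable B)
    -- mutual independence of A, A', B:
    (hindep1 : IndepFun A (fun ω => (A' ω, B ω)) P)
    (hindep2 : IndepFun A' B P)
    (hAA' : IdentDistrib A' A P P)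
    (g : (Fin p → ℝ) × (Fin q → ℝ) → Fin n → ℝ) (hg : Measurable g)
    (hint : MemLp (fun ω => g (A ω, B ω)) 2 P) :
    ∀ i j : Fin n,
      covMatrix P (fun ω k =>
          g (A ω, B ω) k -
            (P[fun ω' => g (A ω', B ω') k | MeasurableSpace.comap B inferInstance]) ω)
          i j
        = (∫ ω, g (A ω, B ω) i * g (A ω, B ω) j ∂P)
            - (∫ ω, g (A ω, B ω) i * g (A' ω, B ω) j ∂P) :=
  pick_freeze_total_effect_covariance_general P p q n A A' B hA' hB hindep1 hindep2 hAA' g hg hint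
end

section
/- Let A and B be independent random elements with values in ℝ^p and ℝ^q, let g : ℝ^p × ℝ^q → ℝ^n be measurable with E[‖g(A,B)‖⁴] < ∞, and let ((A_i^{(1)}, B_i^{(1)}, A_i^{(2)}, B_i^{(2)}))_{i ≥ 1} be an i.i.d. sequence in which A_i^{(1)}, A_i^{(2)}, B_i^{(1)}, B_i^{(2)} are mutually independent, with A_i^{(j)} distributed as A and B_i^{(j)} distributed as B. Define the symmetrized kernel K_i := (g(A_i^{(1)}, B_i^{(1)}) − g(A_i^{(2)}, B_i^{(1)}))(g(A_i^{(1)}, B_i^{(2)}) − g(A_i^{(2)}, B_i^{(2)}))ᵀ + (g(A_i^{(1)}, B_i^{(2)}) − g(A_i^{(2)}, B_i^{(2)}))(g(A_i^{(1)}, B_i^{(1)}) − g(A_i^{(2)}, B_i^{(1)}))ᵀ. Then the estimator (1/(4m)) Σ_{i=1}^m K_i is unbiased for the first-order covariance D := Cov(E[g(A,B) | σ(A)]), i.e. E[K_1] = 4D, and it converges in probability (entrywise) to D as m → ∞. -/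
open MeasureTheory ProbabilityTheory
open scoped ENNReal

section AuxLemmas

lemma aux_mp_fst {α β : Type*} [MeasurableSpace α] [MeasurableSpace β]
    (μ : Measure α) (ν : Measure β) [SFinite ν] [IsProbabilityMeasure ν] :
    MeasurePreserving Prod.fst (μ.prod ν) μ :=
  ⟨measurable_fst, by rw [Measure.map_fst_prod, measure_univ, one_smul]⟩

lemma aux_mp_snd {α β : Type*} [MeasurableSpace α] [MeasurableSpace β]
    (μ : Measure α) (ν : Measure β) [SFinite ν] [IsProbabilityMeasure μ] :
    MeasurePreserving Prod.snd (μ.prod ν) ν :=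
  ⟨measurable_snd, by rw [Measure.map_snd_prod, measure_univ, one_smul]⟩

lemma aux_mp_interchange {α β γ δ : Type*} [MeasurableSpace α] [MeasurableSpace β]
    [MeasurableSpace γ] [MeasurableSpace δ]
    (μa : Measure α) (μb : Measure β) (μc : Measure γ) (μd : Measure δ)
    [SFinite μa] [SFinite μb] [SFinite μc] [SFinite μd] :
    MeasurePreserving (fun z : (α × β) × γ × δ => ((z.1.1, z.2.1), (z.1.2, z.2.2)))
      ((μa.prod μb).prod (μc.prod μd)) ((μa.prod μc).prod (μb.prod μd)) := by
  have e1 := measurePreserving_prodAssoc μa μb (μc.prod μd)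
  have e2 := (MeasurePreserving.id μa).prod (measurePreserving_prodAssoc μb μc μd).symm
  have e3 := (MeasurePreserving.id μa).prod
    ((Measure.measurePreserving_swap (μ := μb) (ν := μc)).prod (MeasurePreserving.id μd))
  have e4 := (MeasurePreserving.id μa).prod (measurePreserving_prodAssoc μc μb μd)
  have e5 := (measurePreserving_prodAssoc μa μc (μb.prod μd)).symm
  exact ((((e5.comp e4).comp e3).comp e2).comp e1)

lemma aux_integrable_mul {Ω : Type*} [MeasurableSpace Ω] {P : Measure Ω} [IsProbabilityMeasure P]
    {u v : Ω → ℝ} (hu : MemLp u 4 P) (hv : MemLp v 4 P) :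
    Integrable (fun ω => u ω * v ω) P := by
  have h2 : MemLp (u • v) 2 P :=
    MemLp.smul hv hu (hpqr := ⟨by simp only [← one_div]; exact (show (1:ℝ≥0∞)/2 = 1/4 + 1/4 by
      rw [show (4:ℝ≥0∞) = 2*2 by norm_num, ENNReal.div_add_div_same,
        show (1:ℝ≥0∞)+1 = 2 by norm_num,
        ENNReal.div_eq_div_iff (by norm_num) (by norm_num) (by norm_num) (by norm_num)]
      ring).symm⟩)
  have := h2.integrable (by norm_num)
  exact this.congr (Filter.Eventually.of_forall fun ω => by simp [smul_eq_mul])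

lemma aux_comp_memLp {Ω : Type*} [MeasurableSpace Ω] {P : Measure Ω} {n : ℕ}
    {f : Ω → Fin n → ℝ} {r : ℝ≥0∞} (hf : MemLp f r P) (k : Fin n) :
    MemLp (fun ω => f ω k) r P :=
  MemLp.of_le hf ((continuous_apply k).comp_aestronglyMeasurable hf.1)
    (Filter.Eventually.of_forall fun ω => norm_le_pi_norm (f ω) k)

/-- Integrability of the product of the two conditional mean functions. -/
lemma aux_phi_mul_integrable {p q n : ℕ}
    (μA : Measure (Fin p → ℝ)) (μB : Measure (Fin q → ℝ))
    [IsProbabilityMeasure μA] [IsProbabilityMeasure μB]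
    (g : (Fin p → ℝ) × (Fin q → ℝ) → Fin n → ℝ) (hg : Measurable g)
    (hL4 : ∀ k : Fin n, MemLp (fun z : (Fin p → ℝ) × (Fin q → ℝ) => g z k) 4 (μA.prod μB))
    (a b : Fin n) :
    Integrable (fun x => (∫ y, g (x, y) a ∂μB) * (∫ y, g (x, y) b ∂μB)) μA := by
  have hgk : ∀ k : Fin n, Measurable fun z : (Fin p → ℝ) × (Fin q → ℝ) => g z k :=
    fun k => (measurable_pi_apply k).comp hg
  have hG1 : ∀ k : Fin n, MemLp (fun w : (Fin p → ℝ) × ((Fin q → ℝ) × (Fin q → ℝ)) =>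
      g (w.1, w.2.1) k) 4 (μA.prod (μB.prod μB)) := by
    intro k
    have mp : MeasurePreserving (fun w : (Fin p → ℝ) × ((Fin q → ℝ) × (Fin q → ℝ)) =>
        (w.1, w.2.1)) (μA.prod (μB.prod μB)) (μA.prod μB) := by
      have h := (MeasurePreserving.id μA).prod (aux_mp_fst μB μB)
      exact h
    exact (memLp_map_measure_iff (by rw [mp.map_eq]; exact (hgk k).aestronglyMeasurable)
      mp.measurable.aemeasurable).mp (by rw [mp.map_eq]; exact hL4 k)
  have hG2 : ∀ k : Fin n, MemLp (fun w : (Fin p → ℝ) × ((Fin q → ℝ) × (Fin q → ℝ)) =>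
      g (w.1, w.2.2) k) 4 (μA.prod (μB.prod μB)) := by
    intro k
    have mp : MeasurePreserving (fun w : (Fin p → ℝ) × ((Fin q → ℝ) × (Fin q → ℝ)) =>
        (w.1, w.2.2)) (μA.prod (μB.prod μB)) (μA.prod μB) := by
      have h := (MeasurePreserving.id μA).prod (aux_mp_snd μB μB)
      exact h
    exact (memLp_map_measure_iff (by rw [mp.map_eq]; exact (hgk k).aestronglyMeasurable)
      mp.measurable.aemeasurable).mp (by rw [mp.map_eq]; exact hL4 k)
  have hF1int : Integrable (fun w : (Fin p → ℝ) × ((Fin q → ℝ) × (Fin q → ℝ)) =>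
      g (w.1, w.2.1) a * g (w.1, w.2.2) b) (μA.prod (μB.prod μB)) :=
    aux_integrable_mul (hG1 a) (hG2 b)
  exact hF1int.integral_prod_left.congr (Filter.Eventually.of_forall fun x =>
    integral_prod_mul (fun y => g (x, y) a) (fun y => g (x, y) b))

/-- Key computation: expectation of one pick-freeze product. -/
lemma key_product_integral
    {Ω : Type*} [MeasurableSpace Ω] (P : Measure Ω) [IsProbabilityMeasure P]
    {p q n : ℕ} (g : (Fin p → ℝ) × (Fin q → ℝ) → Fin n → ℝ) (hg : Measurable g)
    (A1 A2 : Ω → Fin p → ℝ) (B1 B2 : Ω → Fin q → ℝ)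
    (hA1 : Measurable A1) (hA2 : Measurable A2) (hB1 : Measurable B1) (hB2 : Measurable B2)
    (μA : Measure (Fin p → ℝ)) (μB : Measure (Fin q → ℝ))
    [IsProbabilityMeasure μA] [IsProbabilityMeasure μB]
    (hm1 : IndepFun A1 (fun ω => (A2 ω, B1 ω, B2 ω)) P)
    (hm2 : IndepFun A2 (fun ω => (B1 ω, B2 ω)) P)
    (hm3 : IndepFun B1 B2 P)
    (lawA1 : P.map A1 = μA) (lawA2 : P.map A2 = μA)
    (lawB1 : P.map B1 = μB) (lawB2 : P.map B2 = μB)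
    (hL4 : ∀ k : Fin n, MemLp (fun z : (Fin p → ℝ) × (Fin q → ℝ) => g z k) 4 (μA.prod μB))
    (a b : Fin n) :
    ∫ ω, (g (A1 ω, B1 ω) a - g (A2 ω, B1 ω) a) * (g (A1 ω, B2 ω) b - g (A2 ω, B2 ω) b) ∂P
      = 2 * ((∫ x, (∫ y, g (x, y) a ∂μB) * (∫ y, g (x, y) b ∂μB) ∂μA)
          - (∫ x, ∫ y, g (x, y) a ∂μB ∂μA) * (∫ x, ∫ y, g (x, y) b ∂μB ∂μA)) := by
  have hgk : ∀ k : Fin n, Measurable fun z : (Fin p → ℝ) × (Fin q → ℝ) => g z k :=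
    fun k => (measurable_pi_apply k).comp hg
  -- joint law of the quadruple
  have hBp : Measurable fun ω => (B1 ω, B2 ω) := hB1.prodMk hB2
  have lawB12 : P.map (fun ω => (B1 ω, B2 ω)) = μB.prod μB := by
    rw [(indepFun_iff_map_prod_eq_prod_map_map hB1.aemeasurable hB2.aemeasurable).mp hm3,
      lawB1, lawB2]
  have hA2B : Measurable fun ω => (A2 ω, (B1 ω, B2 ω)) := hA2.prodMk hBp
  have lawA2B : P.map (fun ω => (A2 ω, (B1 ω, B2 ω))) = μA.prod (μB.prod μB) := by
    rw [(indepFun_iff_map_prod_eq_prod_map_map hA2.aemeasurable hBp.aemeasurable).mp hm2,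
      lawA2, lawB12]
  have hquad : Measurable fun ω => (A1 ω, (A2 ω, (B1 ω, B2 ω))) := hA1.prodMk hA2B
  have lawM : P.map (fun ω => (A1 ω, (A2 ω, (B1 ω, B2 ω))))
      = μA.prod (μA.prod (μB.prod μB)) := by
    rw [(indepFun_iff_map_prod_eq_prod_map_map hA1.aemeasurable hA2B.aemeasurable).mp hm1,
      lawA1, lawA2B]
  -- abbreviations
  set M := μA.prod (μA.prod (μB.prod μB)) with hMdef
  set N := μA.prod (μB.prod μB) with hNdef
  set NN := (μA.prod μB).prod (μA.prod μB) with hNNdef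
  -- measure preserving maps
  have mpρ1 : MeasurePreserving
      (fun z : (Fin p → ℝ) × ((Fin p → ℝ) × ((Fin q → ℝ) × (Fin q → ℝ))) => (z.1, z.2.2)) M N := by
    have h := (MeasurePreserving.id μA).prod (aux_mp_snd μA (μB.prod μB))
    exact h
  have mpρ4 : MeasurePreserving
      (Prod.snd : (Fin p → ℝ) × ((Fin p → ℝ) × ((Fin q → ℝ) × (Fin q → ℝ))) → _) M N :=
    aux_mp_snd μA N
  have mpρ2 : MeasurePreserving
      (fun z : (Fin p → ℝ) × ((Fin p → ℝ) × ((Fin q → ℝ) × (Fin q → ℝ))) =>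
        ((z.1, z.2.2.1), (z.2.1, z.2.2.2))) M NN := by
    have h := (aux_mp_interchange μA μA μB μB).comp
      (measurePreserving_prodAssoc μA μA (μB.prod μB)).symm
    exact h
  have mpρ3 : MeasurePreserving
      (fun z : (Fin p → ℝ) × ((Fin p → ℝ) × ((Fin q → ℝ) × (Fin q → ℝ))) =>
        ((z.2.1, z.2.2.1), (z.1, z.2.2.2))) M NN := by
    have hsw := (Measure.measurePreserving_swap (μ := μA) (ν := μA)).prod
      (MeasurePreserving.id (μB.prod μB))
    have h := ((aux_mp_interchange μA μA μB μB).comp hsw).comp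
      (measurePreserving_prodAssoc μA μA (μB.prod μB)).symm
    exact h
  -- L⁴ facts over N
  have hG1 : ∀ k : Fin n, MemLp (fun w : (Fin p → ℝ) × ((Fin q → ℝ) × (Fin q → ℝ)) =>
      g (w.1, w.2.1) k) 4 N := by
    intro k
    have mp : MeasurePreserving (fun w : (Fin p → ℝ) × ((Fin q → ℝ) × (Fin q → ℝ)) =>
        (w.1, w.2.1)) N (μA.prod μB) := by
      have h := (MeasurePreserving.id μA).prod (aux_mp_fst μB μB)
      exact h
    have := (memLp_map_measure_iff (by rw [mp.map_eq]; exact (hgk k).aestronglyMeasurable)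
      mp.measurable.aemeasurable).mp (by rw [mp.map_eq]; exact hL4 k)
    exact this
  have hG2 : ∀ k : Fin n, MemLp (fun w : (Fin p → ℝ) × ((Fin q → ℝ) × (Fin q → ℝ)) =>
      g (w.1, w.2.2) k) 4 N := by
    intro k
    have mp : MeasurePreserving (fun w : (Fin p → ℝ) × ((Fin q → ℝ) × (Fin q → ℝ)) =>
        (w.1, w.2.2)) N (μA.prod μB) := by
      have h := (MeasurePreserving.id μA).prod (aux_mp_snd μB μB)
      exact h
    have := (memLp_map_measure_iff (by rw [mp.map_eq]; exact (hgk k).aestronglyMeasurable)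
      mp.measurable.aemeasurable).mp (by rw [mp.map_eq]; exact hL4 k)
    exact this
  -- integrable product on N
  have hF1int : Integrable (fun w : (Fin p → ℝ) × ((Fin q → ℝ) × (Fin q → ℝ)) =>
      g (w.1, w.2.1) a * g (w.1, w.2.2) b) N := aux_integrable_mul (hG1 a) (hG2 b)
  have hF1m : Measurable (fun w : (Fin p → ℝ) × ((Fin q → ℝ) × (Fin q → ℝ)) =>
      g (w.1, w.2.1) a * g (w.1, w.2.2) b) :=
    ((hgk a).comp (measurable_fst.prodMk (measurable_fst.comp measurable_snd))).mul
      ((hgk b).comp (measurable_fst.prodMk (measurable_snd.comp measurable_snd)))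
  -- integrable product on NN
  have hgaint : Integrable (fun z : (Fin p → ℝ) × (Fin q → ℝ) => g z a) (μA.prod μB) :=
    (hL4 a).integrable (by norm_num)
  have hgbint : Integrable (fun z : (Fin p → ℝ) × (Fin q → ℝ) => g z b) (μA.prod μB) :=
    (hL4 b).integrable (by norm_num)
  have hFNNint : Integrable (fun w : ((Fin p → ℝ) × (Fin q → ℝ)) × ((Fin p → ℝ) × (Fin q → ℝ)) =>
      g w.1 a * g w.2 b) NN := hgaint.mul_prod hgbint
  have hFNNm : Measurable (fun w : ((Fin p → ℝ) × (Fin q → ℝ)) × ((Fin p → ℝ) × (Fin q → ℝ)) =>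
      g w.1 a * g w.2 b) := ((hgk a).comp measurable_fst).mul ((hgk b).comp measurable_snd)
  -- the four terms over M
  have hT1int : Integrable (fun z : (Fin p → ℝ) × ((Fin p → ℝ) × ((Fin q → ℝ) × (Fin q → ℝ))) =>
      g (z.1, z.2.2.1) a * g (z.1, z.2.2.2) b) M := by
    have := (integrable_map_measure (by rw [mpρ1.map_eq]; exact hF1m.aestronglyMeasurable)
      mpρ1.measurable.aemeasurable).mp (by rw [mpρ1.map_eq]; exact hF1int)
    exact this
  have hT4int : Integrable (fun z : (Fin p → ℝ) × ((Fin p → ℝ) × ((Fin q → ℝ) × (Fin q → ℝ))) =>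
      g (z.2.1, z.2.2.1) a * g (z.2.1, z.2.2.2) b) M := by
    have := (integrable_map_measure (by rw [mpρ4.map_eq]; exact hF1m.aestronglyMeasurable)
      mpρ4.measurable.aemeasurable).mp (by rw [mpρ4.map_eq]; exact hF1int)
    exact this
  have hT2int : Integrable (fun z : (Fin p → ℝ) × ((Fin p → ℝ) × ((Fin q → ℝ) × (Fin q → ℝ))) =>
      g (z.1, z.2.2.1) a * g (z.2.1, z.2.2.2) b) M := by
    have := (integrable_map_measure (by rw [mpρ2.map_eq]; exact hFNNm.aestronglyMeasurable)
      mpρ2.measurable.aemeasurable).mp (by rw [mpρ2.map_eq]; exact hFNNint)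
    exact this
  have hT3int : Integrable (fun z : (Fin p → ℝ) × ((Fin p → ℝ) × ((Fin q → ℝ) × (Fin q → ℝ))) =>
      g (z.2.1, z.2.2.1) a * g (z.1, z.2.2.2) b) M := by
    have := (integrable_map_measure (by rw [mpρ3.map_eq]; exact hFNNm.aestronglyMeasurable)
      mpρ3.measurable.aemeasurable).mp (by rw [mpρ3.map_eq]; exact hFNNint)
    exact this
  -- values of the four terms
  have vN : ∫ w, g (w.1, w.2.1) a * g (w.1, w.2.2) b ∂N
      = ∫ x, (∫ y, g (x, y) a ∂μB) * (∫ y, g (x, y) b ∂μB) ∂μA := by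
    rw [integral_prod _ hF1int]
    congr 1
    funext x
    exact integral_prod_mul (fun y => g (x, y) a) (fun y => g (x, y) b)
  have vNN : ∫ w, g w.1 a * g w.2 b ∂NN
      = (∫ x, ∫ y, g (x, y) a ∂μB ∂μA) * (∫ x, ∫ y, g (x, y) b ∂μB ∂μA) := by
    rw [integral_prod_mul (fun v => g v a) (fun v => g v b)]
    rw [integral_prod _ hgaint, integral_prod _ hgbint]
  have vT1 : ∫ z, g (z.1, z.2.2.1) a * g (z.1, z.2.2.2) b ∂M
      = ∫ x, (∫ y, g (x, y) a ∂μB) * (∫ y, g (x, y) b ∂μB) ∂μA := by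
    rw [← vN, ← mpρ1.map_eq,
      integral_map mpρ1.measurable.aemeasurable
        (by rw [mpρ1.map_eq]; exact hF1m.aestronglyMeasurable)]
  have vT4 : ∫ z, g (z.2.1, z.2.2.1) a * g (z.2.1, z.2.2.2) b ∂M
      = ∫ x, (∫ y, g (x, y) a ∂μB) * (∫ y, g (x, y) b ∂μB) ∂μA := by
    rw [← vN, ← mpρ4.map_eq,
      integral_map mpρ4.measurable.aemeasurable
        (by rw [mpρ4.map_eq]; exact hF1m.aestronglyMeasurable)]
  have vT2 : ∫ z, g (z.1, z.2.2.1) a * g (z.2.1, z.2.2.2) b ∂M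
      = (∫ x, ∫ y, g (x, y) a ∂μB ∂μA) * (∫ x, ∫ y, g (x, y) b ∂μB ∂μA) := by
    rw [← vNN, ← mpρ2.map_eq,
      integral_map mpρ2.measurable.aemeasurable
        (by rw [mpρ2.map_eq]; exact hFNNm.aestronglyMeasurable)]
  have vT3 : ∫ z, g (z.2.1, z.2.2.1) a * g (z.1, z.2.2.2) b ∂M
      = (∫ x, ∫ y, g (x, y) a ∂μB ∂μA) * (∫ x, ∫ y, g (x, y) b ∂μB ∂μA) := by
    rw [← vNN, ← mpρ3.map_eq,
      integral_map mpρ3.measurable.aemeasurable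
        (by rw [mpρ3.map_eq]; exact hFNNm.aestronglyMeasurable)]
  -- main rewrite to M
  have hΦm : Measurable (fun z : (Fin p → ℝ) × ((Fin p → ℝ) × ((Fin q → ℝ) × (Fin q → ℝ))) =>
      (g (z.1, z.2.2.1) a - g (z.2.1, z.2.2.1) a)
        * (g (z.1, z.2.2.2) b - g (z.2.1, z.2.2.2) b)) := by
    apply Measurable.mul
    · exact ((hgk a).comp (measurable_fst.prodMk
        ((measurable_fst.comp measurable_snd).comp measurable_snd))).sub
        ((hgk a).comp ((measurable_fst.comp measurable_snd).prodMk
        ((measurable_fst.comp measurable_snd).comp measurable_snd)))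
    · exact ((hgk b).comp (measurable_fst.prodMk
        ((measurable_snd.comp measurable_snd).comp measurable_snd))).sub
        ((hgk b).comp ((measurable_fst.comp measurable_snd).prodMk
        ((measurable_snd.comp measurable_snd).comp measurable_snd)))
  have hmain : ∫ ω, (g (A1 ω, B1 ω) a - g (A2 ω, B1 ω) a)
        * (g (A1 ω, B2 ω) b - g (A2 ω, B2 ω) b) ∂P
      = ∫ z, (g (z.1, z.2.2.1) a - g (z.2.1, z.2.2.1) a)
        * (g (z.1, z.2.2.2) b - g (z.2.1, z.2.2.2) b) ∂M := by
    rw [← lawM, integral_map hquad.aemeasurable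
      (by rw [lawM]; exact hΦm.aestronglyMeasurable)]
  rw [hmain]
  have hexp : (fun z : (Fin p → ℝ) × ((Fin p → ℝ) × ((Fin q → ℝ) × (Fin q → ℝ))) =>
      (g (z.1, z.2.2.1) a - g (z.2.1, z.2.2.1) a) * (g (z.1, z.2.2.2) b - g (z.2.1, z.2.2.2) b))
      = fun z => (g (z.1, z.2.2.1) a * g (z.1, z.2.2.2) b
          - g (z.1, z.2.2.1) a * g (z.2.1, z.2.2.2) b
          - g (z.2.1, z.2.2.1) a * g (z.1, z.2.2.2) b)
          + g (z.2.1, z.2.2.1) a * g (z.2.1, z.2.2.2) b := by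
    funext z; ring
  have hI12 : Integrable (fun z : (Fin p → ℝ) × ((Fin p → ℝ) × ((Fin q → ℝ) × (Fin q → ℝ))) =>
      g (z.1, z.2.2.1) a * g (z.1, z.2.2.2) b
        - g (z.1, z.2.2.1) a * g (z.2.1, z.2.2.2) b) M := hT1int.sub hT2int
  have hI123 : Integrable (fun z : (Fin p → ℝ) × ((Fin p → ℝ) × ((Fin q → ℝ) × (Fin q → ℝ))) =>
      g (z.1, z.2.2.1) a * g (z.1, z.2.2.2) b
        - g (z.1, z.2.2.1) a * g (z.2.1, z.2.2.2) b
        - g (z.2.1, z.2.2.1) a * g (z.1, z.2.2.2) b) M := hI12.sub hT3int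
  rw [hexp, integral_add hI123 hT4int, integral_sub hI12 hT3int, integral_sub hT1int hT2int,
    vT1, vT2, vT3, vT4]
  ring

/-- For independent `A, B`, `E[g(A,B)ₖ | σ(A)] = φₖ(A)` a.e. with `φₖ(x) = ∫ g(x,y) dμ_B(y)`. -/
lemma aux_condexp {Ω : Type*} [MeasurableSpace Ω] (P : Measure Ω) [IsProbabilityMeasure P]
    {p q n : ℕ} (A : Ω → Fin p → ℝ) (B : Ω → Fin q → ℝ)
    (hA : Measurable A) (hB : Measurable B) (hAB : IndepFun A B P)
    (g : (Fin p → ℝ) × (Fin q → ℝ) → Fin n → ℝ) (hg : Measurable g) (k : Fin n)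
    (hint : Integrable (fun ω => g (A ω, B ω) k) P) :
    (fun ω => ∫ y, g (A ω, y) k ∂(P.map B)) =ᵐ[P]
      P[fun ω' => g (A ω', B ω') k | MeasurableSpace.comap A inferInstance] := by
  haveI : IsProbabilityMeasure (P.map A) := Measure.isProbabilityMeasure_map hA.aemeasurable
  haveI : IsProbabilityMeasure (P.map B) := Measure.isProbabilityMeasure_map hB.aemeasurable
  have hgk : Measurable fun z : (Fin p → ℝ) × (Fin q → ℝ) => g z k :=
    (measurable_pi_apply k).comp hg
  have lawAB : P.map (fun ω => (A ω, B ω)) = (P.map A).prod (P.map B) :=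
    (indepFun_iff_map_prod_eq_prod_map_map hA.aemeasurable hB.aemeasurable).mp hAB
  have hgkProd : Integrable (fun z : (Fin p → ℝ) × (Fin q → ℝ) => g z k)
      ((P.map A).prod (P.map B)) := by
    rw [← lawAB]
    exact (integrable_map_measure hgk.aestronglyMeasurable
      (hA.prodMk hB).aemeasurable).mpr hint
  have hφm : StronglyMeasurable fun x : Fin p → ℝ => ∫ y, g (x, y) k ∂(P.map B) :=
    hgk.stronglyMeasurable.integral_prod_right'
  have hφint : Integrable (fun x : Fin p → ℝ => ∫ y, g (x, y) k ∂(P.map B)) (P.map A) :=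
    hgkProd.integral_prod_left
  have hφAint : Integrable (fun ω => ∫ y, g (A ω, y) k ∂(P.map B)) P :=
    (integrable_map_measure hφm.aestronglyMeasurable hA.aemeasurable).mp hφint
  refine ae_eq_condExp_of_forall_setIntegral_eq hA.comap_le hint
    (fun s _ _ => hφAint.integrableOn) ?_ ?_
  · rintro s ⟨t, ht, rfl⟩ -
    have h1 : ∫ ω in A ⁻¹' t, (∫ y, g (A ω, y) k ∂(P.map B)) ∂P
        = ∫ x in t, (∫ y, g (x, y) k ∂(P.map B)) ∂(P.map A) :=
      (setIntegral_map ht hφm.aestronglyMeasurable hA.aemeasurable).symm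
    have hpre : (fun ω => (A ω, B ω)) ⁻¹' (t ×ˢ Set.univ) = A ⁻¹' t := by
      ext ω; simp
    have h2 : ∫ ω in A ⁻¹' t, g (A ω, B ω) k ∂P
        = ∫ z in t ×ˢ Set.univ, g z k ∂((P.map A).prod (P.map B)) := by
      rw [← lawAB, setIntegral_map (ht.prod MeasurableSet.univ) hgk.aestronglyMeasurable
        (hA.prodMk hB).aemeasurable, hpre]
    rw [h1, h2, setIntegral_prod _ hgkProd.integrableOn]
    simp [Measure.restrict_univ]
  · exact StronglyMeasurable.aestronglyMeasurable
      (hφm.comp_measurable (Measurable.of_comap_le le_rfl))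

end AuxLemmas

/-- Theorem 2(i): the symmetrized pick-freeze kernel estimator
`(1/(4m)) Σ_{i<m} K_i` with
`K_i = (g(A_i¹,B_i¹) − g(A_i²,B_i¹))(g(A_i¹,B_i²) − g(A_i²,B_i²))ᵀ + (transposed product)`
is unbiased for the first-order covariance `D = Cov(E[g(A,B) | σ(A)])`, i.e.
`E[K_1] = 4 D`, and converges in probability (entrywise) to `D` as `m → ∞`. -/
theorem first_order_covariance_estimator_unbiased_consistent
    {Ω : Type*} [MeasurableSpace Ω] (P : Measure Ω) [IsProbabilityMeasure P]
    (p q n : ℕ)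
    (A : Ω → Fin p → ℝ) (B : Ω → Fin q → ℝ)
    (hA : Measurable A) (hB : Measurable B) (hAB : IndepFun A B P)
    (g : (Fin p → ℝ) × (Fin q → ℝ) → Fin n → ℝ) (hg : Measurable g)
    (hint : MemLp (fun ω => g (A ω, B ω)) 4 P)
    (A1 A2 : ℕ → Ω → Fin p → ℝ) (B1 B2 : ℕ → Ω → Fin q → ℝ)
    (hA1 : ∀ i, Measurable (A1 i)) (hA2 : ∀ i, Measurable (A2 i))
    (hB1 : ∀ i, Measurable (B1 i)) (hB2 : ∀ i, Measurable (B2 i))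
    -- the sequence of quadruples is i.i.d.:
    (hiid : iIndepFun
      (fun i ω => (A1 i ω, B1 i ω, A2 i ω, B2 i ω)) P)
    (hid : ∀ i, IdentDistrib (fun ω => (A1 i ω, B1 i ω, A2 i ω, B2 i ω))
      (fun ω => (A1 0 ω, B1 0 ω, A2 0 ω, B2 0 ω)) P P)
    -- within each quadruple, the four blocks are mutually independent:
    (hmutual1 : ∀ i, IndepFun (A1 i) (fun ω => (A2 i ω, B1 i ω, B2 i ω)) P)
    (hmutual2 : ∀ i, IndepFun (A2 i) (fun ω => (B1 i ω, B2 i ω)) P)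
    (hmutual3 : ∀ i, IndepFun (B1 i) (B2 i) P)
    -- marginal distributions:
    (hA1d : ∀ i, IdentDistrib (A1 i) A P P) (hA2d : ∀ i, IdentDistrib (A2 i) A P P)
    (hB1d : ∀ i, IdentDistrib (B1 i) B P P) (hB2d : ∀ i, IdentDistrib (B2 i) B P P)
    -- the symmetrized kernel:
    (K : ℕ → Ω → Matrix (Fin n) (Fin n) ℝ)
    (hK : K = fun i ω =>
      Matrix.vecMulVec
          (fun k => g (A1 i ω, B1 i ω) k - g (A2 i ω, B1 i ω) k)
          (fun k => g (A1 i ω, B2 i ω) k - g (A2 i ω, B2 i ω) k)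
        + Matrix.vecMulVec
          (fun k => g (A1 i ω, B2 i ω) k - g (A2 i ω, B2 i ω) k)
          (fun k => g (A1 i ω, B1 i ω) k - g (A2 i ω, B1 i ω) k))
    -- the first-order covariance:
    (D : Matrix (Fin n) (Fin n) ℝ)
    (hD : D = covMatrix P (fun ω k =>
      (P[fun ω' => g (A ω', B ω') k | MeasurableSpace.comap A inferInstance]) ω)) :
    (∀ a b : Fin n, (∫ ω, K 0 ω a b ∂P) = 4 * D a b) ∧
    (∀ a b : Fin n,
      TendstoInMeasure P
        (fun (m : ℕ) ω => (1 / (4 * (m : ℝ))) * ∑ i ∈ Finset.range m, K i ω a b)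
        Filter.atTop (fun _ => D a b)) := by
  haveI : IsProbabilityMeasure (P.map A) := Measure.isProbabilityMeasure_map hA.aemeasurable
  haveI : IsProbabilityMeasure (P.map B) := Measure.isProbabilityMeasure_map hB.aemeasurable
  have hgk : ∀ k : Fin n, Measurable fun z : (Fin p → ℝ) × (Fin q → ℝ) => g z k :=
    fun k => (measurable_pi_apply k).comp hg
  have lawAB : P.map (fun ω => (A ω, B ω)) = (P.map A).prod (P.map B) :=
    (indepFun_iff_map_prod_eq_prod_map_map hA.aemeasurable hB.aemeasurable).mp hAB
  -- L⁴ membership of each coordinate under the product law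
  have hL4 : ∀ k : Fin n, MemLp (fun z : (Fin p → ℝ) × (Fin q → ℝ) => g z k) 4
      ((P.map A).prod (P.map B)) := by
    intro k
    rw [← lawAB]
    exact (memLp_map_measure_iff (by rw [lawAB]; exact (hgk k).aestronglyMeasurable)
      (hA.prodMk hB).aemeasurable).mpr (aux_comp_memLp hint k)
  -- L⁴ membership for compositions with identically distributed pairs
  have pairL4 : ∀ (X : Ω → Fin p → ℝ) (Y : Ω → Fin q → ℝ), Measurable X → Measurable Y →
      P.map (fun ω => (X ω, Y ω)) = (P.map A).prod (P.map B) →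
      ∀ k : Fin n, MemLp (fun ω => g (X ω, Y ω) k) 4 P := by
    intro X Y hX hY hlaw k
    have hid2 : IdentDistrib (fun ω => (X ω, Y ω)) (fun ω => (A ω, B ω)) P P :=
      ⟨(hX.prodMk hY).aemeasurable, (hA.prodMk hB).aemeasurable, by rw [hlaw, lawAB]⟩
    exact (hid2.comp (hgk k)).memLp_iff.mpr (aux_comp_memLp hint k)
  -- laws of the four pairs at index 0
  have lawA1d : P.map (A1 0) = P.map A := (hA1d 0).map_eq
  have lawA2d : P.map (A2 0) = P.map A := (hA2d 0).map_eq
  have lawB1d : P.map (B1 0) = P.map B := (hB1d 0).map_eq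
  have lawB2d : P.map (B2 0) = P.map B := (hB2d 0).map_eq
  have iA1B1 : IndepFun (A1 0) (B1 0) P :=
    (hmutual1 0).comp measurable_id (measurable_fst.comp measurable_snd)
  have iA1B2 : IndepFun (A1 0) (B2 0) P :=
    (hmutual1 0).comp measurable_id (measurable_snd.comp measurable_snd)
  have iA2B1 : IndepFun (A2 0) (B1 0) P := (hmutual2 0).comp measurable_id measurable_fst
  have iA2B2 : IndepFun (A2 0) (B2 0) P := (hmutual2 0).comp measurable_id measurable_snd
  have lawA1B1 : P.map (fun ω => (A1 0 ω, B1 0 ω)) = (P.map A).prod (P.map B) := by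
    rw [(indepFun_iff_map_prod_eq_prod_map_map (hA1 0).aemeasurable
      (hB1 0).aemeasurable).mp iA1B1, lawA1d, lawB1d]
  have lawA1B2 : P.map (fun ω => (A1 0 ω, B2 0 ω)) = (P.map A).prod (P.map B) := by
    rw [(indepFun_iff_map_prod_eq_prod_map_map (hA1 0).aemeasurable
      (hB2 0).aemeasurable).mp iA1B2, lawA1d, lawB2d]
  have lawA2B1 : P.map (fun ω => (A2 0 ω, B1 0 ω)) = (P.map A).prod (P.map B) := by
    rw [(indepFun_iff_map_prod_eq_prod_map_map (hA2 0).aemeasurable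
      (hB1 0).aemeasurable).mp iA2B1, lawA2d, lawB1d]
  have lawA2B2 : P.map (fun ω => (A2 0 ω, B2 0 ω)) = (P.map A).prod (P.map B) := by
    rw [(indepFun_iff_map_prod_eq_prod_map_map (hA2 0).aemeasurable
      (hB2 0).aemeasurable).mp iA2B2, lawA2d, lawB2d]
  have hM11 := pairL4 (A1 0) (B1 0) (hA1 0) (hB1 0) lawA1B1
  have hM12 := pairL4 (A1 0) (B2 0) (hA1 0) (hB2 0) lawA1B2
  have hM21 := pairL4 (A2 0) (B1 0) (hA2 0) (hB1 0) lawA2B1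
  have hM22 := pairL4 (A2 0) (B2 0) (hA2 0) (hB2 0) lawA2B2
  -- entrywise description of K
  have hKapp : ∀ (i : ℕ) (ω : Ω) (a b : Fin n), K i ω a b
      = (g (A1 i ω, B1 i ω) a - g (A2 i ω, B1 i ω) a)
          * (g (A1 i ω, B2 i ω) b - g (A2 i ω, B2 i ω) b)
        + (g (A1 i ω, B2 i ω) a - g (A2 i ω, B2 i ω) a)
          * (g (A1 i ω, B1 i ω) b - g (A2 i ω, B1 i ω) b) := by
    intro i ω a b
    rw [hK]
    simp [Matrix.add_apply, Matrix.vecMulVec_apply]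
  -- integrability of entries of K 0
  have hP1int : ∀ a b : Fin n, Integrable (fun ω =>
      (g (A1 0 ω, B1 0 ω) a - g (A2 0 ω, B1 0 ω) a)
        * (g (A1 0 ω, B2 0 ω) b - g (A2 0 ω, B2 0 ω) b)) P := by
    intro a b
    have h1 : MemLp (fun ω => g (A1 0 ω, B1 0 ω) a - g (A2 0 ω, B1 0 ω) a) 4 P :=
      (hM11 a).sub (hM21 a)
    have h2 : MemLp (fun ω => g (A1 0 ω, B2 0 ω) b - g (A2 0 ω, B2 0 ω) b) 4 P :=
      (hM12 b).sub (hM22 b)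
    exact aux_integrable_mul h1 h2
  have hP2int : ∀ a b : Fin n, Integrable (fun ω =>
      (g (A1 0 ω, B2 0 ω) a - g (A2 0 ω, B2 0 ω) a)
        * (g (A1 0 ω, B1 0 ω) b - g (A2 0 ω, B1 0 ω) b)) P := by
    intro a b
    have h1 : MemLp (fun ω => g (A1 0 ω, B2 0 ω) a - g (A2 0 ω, B2 0 ω) a) 4 P :=
      (hM12 a).sub (hM22 a)
    have h2 : MemLp (fun ω => g (A1 0 ω, B1 0 ω) b - g (A2 0 ω, B1 0 ω) b) 4 P :=
      (hM11 b).sub (hM21 b)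
    exact aux_integrable_mul h1 h2
  have hK0int : ∀ a b : Fin n, Integrable (fun ω => K 0 ω a b) P := by
    intro a b
    have := (hP1int a b).add (hP2int a b)
    exact this.congr (Filter.Eventually.of_forall fun ω => (hKapp 0 ω a b).symm)
  -- the value of D
  have hintk : ∀ k : Fin n, Integrable (fun ω => g (A ω, B ω) k) P :=
    fun k => (aux_comp_memLp hint k).integrable (by norm_num)
  have hce : ∀ k : Fin n, (fun ω => ∫ y, g (A ω, y) k ∂(P.map B)) =ᵐ[P]
      P[fun ω' => g (A ω', B ω') k | MeasurableSpace.comap A inferInstance] :=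
    fun k => aux_condexp P A B hA hB hAB g hg k (hintk k)
  have hφm : ∀ k : Fin n, StronglyMeasurable fun x : Fin p → ℝ =>
      ∫ y, g (x, y) k ∂(P.map B) :=
    fun k => (hgk k).stronglyMeasurable.integral_prod_right'
  have hgkProd : ∀ k : Fin n, Integrable (fun z : (Fin p → ℝ) × (Fin q → ℝ) => g z k)
      ((P.map A).prod (P.map B)) := fun k => (hL4 k).integrable (by norm_num)
  have hφint : ∀ k : Fin n, Integrable (fun x : Fin p → ℝ =>
      ∫ y, g (x, y) k ∂(P.map B)) (P.map A) := fun k => (hgkProd k).integral_prod_left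
  have hDab : ∀ a b : Fin n, D a b
      = (∫ x, (∫ y, g (x, y) a ∂(P.map B)) * (∫ y, g (x, y) b ∂(P.map B)) ∂(P.map A))
        - (∫ x, ∫ y, g (x, y) a ∂(P.map B) ∂(P.map A))
            * (∫ x, ∫ y, g (x, y) b ∂(P.map B) ∂(P.map A)) := by
    intro a b
    rw [hD]
    simp only [covMatrix]
    have hICE : ∀ k : Fin n,
        ∫ ω', (P[fun ω'' => g (A ω'', B ω'') k | MeasurableSpace.comap A inferInstance]) ω' ∂P
          = ∫ x, ∫ y, g (x, y) k ∂(P.map B) ∂(P.map A) :=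
      fun k => ((integral_congr_ae (hce k)).symm).trans
        (integral_map hA.aemeasurable (hφm k).aestronglyMeasurable).symm
    rw [hICE a, hICE b]
    have hptw : (fun ω =>
        ((P[fun ω'' => g (A ω'', B ω'') a | MeasurableSpace.comap A inferInstance]) ω
            - ∫ x, ∫ y, g (x, y) a ∂(P.map B) ∂(P.map A))
          * ((P[fun ω'' => g (A ω'', B ω'') b | MeasurableSpace.comap A inferInstance]) ω
            - ∫ x, ∫ y, g (x, y) b ∂(P.map B) ∂(P.map A)))
        =ᵐ[P] fun ω =>
          ((∫ y, g (A ω, y) a ∂(P.map B)) - ∫ x, ∫ y, g (x, y) a ∂(P.map B) ∂(P.map A))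
          * ((∫ y, g (A ω, y) b ∂(P.map B)) - ∫ x, ∫ y, g (x, y) b ∂(P.map B) ∂(P.map A)) := by
      filter_upwards [hce a, hce b] with ω h1 h2
      rw [← h1, ← h2]
    rw [integral_congr_ae hptw]
    have hFsm : AEStronglyMeasurable (fun x : Fin p → ℝ =>
        ((∫ y, g (x, y) a ∂(P.map B)) - ∫ x', ∫ y, g (x', y) a ∂(P.map B) ∂(P.map A))
        * ((∫ y, g (x, y) b ∂(P.map B)) - ∫ x', ∫ y, g (x', y) b ∂(P.map B) ∂(P.map A)))
        (P.map A) :=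
      (((hφm a).sub stronglyMeasurable_const).mul
        ((hφm b).sub stronglyMeasurable_const)).aestronglyMeasurable
    have h3 : ∫ ω,
        ((∫ y, g (A ω, y) a ∂(P.map B)) - ∫ x, ∫ y, g (x, y) a ∂(P.map B) ∂(P.map A))
        * ((∫ y, g (A ω, y) b ∂(P.map B)) - ∫ x, ∫ y, g (x, y) b ∂(P.map B) ∂(P.map A)) ∂P
        = ∫ x,
        ((∫ y, g (x, y) a ∂(P.map B)) - ∫ x', ∫ y, g (x', y) a ∂(P.map B) ∂(P.map A))
        * ((∫ y, g (x, y) b ∂(P.map B)) - ∫ x', ∫ y, g (x', y) b ∂(P.map B) ∂(P.map A))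
          ∂(P.map A) :=
      (integral_map hA.aemeasurable hFsm).symm
    rw [h3]
    have hSint : Integrable (fun x =>
        (∫ y, g (x, y) a ∂(P.map B)) * (∫ y, g (x, y) b ∂(P.map B))) (P.map A) :=
      aux_phi_mul_integrable (P.map A) (P.map B) g hg hL4 a b
    set ca := ∫ x, ∫ y, g (x, y) a ∂(P.map B) ∂(P.map A) with hca
    set cb := ∫ x, ∫ y, g (x, y) b ∂(P.map B) ∂(P.map A) with hcb
    have hexp2 : (fun x =>
        ((∫ y, g (x, y) a ∂(P.map B)) - ca) * ((∫ y, g (x, y) b ∂(P.map B)) - cb))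
        = fun x => ((∫ y, g (x, y) a ∂(P.map B)) * (∫ y, g (x, y) b ∂(P.map B))
            - ca * (∫ y, g (x, y) b ∂(P.map B)))
          - (cb * (∫ y, g (x, y) a ∂(P.map B)) - ca * cb) := by
      funext x; ring
    have hI1 : Integrable (fun x =>
        (∫ y, g (x, y) a ∂(P.map B)) * (∫ y, g (x, y) b ∂(P.map B))
          - ca * (∫ y, g (x, y) b ∂(P.map B))) (P.map A) :=
      hSint.sub ((hφint b).const_mul ca)
    have hI2 : Integrable (fun x =>
        cb * (∫ y, g (x, y) a ∂(P.map B)) - ca * cb) (P.map A) :=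
      ((hφint a).const_mul cb).sub (integrable_const _)
    rw [hexp2, integral_sub hI1 hI2, integral_sub hSint ((hφint b).const_mul ca),
      integral_sub ((hφint a).const_mul cb) (integrable_const _),
      integral_const_mul, integral_const_mul, integral_const]
    simp only [measure_univ, probReal_univ, ENNReal.toReal_one, one_smul, smul_eq_mul]
    ring
  -- the key expectations
  have hm1' : IndepFun (A1 0) (fun ω => (A2 0 ω, B2 0 ω, B1 0 ω)) P :=
    (hmutual1 0).comp measurable_id (measurable_fst.prodMk
      ((measurable_snd.comp measurable_snd).prodMk (measurable_fst.comp measurable_snd)))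
  have hm2' : IndepFun (A2 0) (fun ω => (B2 0 ω, B1 0 ω)) P :=
    (hmutual2 0).comp measurable_id (measurable_snd.prodMk measurable_fst)
  have hm3' : IndepFun (B2 0) (B1 0) P := (hmutual3 0).symm
  have hEK : ∀ a b : Fin n, (∫ ω, K 0 ω a b ∂P) = 4 * D a b := by
    intro a b
    have key1 := key_product_integral P g hg (A1 0) (A2 0) (B1 0) (B2 0)
      (hA1 0) (hA2 0) (hB1 0) (hB2 0) (P.map A) (P.map B)
      (hmutual1 0) (hmutual2 0) (hmutual3 0) lawA1d lawA2d lawB1d lawB2d hL4 a b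
    have key2 := key_product_integral P g hg (A1 0) (A2 0) (B2 0) (B1 0)
      (hA1 0) (hA2 0) (hB2 0) (hB1 0) (P.map A) (P.map B)
      hm1' hm2' hm3' lawA1d lawA2d lawB2d lawB1d hL4 a b
    have hsplit : (fun ω => K 0 ω a b) = fun ω =>
        (g (A1 0 ω, B1 0 ω) a - g (A2 0 ω, B1 0 ω) a)
          * (g (A1 0 ω, B2 0 ω) b - g (A2 0 ω, B2 0 ω) b)
        + (g (A1 0 ω, B2 0 ω) a - g (A2 0 ω, B2 0 ω) a)
          * (g (A1 0 ω, B1 0 ω) b - g (A2 0 ω, B1 0 ω) b) := by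
      funext ω; exact hKapp 0 ω a b
    rw [hsplit, integral_add (hP1int a b) (hP2int a b), key1, key2, hDab a b]
    ring
  refine ⟨hEK, ?_⟩
  -- consistency via the strong law of large numbers
  intro a b
  set F : (Fin p → ℝ) × ((Fin q → ℝ) × ((Fin p → ℝ) × (Fin q → ℝ))) → ℝ := fun v =>
    (g (v.1, v.2.1) a - g (v.2.2.1, v.2.1) a) * (g (v.1, v.2.2.2) b - g (v.2.2.1, v.2.2.2) b)
    + (g (v.1, v.2.2.2) a - g (v.2.2.1, v.2.2.2) a)
        * (g (v.1, v.2.1) b - g (v.2.2.1, v.2.1) b) with hF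
  have hFm : Measurable F := by
    rw [hF]
    apply Measurable.add <;> apply Measurable.mul <;> apply Measurable.sub <;> fun_prop
  have hq : ∀ i, Measurable fun ω => (A1 i ω, B1 i ω, A2 i ω, B2 i ω) :=
    fun i => (hA1 i).prodMk ((hB1 i).prodMk ((hA2 i).prodMk (hB2 i)))
  have hXapp : ∀ (i : ℕ) (ω : Ω), K i ω a b = F (A1 i ω, B1 i ω, A2 i ω, B2 i ω) := by
    intro i ω
    rw [hKapp i ω a b, hF]
  have hXint : Integrable (fun ω => F (A1 0 ω, B1 0 ω, A2 0 ω, B2 0 ω)) P :=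
    (hK0int a b).congr (Filter.Eventually.of_forall fun ω => hXapp 0 ω)
  have hindep : Pairwise (Function.onFun (IndepFun · · P)
      fun i (ω : Ω) => F (A1 i ω, B1 i ω, A2 i ω, B2 i ω)) := by
    intro i j hij
    exact (hiid.indepFun hij).comp hFm hFm
  have hident : ∀ i, IdentDistrib (fun ω => F (A1 i ω, B1 i ω, A2 i ω, B2 i ω))
      (fun ω => F (A1 0 ω, B1 0 ω, A2 0 ω, B2 0 ω)) P P :=
    fun i => (hid i).comp hFm
  have hslln := strong_law_ae (fun i (ω : Ω) => F (A1 i ω, B1 i ω, A2 i ω, B2 i ω))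
    hXint hindep hident
  have hfun2 : (fun (m : ℕ) ω => (1 / (4 * (m : ℝ))) * ∑ i ∈ Finset.range m, K i ω a b)
      = fun (m : ℕ) ω => (4:ℝ)⁻¹ *
        ((m : ℝ)⁻¹ • ∑ i ∈ Finset.range m, F (A1 i ω, B1 i ω, A2 i ω, B2 i ω)) := by
    funext m ω
    simp only [hXapp, smul_eq_mul, one_div, mul_inv, mul_assoc]
  rw [hfun2]
  have hlimval : ∫ ω, F (A1 0 ω, B1 0 ω, A2 0 ω, B2 0 ω) ∂P = 4 * D a b := by
    rw [← hEK a b]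
    exact integral_congr_ae (Filter.Eventually.of_forall fun ω => (hXapp 0 ω).symm)
  apply tendstoInMeasure_of_tendsto_ae
  · intro m
    exact (((Finset.measurable_sum (Finset.range m)
      (fun i _ => hFm.comp (hq i))).const_smul ((m : ℝ)⁻¹)).const_mul ((4:ℝ)⁻¹)
      ).aestronglyMeasurable
  · filter_upwards [hslln] with ω hω
    have h2 := hω.const_mul ((4:ℝ)⁻¹)
    have hgoal : D a b = (4:ℝ)⁻¹
        * ∫ x, F (A1 0 x, B1 0 x, A2 0 x, B2 0 x) ∂P := by
      rw [hlimval]; ring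
    rw [hgoal]
    exact h2
end

section
/- Let A and B be independent random elements with values in ℝ^p and ℝ^q, let g : ℝ^p × ℝ^q → ℝ^n be measurable with E[‖g(A,B)‖⁴] < ∞, and let ((A_i^{(1)}, B_i^{(1)}, A_i^{(2)}, B_i^{(2)}))_{i ≥ 1} be an i.i.d. sequence in which A_i^{(1)}, A_i^{(2)}, B_i^{(1)}, B_i^{(2)} are mutually independent, with A_i^{(j)} distributed as A and B_i^{(j)} distributed as B. Define K_i^{tot} := (g(A_i^{(1)}, B_i^{(1)}) − g(A_i^{(2)}, B_i^{(1)}))(g(A_i^{(1)}, B_i^{(1)}) − g(A_i^{(2)}, B_i^{(1)}))ᵀ + (g(A_i^{(1)}, B_i^{(2)}) − g(A_i^{(2)}, B_i^{(2)}))(g(A_i^{(1)}, B_i^{(2)}) − g(A_i^{(2)}, B_i^{(2)}))ᵀ. Then the estimator (1/(4m)) Σ_{i=1}^m K_i^{tot} is unbiased for the total-effect covariance D^tot := Cov(g(A,B) − E[g(A,B) | σ(B)]), i.e. E[K_1^{tot}] = 4 D^tot, and it converges in probability (entrywise) to D^tot as m → ∞. -/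
open MeasureTheory ProbabilityTheory

section Aux

variable {α β Ω : Type*} [MeasurableSpace α] [MeasurableSpace β] [MeasurableSpace Ω]

lemma memL2_integrable_mul {P : Measure Ω} {f g : Ω → ℝ}
    (hf : MemLp f 2 P) (hg : MemLp g 2 P) : Integrable (fun x => f x * g x) P := by
  have h : MemLp (f • g) 1 P := hg.smul hf
  exact memLp_one_iff_integrable.1 h

lemma sq_integral_le_integral_sq {P : Measure Ω} [IsProbabilityMeasure P] {f : Ω → ℝ}
    (hfm : AEStronglyMeasurable f P) (hsq : Integrable (fun x => f x ^ 2) P) :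
    (∫ x, f x ∂P) ^ 2 ≤ ∫ x, f x ^ 2 ∂P := by
  have hf2 : MemLp f 2 P := (memLp_two_iff_integrable_sq hfm).2 hsq
  have hfi : Integrable f P := hf2.integrable one_le_two
  set c := ∫ x, f x ∂P with hc
  have key : ∫ x, (f x - c) ^ 2 ∂P = (∫ x, f x ^ 2 ∂P) - c ^ 2 := by
    have e : ∀ x, (f x - c) ^ 2 = f x ^ 2 - 2 * c * f x + c ^ 2 := fun x => by ring
    simp_rw [e]
    have i2 : Integrable (fun x => 2 * c * f x) P := hfi.const_mul (2*c)
    have i1 : Integrable (fun x => f x ^ 2 - 2 * c * f x) P := hsq.sub i2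
    rw [integral_add i1 (integrable_const _),
      integral_sub hsq i2, integral_const_mul, integral_const]
    simp [measure_univ, ← hc]
    ring
  have h0 : (0:ℝ) ≤ ∫ x, (f x - c) ^ 2 ∂P := integral_nonneg fun x => sq_nonneg _
  linarith


variable {ν : Measure α} {μ : Measure β}

lemma pickfreeze_core [IsProbabilityMeasure ν] [IsProbabilityMeasure μ]
    (Ga Gb : β × α → ℝ) (hGa : Measurable Ga) (hGb : Measurable Gb)
    (hGa2 : MemLp Ga 2 (μ.prod ν)) (hGb2 : MemLp Gb 2 (μ.prod ν)) :
    Integrable (fun z : β × α × α =>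
        (Ga (z.1, z.2.1) - Ga (z.1, z.2.2)) * (Gb (z.1, z.2.1) - Gb (z.1, z.2.2)))
      (μ.prod (ν.prod ν)) ∧
    (∫ z : β × α × α,
        (Ga (z.1, z.2.1) - Ga (z.1, z.2.2)) * (Gb (z.1, z.2.1) - Gb (z.1, z.2.2))
          ∂(μ.prod (ν.prod ν)))
      = 2 * ((∫ z, Ga z * Gb z ∂(μ.prod ν))
          - ∫ y, (∫ x, Ga (y, x) ∂ν) * (∫ x, Gb (y, x) ∂ν) ∂μ) ∧
    (∫ z, (Ga z - ∫ x, Ga (z.1, x) ∂ν) * (Gb z - ∫ x, Gb (z.1, x) ∂ν) ∂(μ.prod ν))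
      = (∫ z, Ga z * Gb z ∂(μ.prod ν))
          - ∫ y, (∫ x, Ga (y, x) ∂ν) * (∫ x, Gb (y, x) ∂ν) ∂μ := by
  have mpf : MeasurePreserving (Prod.fst : α × α → α) (ν.prod ν) ν :=
    ⟨measurable_fst, by simp⟩
  have mps : MeasurePreserving (Prod.snd : α × α → α) (ν.prod ν) ν :=
    ⟨measurable_snd, by simp⟩
  have mp1 : MeasurePreserving (fun z : β × α × α => (z.1, z.2.1))
      (μ.prod (ν.prod ν)) (μ.prod ν) := (MeasurePreserving.id μ).prod mpf
  have mp2 : MeasurePreserving (fun z : β × α × α => (z.1, z.2.2))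
      (μ.prod (ν.prod ν)) (μ.prod ν) := (MeasurePreserving.id μ).prod mps
  have mpB : MeasurePreserving (Prod.fst : β × α → β) (μ.prod ν) μ :=
    ⟨measurable_fst, by simp⟩
  have a1 : MemLp (fun z : β × α × α => Ga (z.1, z.2.1)) 2 (μ.prod (ν.prod ν)) :=
    hGa2.comp_measurePreserving mp1
  have a2 : MemLp (fun z : β × α × α => Ga (z.1, z.2.2)) 2 (μ.prod (ν.prod ν)) :=
    hGa2.comp_measurePreserving mp2
  have b1 : MemLp (fun z : β × α × α => Gb (z.1, z.2.1)) 2 (μ.prod (ν.prod ν)) :=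
    hGb2.comp_measurePreserving mp1
  have b2 : MemLp (fun z : β × α × α => Gb (z.1, z.2.2)) 2 (μ.prod (ν.prod ν)) :=
    hGb2.comp_measurePreserving mp2
  have i11 : Integrable (fun z : β × α × α => Ga (z.1, z.2.1) * Gb (z.1, z.2.1))
      (μ.prod (ν.prod ν)) := memL2_integrable_mul a1 b1
  have i12 : Integrable (fun z : β × α × α => Ga (z.1, z.2.1) * Gb (z.1, z.2.2))
      (μ.prod (ν.prod ν)) := memL2_integrable_mul a1 b2
  have i21 : Integrable (fun z : β × α × α => Ga (z.1, z.2.2) * Gb (z.1, z.2.1))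
      (μ.prod (ν.prod ν)) := memL2_integrable_mul a2 b1
  have i22 : Integrable (fun z : β × α × α => Ga (z.1, z.2.2) * Gb (z.1, z.2.2))
      (μ.prod (ν.prod ν)) := memL2_integrable_mul a2 b2
  have dA : MemLp (fun z : β × α × α => Ga (z.1, z.2.1) - Ga (z.1, z.2.2)) 2
      (μ.prod (ν.prod ν)) := a1.sub a2
  have dB : MemLp (fun z : β × α × α => Gb (z.1, z.2.1) - Gb (z.1, z.2.2)) 2
      (μ.prod (ν.prod ν)) := b1.sub b2
  have int1 : Integrable (fun z : β × α × α =>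
      (Ga (z.1, z.2.1) - Ga (z.1, z.2.2)) * (Gb (z.1, z.2.1) - Gb (z.1, z.2.2)))
      (μ.prod (ν.prod ν)) := memL2_integrable_mul dA dB
  -- values of basic integrals
  have e11 : (∫ z : β × α × α, Ga (z.1, z.2.1) * Gb (z.1, z.2.1) ∂(μ.prod (ν.prod ν)))
      = ∫ z, Ga z * Gb z ∂(μ.prod ν) := by
    conv_rhs => rw [← mp1.map_eq]
    rw [integral_map mp1.measurable.aemeasurable (f := fun z => Ga z * Gb z) ((hGa.mul hGb).aestronglyMeasurable)]
  have e22 : (∫ z : β × α × α, Ga (z.1, z.2.2) * Gb (z.1, z.2.2) ∂(μ.prod (ν.prod ν)))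
      = ∫ z, Ga z * Gb z ∂(μ.prod ν) := by
    conv_rhs => rw [← mp2.map_eq]
    rw [integral_map mp2.measurable.aemeasurable (f := fun z => Ga z * Gb z) ((hGa.mul hGb).aestronglyMeasurable)]
  have e12 : (∫ z : β × α × α, Ga (z.1, z.2.1) * Gb (z.1, z.2.2) ∂(μ.prod (ν.prod ν)))
      = ∫ y, (∫ x, Ga (y, x) ∂ν) * (∫ x, Gb (y, x) ∂ν) ∂μ := by
    rw [integral_prod _ i12]
    refine integral_congr_ae (Filter.Eventually.of_forall fun y => ?_)
    simpa using integral_prod_mul (μ := ν) (ν := ν)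
      (f := fun x => Ga (y, x)) (g := fun x => Gb (y, x))
  have e21 : (∫ z : β × α × α, Ga (z.1, z.2.2) * Gb (z.1, z.2.1) ∂(μ.prod (ν.prod ν)))
      = ∫ y, (∫ x, Ga (y, x) ∂ν) * (∫ x, Gb (y, x) ∂ν) ∂μ := by
    rw [integral_prod _ i21]
    refine integral_congr_ae (Filter.Eventually.of_forall fun y => ?_)
    have h := integral_prod_mul (μ := ν) (ν := ν)
      (f := fun x => Gb (y, x)) (g := fun x => Ga (y, x))
    simp only []
    calc (∫ w : α × α, Ga (y, w.2) * Gb (y, w.1) ∂(ν.prod ν))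
        = ∫ w : α × α, Gb (y, w.1) * Ga (y, w.2) ∂(ν.prod ν) := by
          congr 1; funext w; ring
      _ = (∫ x, Gb (y, x) ∂ν) * (∫ x, Ga (y, x) ∂ν) := h
      _ = (∫ x, Ga (y, x) ∂ν) * (∫ x, Gb (y, x) ∂ν) := by ring
  refine ⟨int1, ?_, ?_⟩
  · have expand : (fun z : β × α × α =>
        (Ga (z.1, z.2.1) - Ga (z.1, z.2.2)) * (Gb (z.1, z.2.1) - Gb (z.1, z.2.2)))
        = fun z : β × α × α =>
          Ga (z.1, z.2.1) * Gb (z.1, z.2.1) - Ga (z.1, z.2.1) * Gb (z.1, z.2.2)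
          - Ga (z.1, z.2.2) * Gb (z.1, z.2.1) + Ga (z.1, z.2.2) * Gb (z.1, z.2.2) := by
      funext z; ring
    have iA : Integrable (fun z : β × α × α =>
        Ga (z.1, z.2.1) * Gb (z.1, z.2.1) - Ga (z.1, z.2.1) * Gb (z.1, z.2.2))
        (μ.prod (ν.prod ν)) := i11.sub i12
    have iB : Integrable (fun z : β × α × α =>
        Ga (z.1, z.2.1) * Gb (z.1, z.2.1) - Ga (z.1, z.2.1) * Gb (z.1, z.2.2)
          - Ga (z.1, z.2.2) * Gb (z.1, z.2.1)) (μ.prod (ν.prod ν)) := iA.sub i21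
    rw [expand, integral_add iB i22, integral_sub iA i21, integral_sub i11 i12,
      e11, e12, e21, e22]
    ring
  · -- the covariance identity
    have maSM : StronglyMeasurable (fun y => ∫ x, Ga (y, x) ∂ν) :=
      hGa.stronglyMeasurable.integral_prod_right'
    have mbSM : StronglyMeasurable (fun y => ∫ x, Gb (y, x) ∂ν) :=
      hGb.stronglyMeasurable.integral_prod_right'
    have maL2 : MemLp (fun y => ∫ x, Ga (y, x) ∂ν) 2 μ := by
      have hGa2sq : Integrable (fun z => Ga z ^ 2) (μ.prod ν) :=
        (memLp_two_iff_integrable_sq hGa2.aestronglyMeasurable).1 hGa2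
      have g0int : Integrable (fun y => ∫ x, Ga (y, x) ^ 2 ∂ν) μ := hGa2sq.integral_prod_left
      have bnd : ∀ᵐ y ∂μ, ‖(∫ x, Ga (y, x) ∂ν) ^ 2‖ ≤ ∫ x, Ga (y, x) ^ 2 ∂ν := by
        filter_upwards [hGa2sq.prod_right_ae] with y hy
        have hsm : AEStronglyMeasurable (fun x => Ga (y, x)) ν :=
          (hGa.comp measurable_prodMk_left).aestronglyMeasurable
        have h := sq_integral_le_integral_sq hsm hy
        have hn : ‖(∫ x, Ga (y, x) ∂ν) ^ 2‖ = (∫ x, Ga (y, x) ∂ν) ^ 2 := by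
          rw [Real.norm_eq_abs, abs_of_nonneg (sq_nonneg _)]
        rw [hn]; exact h
      have sqSM : StronglyMeasurable (fun y => (∫ x, Ga (y, x) ∂ν) ^ 2) := by
        simp_rw [pow_two]; exact maSM.mul maSM
      exact (memLp_two_iff_integrable_sq maSM.aestronglyMeasurable).2
        (Integrable.mono' g0int sqSM.aestronglyMeasurable bnd)
    have mbL2 : MemLp (fun y => ∫ x, Gb (y, x) ∂ν) 2 μ := by
      have hGb2sq : Integrable (fun z => Gb z ^ 2) (μ.prod ν) :=
        (memLp_two_iff_integrable_sq hGb2.aestronglyMeasurable).1 hGb2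
      have g0int : Integrable (fun y => ∫ x, Gb (y, x) ^ 2 ∂ν) μ := hGb2sq.integral_prod_left
      have bnd : ∀ᵐ y ∂μ, ‖(∫ x, Gb (y, x) ∂ν) ^ 2‖ ≤ ∫ x, Gb (y, x) ^ 2 ∂ν := by
        filter_upwards [hGb2sq.prod_right_ae] with y hy
        have hsm : AEStronglyMeasurable (fun x => Gb (y, x)) ν :=
          (hGb.comp measurable_prodMk_left).aestronglyMeasurable
        have h := sq_integral_le_integral_sq hsm hy
        have hn : ‖(∫ x, Gb (y, x) ∂ν) ^ 2‖ = (∫ x, Gb (y, x) ∂ν) ^ 2 := by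
          rw [Real.norm_eq_abs, abs_of_nonneg (sq_nonneg _)]
        rw [hn]; exact h
      have sqSM : StronglyMeasurable (fun y => (∫ x, Gb (y, x) ∂ν) ^ 2) := by
        simp_rw [pow_two]; exact mbSM.mul mbSM
      exact (memLp_two_iff_integrable_sq mbSM.aestronglyMeasurable).2
        (Integrable.mono' g0int sqSM.aestronglyMeasurable bnd)
    have mafst : MemLp (fun z : β × α => ∫ x, Ga (z.1, x) ∂ν) 2 (μ.prod ν) :=
      maL2.comp_measurePreserving mpB
    have mbfst : MemLp (fun z : β × α => ∫ x, Gb (z.1, x) ∂ν) 2 (μ.prod ν) :=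
      mbL2.comp_measurePreserving mpB
    have j11 : Integrable (fun z : β × α => Ga z * Gb z) (μ.prod ν) :=
      memL2_integrable_mul hGa2 hGb2
    have j12 : Integrable (fun z : β × α => Ga z * ∫ x, Gb (z.1, x) ∂ν) (μ.prod ν) :=
      memL2_integrable_mul hGa2 mbfst
    have j21 : Integrable (fun z : β × α => (∫ x, Ga (z.1, x) ∂ν) * Gb z) (μ.prod ν) :=
      memL2_integrable_mul mafst hGb2
    have j22 : Integrable (fun z : β × α =>
        (∫ x, Ga (z.1, x) ∂ν) * ∫ x, Gb (z.1, x) ∂ν) (μ.prod ν) :=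
      memL2_integrable_mul mafst mbfst
    have f12 : (∫ z : β × α, Ga z * ∫ x, Gb (z.1, x) ∂ν ∂(μ.prod ν))
        = ∫ y, (∫ x, Ga (y, x) ∂ν) * (∫ x, Gb (y, x) ∂ν) ∂μ := by
      rw [integral_prod _ j12]
      refine integral_congr_ae (Filter.Eventually.of_forall fun y => ?_)
      simpa using integral_mul_const (∫ x, Gb (y, x) ∂ν) (fun x => Ga (y, x)) (μ := ν)
    have f21 : (∫ z : β × α, (∫ x, Ga (z.1, x) ∂ν) * Gb z ∂(μ.prod ν))
        = ∫ y, (∫ x, Ga (y, x) ∂ν) * (∫ x, Gb (y, x) ∂ν) ∂μ := by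
      rw [integral_prod _ j21]
      refine integral_congr_ae (Filter.Eventually.of_forall fun y => ?_)
      simpa using integral_const_mul (∫ x, Ga (y, x) ∂ν) (fun x => Gb (y, x)) (μ := ν)
    have f22 : (∫ z : β × α, (∫ x, Ga (z.1, x) ∂ν) * ∫ x, Gb (z.1, x) ∂ν ∂(μ.prod ν))
        = ∫ y, (∫ x, Ga (y, x) ∂ν) * (∫ x, Gb (y, x) ∂ν) ∂μ := by
      conv_rhs => rw [← mpB.map_eq]
      rw [integral_map mpB.measurable.aemeasurable
        (f := fun y => (∫ x, Ga (y, x) ∂ν) * ∫ x, Gb (y, x) ∂ν)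
        ((maSM.measurable.mul mbSM.measurable).aestronglyMeasurable)]
    have expand : (fun z : β × α =>
        (Ga z - ∫ x, Ga (z.1, x) ∂ν) * (Gb z - ∫ x, Gb (z.1, x) ∂ν))
        = fun z : β × α =>
          Ga z * Gb z - Ga z * (∫ x, Gb (z.1, x) ∂ν)
          - (∫ x, Ga (z.1, x) ∂ν) * Gb z
          + (∫ x, Ga (z.1, x) ∂ν) * ∫ x, Gb (z.1, x) ∂ν := by
      funext z; ring
    have jA : Integrable (fun z : β × α =>
        Ga z * Gb z - Ga z * ∫ x, Gb (z.1, x) ∂ν) (μ.prod ν) := j11.sub j12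
    have jB : Integrable (fun z : β × α =>
        Ga z * Gb z - Ga z * (∫ x, Gb (z.1, x) ∂ν)
          - (∫ x, Ga (z.1, x) ∂ν) * Gb z) (μ.prod ν) := jA.sub j21
    rw [expand, integral_add jB j22, integral_sub jA j21, integral_sub j11 j12,
      f12, f21, f22]
    ring

end Aux

/-- Theorem 2(ii): the pick-freeze kernel estimator
`(1/(4m)) Σ_{i<m} K_iᵗᵒᵗ` with
`K_iᵗᵒᵗ = (g(A_i¹,B_i¹) − g(A_i²,B_i¹))(g(A_i¹,B_i¹) − g(A_i²,B_i¹))ᵀ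
  + (g(A_i¹,B_i²) − g(A_i²,B_i²))(g(A_i¹,B_i²) − g(A_i²,B_i²))ᵀ`
is unbiased for the total-effect covariance `Dᵗᵒᵗ = Cov(g(A,B) − E[g(A,B) | σ(B)])`, i.e.
`E[K_1ᵗᵒᵗ] = 4 Dᵗᵒᵗ`, and converges in probability (entrywise) to `Dᵗᵒᵗ` as `m → ∞`. -/
theorem total_effect_covariance_estimator_unbiased_consistent
    {Ω : Type*} [MeasurableSpace Ω] (P : Measure Ω) [IsProbabilityMeasure P]
    (p q n : ℕ)
    (A : Ω → Fin p → ℝ) (B : Ω → Fin q → ℝ)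
    (hA : Measurable A) (hB : Measurable B) (hAB : IndepFun A B P)
    (g : (Fin p → ℝ) × (Fin q → ℝ) → Fin n → ℝ) (hg : Measurable g)
    (hint : MemLp (fun ω => g (A ω, B ω)) 4 P)
    (A1 A2 : ℕ → Ω → Fin p → ℝ) (B1 B2 : ℕ → Ω → Fin q → ℝ)
    (hA1 : ∀ i, Measurable (A1 i)) (hA2 : ∀ i, Measurable (A2 i))
    (hB1 : ∀ i, Measurable (B1 i)) (hB2 : ∀ i, Measurable (B2 i))
    -- the sequence of quadruples is i.i.d.:
    (hiid : iIndepFun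
      (fun i ω => (A1 i ω, B1 i ω, A2 i ω, B2 i ω)) P)
    (hid : ∀ i, IdentDistrib (fun ω => (A1 i ω, B1 i ω, A2 i ω, B2 i ω))
      (fun ω => (A1 0 ω, B1 0 ω, A2 0 ω, B2 0 ω)) P P)
    -- within each quadruple, the four blocks are mutually independent:
    (hmutual1 : ∀ i, IndepFun (A1 i) (fun ω => (A2 i ω, B1 i ω, B2 i ω)) P)
    (hmutual2 : ∀ i, IndepFun (A2 i) (fun ω => (B1 i ω, B2 i ω)) P)
    (hmutual3 : ∀ i, IndepFun (B1 i) (B2 i) P)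
    -- marginal distributions:
    (hA1d : ∀ i, IdentDistrib (A1 i) A P P) (hA2d : ∀ i, IdentDistrib (A2 i) A P P)
    (hB1d : ∀ i, IdentDistrib (B1 i) B P P) (hB2d : ∀ i, IdentDistrib (B2 i) B P P)
    -- the symmetrized kernel:
    (K : ℕ → Ω → Matrix (Fin n) (Fin n) ℝ)
    (hK : K = fun i ω =>
      Matrix.vecMulVec
          (fun k => g (A1 i ω, B1 i ω) k - g (A2 i ω, B1 i ω) k)
          (fun k => g (A1 i ω, B1 i ω) k - g (A2 i ω, B1 i ω) k)
        + Matrix.vecMulVec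
          (fun k => g (A1 i ω, B2 i ω) k - g (A2 i ω, B2 i ω) k)
          (fun k => g (A1 i ω, B2 i ω) k - g (A2 i ω, B2 i ω) k))
    -- the total-effect covariance:
    (D : Matrix (Fin n) (Fin n) ℝ)
    (hD : D = covMatrix P (fun ω k =>
      g (A ω, B ω) k -
        (P[fun ω' => g (A ω', B ω') k | MeasurableSpace.comap B inferInstance]) ω)) :
    (∀ a b : Fin n, (∫ ω, K 0 ω a b ∂P) = 4 * D a b) ∧
    (∀ a b : Fin n,
      TendstoInMeasure P
        (fun (m : ℕ) ω => (1 / (4 * (m : ℝ))) * ∑ i ∈ Finset.range m, K i ω a b)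
        Filter.atTop (fun _ => D a b)) := by
  subst hD
  haveI hνP : IsProbabilityMeasure (P.map A) := Measure.isProbabilityMeasure_map hA.aemeasurable
  haveI hμP : IsProbabilityMeasure (P.map B) := Measure.isProbabilityMeasure_map hB.aemeasurable
  set G : Fin n → (Fin q → ℝ) × (Fin p → ℝ) → ℝ := fun k z => g (z.2, z.1) k with hGdef
  have hGm : ∀ k, Measurable (G k) := fun k =>
    (measurable_pi_apply k).comp (hg.comp (measurable_snd.prodMk measurable_fst))
  have hBA : Measurable fun ω => (B ω, A ω) := hB.prodMk hA
  have hρ : P.map (fun ω => (B ω, A ω)) = (P.map B).prod (P.map A) :=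
    (indepFun_iff_map_prod_eq_prod_map_map hB.aemeasurable hA.aemeasurable).1 hAB.symm
  have hcoord : ∀ k, MemLp (fun ω => g (A ω, B ω) k) 4 P := fun k =>
    (ContinuousLinearMap.proj (R := ℝ) (φ := fun _ : Fin n => ℝ) k).comp_memLp' hint
  have hG4 : ∀ k, MemLp (G k) 4 ((P.map B).prod (P.map A)) := by
    intro k
    rw [← hρ]
    exact (memLp_map_measure_iff (hGm k).aestronglyMeasurable hBA.aemeasurable).2 (hcoord k)
  have hG2 : ∀ k, MemLp (G k) 2 ((P.map B).prod (P.map A)) := fun k =>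
    (hG4 k).mono_exponent (by norm_num)
  have hGint : ∀ k, Integrable (G k) ((P.map B).prod (P.map A)) := fun k =>
    (hG2 k).integrable one_le_two
  have hfint : ∀ k, Integrable (fun ω => g (A ω, B ω) k) P := fun k =>
    ((hcoord k).mono_exponent (by norm_num)).integrable le_rfl
  have hmSM : ∀ k, StronglyMeasurable (fun y => ∫ x, G k (y, x) ∂(P.map A)) := fun k =>
    (hGm k).stronglyMeasurable.integral_prod_right'
  have hmInt : ∀ k, Integrable (fun y => ∫ x, G k (y, x) ∂(P.map A)) (P.map B) := fun k =>
    (hGint k).integral_prod_left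
  -- identification of the conditional expectation
  have ceq : ∀ k : Fin n, (fun ω => ∫ x, G k (B ω, x) ∂(P.map A))
      =ᵐ[P] P[fun ω' => g (A ω', B ω') k|MeasurableSpace.comap B inferInstance] := by
    intro k
    refine ae_eq_condExp_of_forall_setIntegral_eq hB.comap_le (hfint k) ?_ ?_ ?_
    · intro s _ _
      refine Integrable.integrableOn ?_
      exact (integrable_map_measure (hmSM k).aestronglyMeasurable hB.aemeasurable).1 (hmInt k)
    · rintro s ⟨t, ht, rfl⟩ -
      have h1 : ∫ ω in B ⁻¹' t, (∫ x, G k (B ω, x) ∂(P.map A)) ∂P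
          = ∫ y in t, (∫ x, G k (y, x) ∂(P.map A)) ∂(P.map B) :=
        (setIntegral_map ht (hmSM k).aestronglyMeasurable hB.aemeasurable).symm
      have h2 : ∫ ω in B ⁻¹' t, g (A ω, B ω) k ∂P
          = ∫ z in t ×ˢ Set.univ, G k z ∂((P.map B).prod (P.map A)) := by
        rw [← hρ, setIntegral_map (ht.prod MeasurableSet.univ)
          (hGm k).aestronglyMeasurable hBA.aemeasurable]
        have hset : (fun ω => (B ω, A ω)) ⁻¹' (t ×ˢ Set.univ) = B ⁻¹' t := by
          ext ω; simp
        rw [hset]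
      have h3 : ∫ z in t ×ˢ Set.univ, G k z ∂((P.map B).prod (P.map A))
          = ∫ y in t, (∫ x, G k (y, x) ∂(P.map A)) ∂(P.map B) := by
        rw [setIntegral_prod _ ((hGint k).integrableOn)]
        simp
      rw [h1, h2, h3]
    · refine StronglyMeasurable.aestronglyMeasurable ?_
      have hBm : Measurable[MeasurableSpace.comap B inferInstance] B :=
        Measurable.of_comap_le le_rfl
      exact Measurable.stronglyMeasurable ((hmSM k).measurable.comp hBm)
  -- value of the covariance entries
  have hDab : ∀ a b : Fin n, covMatrix P (fun ω k => g (A ω, B ω) k -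
        (P[fun ω' => g (A ω', B ω') k|MeasurableSpace.comap B inferInstance]) ω) a b
      = (∫ z, G a z * G b z ∂((P.map B).prod (P.map A)))
        - ∫ y, (∫ x, G a (y, x) ∂(P.map A)) * (∫ x, G b (y, x) ∂(P.map A)) ∂(P.map B) := by
    intro a b
    have hzero : ∀ k : Fin n, (∫ ω, (g (A ω, B ω) k -
        (P[fun ω' => g (A ω', B ω') k|MeasurableSpace.comap B inferInstance]) ω) ∂P) = 0 := by
      intro k
      rw [integral_sub (hfint k) integrable_condExp,
        integral_condExp hB.comap_le, sub_self]
    simp only [covMatrix]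
    rw [hzero a, hzero b]
    simp only [sub_zero]
    have hcg : (fun ω => (g (A ω, B ω) a -
          (P[fun ω' => g (A ω', B ω') a|MeasurableSpace.comap B inferInstance]) ω)
        * (g (A ω, B ω) b -
          (P[fun ω' => g (A ω', B ω') b|MeasurableSpace.comap B inferInstance]) ω))
        =ᵐ[P] (fun ω =>
          (G a (B ω, A ω) - ∫ x, G a ((B ω, A ω).1, x) ∂(P.map A))
          * (G b (B ω, A ω) - ∫ x, G b ((B ω, A ω).1, x) ∂(P.map A))) := by
      filter_upwards [ceq a, ceq b] with ω h1 h2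
      rw [← h1, ← h2]
    have hint2 : AEStronglyMeasurable (fun z : (Fin q → ℝ) × (Fin p → ℝ) =>
        (G a z - ∫ x, G a (z.1, x) ∂(P.map A)) * (G b z - ∫ x, G b (z.1, x) ∂(P.map A)))
        (P.map (fun ω => (B ω, A ω))) := by
      rw [hρ]
      exact (((hGm a).sub ((hmSM a).measurable.comp measurable_fst)).mul
        ((hGm b).sub ((hmSM b).measurable.comp measurable_fst))).aestronglyMeasurable
    have he : ∫ ω, (G a (B ω, A ω) - ∫ x, G a ((B ω, A ω).1, x) ∂(P.map A))
          * (G b (B ω, A ω) - ∫ x, G b ((B ω, A ω).1, x) ∂(P.map A)) ∂P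
        = ∫ z, (G a z - ∫ x, G a (z.1, x) ∂(P.map A)) * (G b z - ∫ x, G b (z.1, x) ∂(P.map A))
            ∂((P.map B).prod (P.map A)) := by
      rw [← hρ]
      exact (integral_map hBA.aemeasurable hint2).symm
    rw [integral_congr_ae hcg, he]
    exact (pickfreeze_core (G a) (G b) (hGm a) (hGm b) (hG2 a) (hG2 b)).2.2
  -- the rearrangement map for the triple (B, A1, A2)
  have hassoc : MeasurePreserving
      (fun z : (Fin p → ℝ) × (Fin p → ℝ) × (Fin q → ℝ) => (z.2.2, (z.1, z.2.1)))
      ((P.map A).prod ((P.map A).prod (P.map B)))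
      ((P.map B).prod ((P.map A).prod (P.map A))) := by
    have h1 := (measurePreserving_prodAssoc (P.map A) (P.map A) (P.map B)).symm
      MeasurableEquiv.prodAssoc
    have h2 := (Measure.measurePreserving_swap (μ := (P.map A).prod (P.map A))
      (ν := P.map B)).comp h1
    have hfe : (Prod.swap ∘ ⇑(MeasurableEquiv.prodAssoc
          (α := Fin p → ℝ) (β := Fin p → ℝ) (γ := Fin q → ℝ)).symm)
        = fun z : (Fin p → ℝ) × (Fin p → ℝ) × (Fin q → ℝ) => (z.2.2, (z.1, z.2.1)) := by
      funext z; rfl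
    rw [← hfe]
    exact h2
  -- distribution of the triples (Bj, (A1, A2))
  have hmapW : ∀ (Bj : Ω → (Fin q → ℝ)), Measurable Bj →
      IndepFun (A1 0) (fun ω => (A2 0 ω, Bj ω)) P →
      IndepFun (A2 0) Bj P → P.map Bj = P.map B →
      P.map (fun ω => (Bj ω, (A1 0 ω, A2 0 ω)))
        = (P.map B).prod ((P.map A).prod (P.map A)) := by
    intro Bj hBj hi1 hi2 hBjd
    have m2 : P.map (fun ω => (A2 0 ω, Bj ω)) = (P.map A).prod (P.map B) := by
      rw [(indepFun_iff_map_prod_eq_prod_map_map (hA2 0).aemeasurable hBj.aemeasurable).1 hi2,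
        (hA2d 0).map_eq, hBjd]
    have m3 : P.map (fun ω => (A1 0 ω, (A2 0 ω, Bj ω)))
        = (P.map A).prod ((P.map A).prod (P.map B)) := by
      rw [(indepFun_iff_map_prod_eq_prod_map_map (hA1 0).aemeasurable
        ((hA2 0).prodMk hBj).aemeasurable).1 hi1, (hA1d 0).map_eq, m2]
    have hcomp : (fun ω => (Bj ω, (A1 0 ω, A2 0 ω)))
        = (fun z : (Fin p → ℝ) × (Fin p → ℝ) × (Fin q → ℝ) => (z.2.2, (z.1, z.2.1)))
          ∘ (fun ω => (A1 0 ω, (A2 0 ω, Bj ω))) := rfl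
    rw [hcomp, ← Measure.map_map hassoc.measurable ((hA1 0).prodMk ((hA2 0).prodMk hBj)),
      m3, hassoc.map_eq]
  have i1B1 : IndepFun (A1 0) (fun ω => (A2 0 ω, B1 0 ω)) P :=
    (hmutual1 0).comp measurable_id
      (measurable_fst.prodMk (measurable_fst.comp measurable_snd))
  have i1B2 : IndepFun (A1 0) (fun ω => (A2 0 ω, B2 0 ω)) P :=
    (hmutual1 0).comp measurable_id
      (measurable_fst.prodMk (measurable_snd.comp measurable_snd))
  have i2B1 : IndepFun (A2 0) (B1 0) P := (hmutual2 0).comp measurable_id measurable_fst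
  have i2B2 : IndepFun (A2 0) (B2 0) P := (hmutual2 0).comp measurable_id measurable_snd
  have mW1 := hmapW (B1 0) (hB1 0) i1B1 i2B1 (hB1d 0).map_eq
  have mW2 := hmapW (B2 0) (hB2 0) i1B2 i2B2 (hB2d 0).map_eq
  -- main computation for the entries of K 0
  have key : ∀ a b : Fin n, Integrable (fun ω => K 0 ω a b) P ∧
      (∫ ω, K 0 ω a b ∂P) = 4 * covMatrix P (fun ω k => g (A ω, B ω) k -
        (P[fun ω' => g (A ω', B ω') k|MeasurableSpace.comap B inferInstance]) ω) a b := by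
    intro a b
    obtain ⟨iT, vT, -⟩ :=
      pickfreeze_core (G a) (G b) (hGm a) (hGm b) (hG2 a) (hG2 b)
    have m1m : Measurable (fun z : (Fin q → ℝ) × (Fin p → ℝ) × (Fin p → ℝ) =>
        ((z.1, z.2.1) : (Fin q → ℝ) × (Fin p → ℝ))) :=
      measurable_fst.prodMk (measurable_fst.comp measurable_snd)
    have m2m : Measurable (fun z : (Fin q → ℝ) × (Fin p → ℝ) × (Fin p → ℝ) =>
        ((z.1, z.2.2) : (Fin q → ℝ) × (Fin p → ℝ))) :=
      measurable_fst.prodMk (measurable_snd.comp measurable_snd)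
    have hTmeas : Measurable (fun z : (Fin q → ℝ) × (Fin p → ℝ) × (Fin p → ℝ) =>
        (G a (z.1, z.2.1) - G a (z.1, z.2.2)) * (G b (z.1, z.2.1) - G b (z.1, z.2.2))) :=
      (((hGm a).comp m1m).sub ((hGm a).comp m2m)).mul
        (((hGm b).comp m1m).sub ((hGm b).comp m2m))
    have hW1m : Measurable (fun ω => (B1 0 ω, (A1 0 ω, A2 0 ω))) :=
      (hB1 0).prodMk ((hA1 0).prodMk (hA2 0))
    have hW2m : Measurable (fun ω => (B2 0 ω, (A1 0 ω, A2 0 ω))) :=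
      (hB2 0).prodMk ((hA1 0).prodMk (hA2 0))
    have iTW1 : Integrable (fun ω =>
        (G a (B1 0 ω, A1 0 ω) - G a (B1 0 ω, A2 0 ω))
          * (G b (B1 0 ω, A1 0 ω) - G b (B1 0 ω, A2 0 ω))) P := by
      have h := (integrable_map_measure (by rw [mW1]; exact hTmeas.aestronglyMeasurable)
        hW1m.aemeasurable).1 (by rw [mW1]; exact iT)
      exact h
    have iTW2 : Integrable (fun ω =>
        (G a (B2 0 ω, A1 0 ω) - G a (B2 0 ω, A2 0 ω))
          * (G b (B2 0 ω, A1 0 ω) - G b (B2 0 ω, A2 0 ω))) P := by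
      have h := (integrable_map_measure (by rw [mW2]; exact hTmeas.aestronglyMeasurable)
        hW2m.aemeasurable).1 (by rw [mW2]; exact iT)
      exact h
    have vTW1 : (∫ ω, (G a (B1 0 ω, A1 0 ω) - G a (B1 0 ω, A2 0 ω))
          * (G b (B1 0 ω, A1 0 ω) - G b (B1 0 ω, A2 0 ω)) ∂P)
        = ∫ z, (G a (z.1, z.2.1) - G a (z.1, z.2.2)) * (G b (z.1, z.2.1) - G b (z.1, z.2.2))
            ∂((P.map B).prod ((P.map A).prod (P.map A))) := by
      rw [← mW1]
      exact (integral_map hW1m.aemeasurable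
        (by rw [mW1]; exact hTmeas.aestronglyMeasurable)).symm
    have vTW2 : (∫ ω, (G a (B2 0 ω, A1 0 ω) - G a (B2 0 ω, A2 0 ω))
          * (G b (B2 0 ω, A1 0 ω) - G b (B2 0 ω, A2 0 ω)) ∂P)
        = ∫ z, (G a (z.1, z.2.1) - G a (z.1, z.2.2)) * (G b (z.1, z.2.1) - G b (z.1, z.2.2))
            ∂((P.map B).prod ((P.map A).prod (P.map A))) := by
      rw [← mW2]
      exact (integral_map hW2m.aemeasurable
        (by rw [mW2]; exact hTmeas.aestronglyMeasurable)).symm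
    have hK0 : (fun ω => K 0 ω a b) = fun ω =>
        (G a (B1 0 ω, A1 0 ω) - G a (B1 0 ω, A2 0 ω))
          * (G b (B1 0 ω, A1 0 ω) - G b (B1 0 ω, A2 0 ω))
        + (G a (B2 0 ω, A1 0 ω) - G a (B2 0 ω, A2 0 ω))
          * (G b (B2 0 ω, A1 0 ω) - G b (B2 0 ω, A2 0 ω)) := by
      funext ω
      rw [hK]
      simp [Matrix.add_apply, Matrix.vecMulVec_apply, hGdef]
    constructor
    · rw [hK0]
      exact iTW1.add iTW2
    · rw [hK0, integral_add iTW1 iTW2, vTW1, vTW2, vT, hDab a b]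
      ring
  refine ⟨fun a b => (key a b).2, ?_⟩
  intro a b
  -- the kernel entry as a function of the i.i.d. quadruple
  set φ4 : (Fin p → ℝ) × (Fin q → ℝ) × (Fin p → ℝ) × (Fin q → ℝ) → ℝ := fun w =>
    (g (w.1, w.2.1) a - g (w.2.2.1, w.2.1) a) * (g (w.1, w.2.1) b - g (w.2.2.1, w.2.1) b)
    + (g (w.1, w.2.2.2) a - g (w.2.2.1, w.2.2.2) a)
      * (g (w.1, w.2.2.2) b - g (w.2.2.1, w.2.2.2) b) with hφ4def
  have hgc : ∀ (k : Fin n)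
      (u : (Fin p → ℝ) × (Fin q → ℝ) × (Fin p → ℝ) × (Fin q → ℝ) → (Fin p → ℝ))
      (v : (Fin p → ℝ) × (Fin q → ℝ) × (Fin p → ℝ) × (Fin q → ℝ) → (Fin q → ℝ)),
      Measurable u → Measurable v →
      Measurable fun w => g (u w, v w) k :=
    fun k u v hu hv => (measurable_pi_apply k).comp (hg.comp (hu.prodMk hv))
  have mw1 : Measurable fun w : (Fin p → ℝ) × (Fin q → ℝ) × (Fin p → ℝ) × (Fin q → ℝ) =>
      w.1 := measurable_fst
  have mw21 : Measurable fun w : (Fin p → ℝ) × (Fin q → ℝ) × (Fin p → ℝ) × (Fin q → ℝ) =>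
      w.2.1 := measurable_fst.comp measurable_snd
  have mw221 : Measurable fun w : (Fin p → ℝ) × (Fin q → ℝ) × (Fin p → ℝ) × (Fin q → ℝ) =>
      w.2.2.1 := measurable_fst.comp (measurable_snd.comp measurable_snd)
  have mw222 : Measurable fun w : (Fin p → ℝ) × (Fin q → ℝ) × (Fin p → ℝ) × (Fin q → ℝ) =>
      w.2.2.2 := measurable_snd.comp (measurable_snd.comp measurable_snd)
  have hφ4m : Measurable φ4 := by
    apply Measurable.add
    · exact ((hgc a _ _ mw1 mw21).sub (hgc a _ _ mw221 mw21)).mul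
        ((hgc b _ _ mw1 mw21).sub (hgc b _ _ mw221 mw21))
    · exact ((hgc a _ _ mw1 mw222).sub (hgc a _ _ mw221 mw222)).mul
        ((hgc b _ _ mw1 mw222).sub (hgc b _ _ mw221 mw222))
  have hYeq : ∀ i, (fun ω => K i ω a b)
      = fun ω => φ4 (A1 i ω, B1 i ω, A2 i ω, B2 i ω) := by
    intro i
    funext ω
    rw [hK]
    simp [hφ4def, Matrix.add_apply, Matrix.vecMulVec_apply]
  have hYid : ∀ i, IdentDistrib (fun ω => K i ω a b) (fun ω => K 0 ω a b) P P := by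
    intro i
    rw [hYeq i, hYeq 0]
    exact (hid i).comp hφ4m
  have hYindep : Pairwise (Function.onFun (IndepFun · · P) fun i (ω : Ω) => K i ω a b) := by
    intro i j hij
    simp only [Function.onFun]
    rw [hYeq i, hYeq j]
    exact (hiid.indepFun hij).comp hφ4m hφ4m
  have slln := strong_law_ae_real (fun i ω => K i ω a b) (key a b).1 hYindep hYid
  beta_reduce at slln
  have hlim : (∫ ω, K 0 ω a b ∂P) / 4
      = covMatrix P (fun ω k => g (A ω, B ω) k -
        (P[fun ω' => g (A ω', B ω') k|MeasurableSpace.comap B inferInstance]) ω) a b := by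
    rw [(key a b).2]; ring
  have hae : ∀ᵐ ω ∂P, Filter.Tendsto
      (fun m : ℕ => (1 / (4 * (m : ℝ))) * ∑ i ∈ Finset.range m, K i ω a b)
      Filter.atTop (nhds (covMatrix P (fun ω k => g (A ω, B ω) k -
        (P[fun ω' => g (A ω', B ω') k|MeasurableSpace.comap B inferInstance]) ω) a b)) := by
    filter_upwards [slln] with ω hω
    have h2 := hω.div_const 4
    rw [hlim] at h2
    refine Filter.Tendsto.congr (fun m => ?_) h2
    rw [div_div, one_div, mul_comm (((4 : ℝ) * (m : ℝ)))⁻¹ _, ← div_eq_mul_inv,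
      mul_comm (4 : ℝ) (m : ℝ)]
  have hmeas : ∀ m : ℕ, AEStronglyMeasurable
      (fun ω => (1 / (4 * (m : ℝ))) * ∑ i ∈ Finset.range m, K i ω a b) P := by
    intro m
    have hsum : Measurable fun ω => ∑ i ∈ Finset.range m, K i ω a b := by
      refine Finset.measurable_sum _ fun i _ => ?_
      have : Measurable (fun ω => K i ω a b) := by
        rw [hYeq i]
        exact hφ4m.comp ((hA1 i).prodMk ((hB1 i).prodMk ((hA2 i).prodMk (hB2 i))))
      exact this
    exact (hsum.const_mul _).aestronglyMeasurable
  exact tendstoInMeasure_of_tendsto_ae hmeas hae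
end
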